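/- arXiv:2501.00793 — 16 statements merged into one kernel-verified Lean document; each statement's English description precedes it below -/
import Mathlib

section
/- If f : [a,b] → ℝ is continuously differentiable and f' is Φ'-superadditive (i.e., f'(y) - f'(x) ≥ Φ'(y-x) for all a ≤ x ≤ y ≤ b), where Φ : [0, b-a] → ℝ≥0 is continuously differentiable with Φ' ≥ 0 and Φ(0) = 0, then for all x, y ∈ [a,b], f(y) - f(x) - f'(x)(y - x) - Φ(|y - x|) ≥ 0. -/
/-!
Fix `x`. On either side of `x`, the first-order Taylor remainder `f t - f x - f' x * (t - x)` minus
`Φ (|t - x|)` vanishes at `t = x` and grows as `t` moves away from `x`: its derivative is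
`f' t - f' x ∓ Φ' (|t - x|)`, whose sign is exactly the superadditivity of `f'`.
-/

open Set

theorem monotoneOn_Icc_of_hasDerivAt_nonneg {g g' : ℝ → ℝ} {u v : ℝ}
    (hg : ∀ t ∈ Icc u v, HasDerivAt g (g' t) t) (hg' : ∀ t ∈ Icc u v, 0 ≤ g' t) :
    MonotoneOn g (Icc u v) :=
  monotoneOn_of_hasDerivWithinAt_nonneg (convex_Icc u v)
    (fun t ht ↦ (hg t ht).continuousAt.continuousWithinAt)
    (fun t ht ↦ (hg t (interior_subset ht)).hasDerivWithinAt)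
    (fun t ht ↦ hg' t (interior_subset ht))

section TaylorRemainder

variable {a b : ℝ} {f f' Φ Φ' : ℝ → ℝ}

theorem le_taylor_remainder_of_le (hf : ∀ t ∈ Icc a b, HasDerivAt f (f' t) t)
    (hΦ : ∀ s ∈ Icc 0 (b - a), HasDerivAt Φ (Φ' s) s) (hΦ0 : Φ 0 = 0)
    (hsup : ∀ x y, a ≤ x → x ≤ y → y ≤ b → Φ' (y - x) ≤ f' y - f' x)
    {x y : ℝ} (hax : a ≤ x) (hxy : x ≤ y) (hyb : y ≤ b) :
    Φ (y - x) ≤ f y - f x - f' x * (y - x) := by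
  have hmono : MonotoneOn (fun t ↦ f t - f' x * t - Φ (t - x)) (Icc x y) := by
    refine monotoneOn_Icc_of_hasDerivAt_nonneg (g' := fun t ↦ f' t - f' x - Φ' (t - x))
      (fun t ht ↦ ?_) (fun t ht ↦ ?_)
    · have hΦt := (hΦ (t - x) ⟨by linarith [ht.1], by linarith [ht.2]⟩).comp_sub_const t x
      exact (((hf t ⟨by linarith [ht.1], by linarith [ht.2]⟩).sub
        ((hasDerivAt_id t).const_mul (f' x))).sub hΦt).congr_deriv (by simp)
    · linarith [hsup x t hax ht.1 (ht.2.trans hyb)]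
  have := hmono (left_mem_Icc.2 hxy) (right_mem_Icc.2 hxy) hxy
  simp only [sub_self, hΦ0] at this
  linarith

theorem le_taylor_remainder_of_ge (hf : ∀ t ∈ Icc a b, HasDerivAt f (f' t) t)
    (hΦ : ∀ s ∈ Icc 0 (b - a), HasDerivAt Φ (Φ' s) s) (hΦ0 : Φ 0 = 0)
    (hsup : ∀ x y, a ≤ x → x ≤ y → y ≤ b → Φ' (y - x) ≤ f' y - f' x)
    {x y : ℝ} (hay : a ≤ y) (hyx : y ≤ x) (hxb : x ≤ b) :
    Φ (x - y) ≤ f y - f x - f' x * (y - x) := by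
  have hmono : MonotoneOn (fun t ↦ Φ (x - t) + f' x * t - f t) (Icc y x) := by
    refine monotoneOn_Icc_of_hasDerivAt_nonneg (g' := fun t ↦ -Φ' (x - t) + f' x - f' t)
      (fun t ht ↦ ?_) (fun t ht ↦ ?_)
    · have hΦt := (hΦ (x - t) ⟨by linarith [ht.2], by linarith [ht.1]⟩).comp_const_sub x t
      exact ((hΦt.add ((hasDerivAt_id t).const_mul (f' x))).sub
        (hf t ⟨by linarith [ht.1], by linarith [ht.2]⟩)).congr_deriv (by simp)
    · linarith [hsup t x (hay.trans ht.1) ht.2 hxb]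
  have := hmono (left_mem_Icc.2 hyx) (right_mem_Icc.2 hyx) hyx
  simp only [sub_self, hΦ0] at this
  linarith

end TaylorRemainder

theorem stmt0_general (a b : ℝ) (f f' Φ Φ' : ℝ → ℝ)
    (hf : ∀ x ∈ Set.Icc a b, HasDerivAt f (f' x) x)
    (hΦ : ∀ x ∈ Set.Icc 0 (b - a), HasDerivAt Φ (Φ' x) x)
    (hΦ0 : Φ 0 = 0)
    (hsup : ∀ x y, a ≤ x → x ≤ y → y ≤ b → Φ' (y - x) ≤ f' y - f' x) :
    ∀ x ∈ Set.Icc a b, ∀ y ∈ Set.Icc a b,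
      0 ≤ f y - f x - f' x * (y - x) - Φ |y - x| := by
  intro x hx y hy
  rcases le_total x y with hxy | hyx
  · rw [abs_of_nonneg (sub_nonneg.2 hxy)]
    linarith [le_taylor_remainder_of_le hf hΦ hΦ0 hsup hx.1 hxy hy.2]
  · rw [abs_sub_comm, abs_of_nonneg (sub_nonneg.2 hyx)]
    linarith [le_taylor_remainder_of_ge hf hΦ hΦ0 hsup hy.1 hyx hx.2]

/-- gradient inequality for functions with Φ'-superadditive derivative. -/
theorem stmt0 (a b : ℝ) (hab : a < b) (f f' Φ Φ' : ℝ → ℝ)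
    (hf : ∀ x ∈ Set.Icc a b, HasDerivAt f (f' x) x)
    (hf'c : ContinuousOn f' (Set.Icc a b))
    (hΦ : ∀ x ∈ Set.Icc 0 (b - a), HasDerivAt Φ (Φ' x) x)
    (hΦ'c : ContinuousOn Φ' (Set.Icc 0 (b - a)))
    (hΦnn : ∀ x ∈ Set.Icc 0 (b - a), 0 ≤ Φ x)
    (hΦ'nn : ∀ x ∈ Set.Icc 0 (b - a), 0 ≤ Φ' x)
    (hΦ0 : Φ 0 = 0)
    (hsup : ∀ x y, a ≤ x → x ≤ y → y ≤ b → Φ' (y - x) ≤ f' y - f' x) :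
    ∀ x ∈ Set.Icc a b, ∀ y ∈ Set.Icc a b,
      0 ≤ f y - f x - f' x * (y - x) - Φ |y - x| :=
  stmt0_general a b f f' Φ Φ' hf hΦ hΦ0 hsup
end

section
/- Let f : [a,b] → ℝ be continuously differentiable with f' Φ'-superadditive, where Φ : [0,b-a] → ℝ≥0 is continuously differentiable with Φ' ≥ 0 and Φ(0) = 0. Fix z ∈ [a,b) and define D(y) = f(y) - f(z) - f'(z)(y - z) - Φ(|y - z|). Then D is nonnegative on [a,b], nonincreasing on [a,z), and nondecreasing on [z,b). -/
/-- the function D is nonnegative on [a,b], nonincreasing on [a,z)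
and nondecreasing on [z,b). -/
theorem stmt1 (a b z : ℝ) (hab : a < b) (hz : z ∈ Set.Ico a b) (f f' Φ Φ' D : ℝ → ℝ)
    (hf : ∀ x ∈ Set.Icc a b, HasDerivAt f (f' x) x)
    (hf'c : ContinuousOn f' (Set.Icc a b))
    (hΦ : ∀ x ∈ Set.Icc 0 (b - a), HasDerivAt Φ (Φ' x) x)
    (hΦ'c : ContinuousOn Φ' (Set.Icc 0 (b - a)))
    (hΦnn : ∀ x ∈ Set.Icc 0 (b - a), 0 ≤ Φ x)
    (hΦ'nn : ∀ x ∈ Set.Icc 0 (b - a), 0 ≤ Φ' x)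
    (hΦ0 : Φ 0 = 0)
    (hsup : ∀ x y, a ≤ x → x ≤ y → y ≤ b → Φ' (y - x) ≤ f' y - f' x)
    (hD : ∀ y, D y = f y - f z - f' z * (y - z) - Φ |y - z|) :
    (∀ y ∈ Set.Icc a b, 0 ≤ D y) ∧
      AntitoneOn D (Set.Ico a z) ∧ MonotoneOn D (Set.Ico z b) := by
  obtain ⟨haz, hzb⟩ := hz
  -- continuity of D on subsets of [a,b]
  have hDc : ∀ s : Set ℝ, s ⊆ Set.Icc a b → ContinuousOn D s := by
    intro s hs
    have : ∀ y ∈ s, ContinuousAt D y := by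
      intro y hy
      have hy' := hs hy
      have h1 : ContinuousAt f y := (hf y hy').continuousAt
      have habs : |y - z| ∈ Set.Icc 0 (b - a) := by
        refine ⟨abs_nonneg _, ?_⟩
        rw [abs_le]
        constructor <;> linarith [hy'.1, hy'.2]
      have h2 : ContinuousAt Φ |y - z| := (hΦ _ habs).continuousAt
      have hinner : ContinuousAt (fun w : ℝ => |w - z|) y :=
        (continuousAt_id.sub continuousAt_const).abs
      have h3 : ContinuousAt (fun w : ℝ => Φ |w - z|) y := ContinuousAt.comp (f := fun w : ℝ => |w - z|) h2 hinner
      have : ContinuousAt (fun w => f w - f z - f' z * (w - z) - Φ |w - z|) y := by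
        exact ((h1.sub continuousAt_const).sub
          (continuousAt_const.mul ((continuous_id.sub continuous_const).continuousAt))).sub h3
      exact this.congr (Filter.Eventually.of_forall fun w => (hD w).symm)
    exact fun y hy => (this y hy).continuousWithinAt
  -- monotone on [z, b]
  have hmono : MonotoneOn D (Set.Icc z b) := by
    have heq : Set.EqOn (fun y => f y - f z - f' z * (y - z) - Φ (y - z)) D (Set.Icc z b) := by
      intro y hy
      rw [hD, abs_of_nonneg (by linarith [hy.1])]
    have hmg : MonotoneOn (fun y => f y - f z - f' z * (y - z) - Φ (y - z)) (Set.Icc z b) := by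
      apply monotoneOn_of_hasDerivWithinAt_nonneg (f' := fun y => f' y - f' z - Φ' (y - z))
        (convex_Icc z b)
      · exact (hDc _ (Set.Icc_subset_Icc haz le_rfl)).congr heq
      · intro x hx
        rw [interior_Icc] at hx
        have hxab : x ∈ Set.Icc a b := ⟨by linarith [hx.1], le_of_lt hx.2⟩
        have hmem : x - z ∈ Set.Icc 0 (b - a) := ⟨by linarith [hx.1], by linarith [hx.2]⟩
        have h1 : HasDerivAt (fun y => f y - f z - f' z * (y - z) - Φ (y - z))
            (f' x - f' z - Φ' (x - z)) x := by
          have hΦx : HasDerivAt (fun y : ℝ => Φ (y - z)) (Φ' (x - z)) x := by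
            have := (hΦ _ hmem).comp x ((hasDerivAt_id x).sub_const z)
            simpa [Function.comp_def] using this
          have := (((hf x hxab).sub_const (f z)).sub
            (((hasDerivAt_id x).sub_const z).const_mul (f' z))).sub hΦx
          simpa [Pi.sub_def] using this
        exact h1.hasDerivWithinAt
      · intro x hx
        rw [interior_Icc] at hx
        have := hsup z x haz (le_of_lt hx.1) (le_of_lt hx.2)
        linarith
    exact hmg.congr heq
  -- antitone on [a, z]
  have hanti : AntitoneOn D (Set.Icc a z) := by
    have heq : Set.EqOn (fun y => f y - f z - f' z * (y - z) - Φ (z - y)) D (Set.Icc a z) := by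
      intro y hy
      rw [hD, abs_of_nonpos (by linarith [hy.2]), neg_sub]
    have hag : AntitoneOn (fun y => f y - f z - f' z * (y - z) - Φ (z - y)) (Set.Icc a z) := by
      apply antitoneOn_of_hasDerivWithinAt_nonpos (f' := fun y => f' y - f' z + Φ' (z - y))
        (convex_Icc a z)
      · exact (hDc _ (Set.Icc_subset_Icc le_rfl (le_of_lt hzb))).congr heq
      · intro x hx
        rw [interior_Icc] at hx
        have hxab : x ∈ Set.Icc a b := ⟨le_of_lt hx.1, by linarith [hx.2]⟩
        have hmem : z - x ∈ Set.Icc 0 (b - a) := ⟨by linarith [hx.2], by linarith [hx.1]⟩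
        have h1 : HasDerivAt (fun y => f y - f z - f' z * (y - z) - Φ (z - y))
            (f' x - f' z + Φ' (z - x)) x := by
          have hΦx : HasDerivAt (fun y : ℝ => Φ (z - y)) (-Φ' (z - x)) x := by
            have := (hΦ _ hmem).comp x ((hasDerivAt_id x).const_sub z)
            simpa [Function.comp_def] using this
          have := (((hf x hxab).sub_const (f z)).sub
            (((hasDerivAt_id x).sub_const z).const_mul (f' z))).sub hΦx
          have this : HasDerivAt (fun y => f y - f z - f' z * (y - z) - Φ (z - y))
              (f' x - f' z * 1 - -Φ' (z - x)) x := this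
          convert this using 1
          ring
        exact h1.hasDerivWithinAt
      · intro x hx
        rw [interior_Icc] at hx
        have := hsup x z (le_of_lt hx.1) (le_of_lt hx.2) (le_of_lt hzb)
        linarith
    exact hag.congr heq
  have hDz : D z = 0 := by
    rw [hD]; simp [hΦ0]
  refine ⟨?_, hanti.mono (Set.Ico_subset_Icc_self), hmono.mono (Set.Ico_subset_Icc_self)⟩
  intro y hy
  rcases le_total y z with h | h
  · have := hanti ⟨hy.1, h⟩ ⟨le_trans hy.1 h, le_rfl⟩ h
    linarith [hDz ▸ this]
  · have := hmono ⟨le_rfl, le_of_lt hzb⟩ ⟨h, hy.2⟩ h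
    linarith [hDz ▸ this]
end

section
/- Let f : [a,b] → ℝ be continuously differentiable with f' Φ'-superadditive, where Φ : [0,b-a] → ℝ≥0 is continuously differentiable, Φ' ≥ 0, Φ(0) = 0. Let a₁,...,aₙ be real numbers satisfying the Jensen–Steffensen conditions 0 ≤ ∑_{i=1}^j aᵢ ≤ ∑_{i=1}^n aᵢ for all j and Aₙ = ∑_{i=1}^n aᵢ > 0, and let x₁ ≤ x₂ ≤ ... ≤ xₙ be points in [a,b]. Set x̄ = (1/Aₙ)∑ aᵢxᵢ. Then for every c ∈ [a,b]: f(c) + f'(c)(x̄ - c) + (1/Aₙ)∑_{i=1}^n aᵢ Φ(|xᵢ - c|) ≤ (1/Aₙ)∑_{i=1}^n aᵢ f(xᵢ). -/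
/-!
With `g t = f t - f c - f' c * (t - c) - Φ |t - c|`, the Φ'-superadditivity of `f'` makes
`g' = f' t - f' c ∓ Φ' |t - c|` nonpositive on `[a, c]` and nonnegative on `[c, b]`, while
`g c = 0`. Writing `g (x i) = g (max (x i) c) + g (min (x i) c) - g c` splits the sequence
`g (x i)` into a nondecreasing and a nonincreasing part, and Abel summation shows that
Jensen–Steffensen weights give each part a weighted sum at least `g c * A = 0`. Dividing
`∑ wᵢ g (xᵢ) ≥ 0` by `A` is the inequality.
-/

open Finset Set

theorem monotoneOn_sub_tangent_sub_of_superadditive {f f' Φ Φ' : ℝ → ℝ} {c b : ℝ}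
    (hf : ∀ x ∈ Icc c b, HasDerivAt f (f' x) x)
    (hΦ : ∀ x ∈ Icc 0 (b - c), HasDerivAt Φ (Φ' x) x)
    (hsup : ∀ x ∈ Icc c b, Φ' (x - c) ≤ f' x - f' c) :
    MonotoneOn (fun x ↦ f x - f c - f' c * (x - c) - Φ (x - c)) (Icc c b) := by
  have hderiv : ∀ x ∈ Icc c b, HasDerivAt (fun x ↦ f x - f c - f' c * (x - c) - Φ (x - c))
      (f' x - f' c - Φ' (x - c)) x := fun x hx ↦ by
    have hΦx := (hΦ (x - c) ⟨by linarith [hx.1], by linarith [hx.2]⟩).comp_sub_const x c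
    have h := (((hf x hx).sub_const (f c)).sub
      (((hasDerivAt_id x).sub_const c).const_mul (f' c))).sub hΦx
    rwa [mul_one] at h
  refine monotoneOn_of_hasDerivWithinAt_nonneg (convex_Icc c b)
    (fun x hx ↦ (hderiv x hx).continuousAt.continuousWithinAt)
    (fun x hx ↦ (hderiv x (interior_subset hx)).hasDerivWithinAt) fun x hx ↦ ?_
  linarith [hsup x (interior_subset hx)]

theorem antitoneOn_sub_tangent_sub_of_superadditive {f f' Φ Φ' : ℝ → ℝ} {a c : ℝ}
    (hf : ∀ x ∈ Icc a c, HasDerivAt f (f' x) x)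
    (hΦ : ∀ x ∈ Icc 0 (c - a), HasDerivAt Φ (Φ' x) x)
    (hsup : ∀ x ∈ Icc a c, Φ' (c - x) ≤ f' c - f' x) :
    AntitoneOn (fun x ↦ f x - f c - f' c * (x - c) - Φ (c - x)) (Icc a c) := by
  -- `s ↦ f (-s)` has the Φ'-superadditive derivative `s ↦ -f' (-s)` on `[-c, -a]`.
  have hreflect := monotoneOn_sub_tangent_sub_of_superadditive (f := fun s ↦ f (-s))
    (f' := fun s ↦ -f' (-s)) (Φ := Φ) (Φ' := Φ') (c := -c) (b := -a)
    (fun s hs ↦ by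
      have h := (hf (-s) ⟨le_neg_of_le_neg hs.2, neg_le.1 hs.1⟩).comp s (hasDerivAt_neg s)
      rwa [mul_neg_one] at h)
    (fun x hx ↦ hΦ x (by simpa [add_comm, sub_eq_add_neg] using hx))
    (fun s hs ↦ by
      have h := hsup (-s) ⟨le_neg_of_le_neg hs.2, neg_le.1 hs.1⟩
      simp only [neg_neg, sub_neg_eq_add] at h ⊢
      rw [add_comm c s] at h
      linarith)
  intro x hx y hy hxy
  have := hreflect ⟨neg_le_neg hy.2, neg_le_neg hy.1⟩ ⟨neg_le_neg hx.2, neg_le_neg hx.1⟩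
    (neg_le_neg hxy)
  simp only [neg_neg] at this
  convert this using 2 <;> ring_nf

theorem mul_sum_le_sum_mul_of_monotoneOn {w y : ℕ → ℝ} {n : ℕ}
    (hw : ∀ j ≤ n, ∑ i ∈ range j, w i ≤ ∑ i ∈ range n, w i) (hy : MonotoneOn y (Set.Iio n)) :
    y 0 * ∑ i ∈ range n, w i ≤ ∑ i ∈ range n, w i * y i := by
  have hterm : ∀ i ∈ range (n - 1), (y (i + 1) - y i) * ∑ k ∈ range (i + 1), w k ≤
      (y (i + 1) - y i) * ∑ k ∈ range n, w k := fun i hi ↦ by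
    have hi : i + 1 < n := by have := Finset.mem_range.1 hi; omega
    exact mul_le_mul_of_nonneg_left (hw _ hi.le)
      (sub_nonneg.2 (hy (Set.mem_Iio.2 (by omega)) (Set.mem_Iio.2 hi) (by omega)))
  have habel := sum_range_by_parts y w n
  simp only [smul_eq_mul] at habel
  have htel := sum_range_sub y (n - 1)
  have hbound := sum_le_sum hterm
  rw [← sum_mul, htel] at hbound
  simp only [mul_comm (w _)]
  linarith

theorem mul_sum_le_sum_mul_of_antitoneOn {w y : ℕ → ℝ} {n : ℕ}
    (hw : ∀ j ≤ n, 0 ≤ ∑ i ∈ range j, w i) (hy : AntitoneOn y (Set.Iio n)) :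
    y (n - 1) * ∑ i ∈ range n, w i ≤ ∑ i ∈ range n, w i * y i := by
  have hterm : ∀ i ∈ range (n - 1), (y (i + 1) - y i) * ∑ k ∈ range (i + 1), w k ≤ 0 :=
    fun i hi ↦ by
      have hi : i + 1 < n := by have := Finset.mem_range.1 hi; omega
      exact mul_nonpos_of_nonpos_of_nonneg
        (sub_nonpos.2 (hy (Set.mem_Iio.2 (by omega)) (Set.mem_Iio.2 hi) (by omega))) (hw _ hi.le)
  have habel := sum_range_by_parts y w n
  simp only [smul_eq_mul] at habel
  have hbound := sum_nonpos hterm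
  simp only [mul_comm (w _)]
  linarith

theorem mul_sum_le_sum_mul_comp_of_antitoneOn_of_monotoneOn {g : ℝ → ℝ} {a b c : ℝ}
    (hc : c ∈ Icc a b) (hl : AntitoneOn g (Icc a c)) (hr : MonotoneOn g (Icc c b))
    {w x : ℕ → ℝ} {n : ℕ}
    (hw : ∀ j ≤ n, 0 ≤ ∑ i ∈ range j, w i ∧ ∑ i ∈ range j, w i ≤ ∑ i ∈ range n, w i)
    (hx : ∀ i < n, x i ∈ Icc a b) (hxm : MonotoneOn x (Set.Iio n)) :
    g c * ∑ i ∈ range n, w i ≤ ∑ i ∈ range n, w i * g (x i) := by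
  rcases Nat.eq_zero_or_pos n with rfl | hn
  · simp
  have hsplit : ∀ t, g t = g (max t c) + g (min t c) - g c := fun t ↦ by
    rcases le_total t c with h | h <;> simp [h]
  have hmax : ∀ i < n, max (x i) c ∈ Icc c b := fun i hi ↦
    ⟨le_max_right _ _, max_le (hx i hi).2 hc.2⟩
  have hmin : ∀ i < n, min (x i) c ∈ Icc a c := fun i hi ↦
    ⟨le_min (hx i hi).1 hc.1, min_le_right _ _⟩
  have hright := mul_sum_le_sum_mul_of_monotoneOn (w := w) (y := fun i ↦ g (max (x i) c))
    (fun j hj ↦ (hw j hj).2)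
    (fun i hi j hj hij ↦ hr (hmax i hi) (hmax j hj) (max_le_max_right c (hxm hi hj hij)))
  have hleft := mul_sum_le_sum_mul_of_antitoneOn (w := w) (y := fun i ↦ g (min (x i) c))
    (fun j hj ↦ (hw j hj).1)
    (fun i hi j hj hij ↦ hl (hmin i hi) (hmin j hj) (min_le_min_right c (hxm hi hj hij)))
  have hA : 0 ≤ ∑ i ∈ range n, w i := (hw n le_rfl).1
  have hP : g c ≤ g (max (x 0) c) := hr (left_mem_Icc.2 hc.2) (hmax 0 hn) (le_max_right _ _)
  have hQ : g c ≤ g (min (x (n - 1)) c) :=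
    hl (hmin _ (Nat.sub_lt hn one_pos)) (right_mem_Icc.2 hc.1) (min_le_right _ _)
  have hdecomp : ∑ i ∈ range n, w i * g (x i) = ∑ i ∈ range n, w i * g (max (x i) c)
      + ∑ i ∈ range n, w i * g (min (x i) c) - g c * ∑ i ∈ range n, w i := by
    rw [← sum_add_distrib, mul_sum, ← sum_sub_distrib]
    refine sum_congr rfl fun i _ ↦ ?_
    rw [hsplit (x i)]
    ring
  rw [hdecomp]
  nlinarith [mul_le_mul_of_nonneg_right hP hA, mul_le_mul_of_nonneg_right hQ hA]

theorem stmt2_general (a b : ℝ) (f f' Φ Φ' : ℝ → ℝ)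
    (hf : ∀ x ∈ Set.Icc a b, HasDerivAt f (f' x) x)
    (hΦ : ∀ x ∈ Set.Icc 0 (b - a), HasDerivAt Φ (Φ' x) x)
    (hΦ0 : Φ 0 = 0)
    (hsup : ∀ x y, a ≤ x → x ≤ y → y ≤ b → Φ' (y - x) ≤ f' y - f' x)
    (n : ℕ) (w x : ℕ → ℝ) (A xbar : ℝ)
    (hA : A = ∑ i ∈ Finset.range n, w i) (hApos : 0 < A)
    (hJS : ∀ j ≤ n, 0 ≤ ∑ i ∈ Finset.range j, w i ∧ ∑ i ∈ Finset.range j, w i ≤ A)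
    (hx : ∀ i < n, x i ∈ Set.Icc a b)
    (hmono : ∀ i j, i ≤ j → j < n → x i ≤ x j)
    (hxbar : xbar = (1 / A) * ∑ i ∈ Finset.range n, w i * x i) :
    ∀ c ∈ Set.Icc a b,
      f c + f' c * (xbar - c) + (1 / A) * ∑ i ∈ Finset.range n, w i * Φ |x i - c| ≤
        (1 / A) * ∑ i ∈ Finset.range n, w i * f (x i) := by
  intro c hc
  set g : ℝ → ℝ := fun t ↦ f t - f c - f' c * (t - c) - Φ |t - c|
  have hl : AntitoneOn g (Icc a c) :=
    (antitoneOn_sub_tangent_sub_of_superadditive (fun t ht ↦ hf t ⟨ht.1, ht.2.trans hc.2⟩)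
      (fun t ht ↦ hΦ t ⟨ht.1, by linarith [ht.2, hc.2]⟩)
      (fun t ht ↦ hsup t c ht.1 ht.2 hc.2)).congr
      fun t ht ↦ by simp only [g, abs_sub_comm t, abs_of_nonneg (sub_nonneg.2 ht.2)]
  have hr : MonotoneOn g (Icc c b) :=
    (monotoneOn_sub_tangent_sub_of_superadditive (fun t ht ↦ hf t ⟨hc.1.trans ht.1, ht.2⟩)
      (fun t ht ↦ hΦ t ⟨ht.1, by linarith [ht.2, hc.1]⟩)
      (fun t ht ↦ hsup c t hc.1 ht.1 ht.2)).congr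
      fun t ht ↦ by simp only [g, abs_of_nonneg (sub_nonneg.2 ht.1)]
  have hsum := mul_sum_le_sum_mul_comp_of_antitoneOn_of_monotoneOn hc hl hr (hA ▸ hJS) hx
    fun i hi j hj hij ↦ hmono i j hij hj
  have hexpand : ∑ i ∈ range n, w i * g (x i) = A * ((1 / A) * ∑ i ∈ range n, w i * f (x i)
      - (f c + f' c * (xbar - c) + (1 / A) * ∑ i ∈ range n, w i * Φ |x i - c|)) := by
    rw [hxbar]
    field_simp
    simp only [g, mul_sub, sum_sub_distrib, ← sum_mul, mul_left_comm (w _) (f' c), ← mul_sum,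
      ← hA]
    ring
  rw [show g c = 0 by simp [g, hΦ0], zero_mul, hexpand] at hsum
  exact sub_nonneg.1 ((mul_nonneg_iff_of_pos_left hApos).1 hsum)

/-- Jensen–Steffensen type inequality for functions with
Φ'-superadditive derivative. -/
theorem stmt2 (a b : ℝ) (hab : a < b) (f f' Φ Φ' : ℝ → ℝ)
    (hf : ∀ x ∈ Set.Icc a b, HasDerivAt f (f' x) x)
    (hf'c : ContinuousOn f' (Set.Icc a b))
    (hΦ : ∀ x ∈ Set.Icc 0 (b - a), HasDerivAt Φ (Φ' x) x)
    (hΦ'c : ContinuousOn Φ' (Set.Icc 0 (b - a)))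
    (hΦnn : ∀ x ∈ Set.Icc 0 (b - a), 0 ≤ Φ x)
    (hΦ'nn : ∀ x ∈ Set.Icc 0 (b - a), 0 ≤ Φ' x)
    (hΦ0 : Φ 0 = 0)
    (hsup : ∀ x y, a ≤ x → x ≤ y → y ≤ b → Φ' (y - x) ≤ f' y - f' x)
    (n : ℕ) (hn : 0 < n) (w x : ℕ → ℝ) (A xbar : ℝ)
    (hA : A = ∑ i ∈ Finset.range n, w i) (hApos : 0 < A)
    (hJS : ∀ j ≤ n, 0 ≤ ∑ i ∈ Finset.range j, w i ∧ ∑ i ∈ Finset.range j, w i ≤ A)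
    (hx : ∀ i < n, x i ∈ Set.Icc a b)
    (hmono : ∀ i j, i ≤ j → j < n → x i ≤ x j)
    (hxbar : xbar = (1 / A) * ∑ i ∈ Finset.range n, w i * x i) :
    ∀ c ∈ Set.Icc a b,
      f c + f' c * (xbar - c) + (1 / A) * ∑ i ∈ Finset.range n, w i * Φ |x i - c| ≤
        (1 / A) * ∑ i ∈ Finset.range n, w i * f (x i) :=
  stmt2_general a b f f' Φ Φ' hf hΦ hΦ0 hsup n w x A xbar hA hApos hJS hx hmono hxbar
end

section
/- Let f : [a,b] → ℝ be continuously differentiable with f' Φ'-superadditive, where Φ : [0,b-a] → ℝ≥0 is continuously differentiable, Φ' ≥ 0, Φ(0) = 0. Let a₁,...,aₙ satisfy the Jensen–Steffensen conditions (all partial sums in [0, Aₙ], Aₙ > 0) and x₁ ≤ ... ≤ xₙ in [a,b], x̄ = (1/Aₙ)∑ aᵢxᵢ. Then the refined Jensen–Steffensen inequality holds: (1/Aₙ)∑ aᵢ f(xᵢ) ≥ f(x̄) + (1/Aₙ)∑ aᵢ Φ(|xᵢ - x̄|). -/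
/-!
Superadditivity of `f'` makes `G u = f u - f' x̄ * u - Φ |u - x̄|` decrease on `[a, x̄]` and
increase on `[x̄, b]`: its derivative `f' u - f' x̄ - sign (u - x̄) * Φ' |u - x̄|` has the sign of
`u - x̄`. As the `xᵢ` are sorted, the
numbers `G xᵢ - G x̄ ≥ 0` first decrease and then increase in `i`, and Abel summation against
Jensen–Steffensen weights (nonnegative partial sums and tail sums) gives
`∑ aᵢ G xᵢ ≥ Aₙ G x̄`. Since `∑ aᵢ xᵢ = Aₙ x̄` and `Φ 0 = 0`, this is the inequality. The same
summation applied to `xᵢ - x₁` and `xₙ - xᵢ` puts `x̄` in `[x₁, xₙ] ⊆ [a, b]`.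
-/

open Finset

theorem sum_range_mul_le_of_antitoneOn {w g : ℕ → ℝ} {k : ℕ}
    (hw : ∀ j ≤ k, 0 ≤ ∑ i ∈ range j, w i) (hg : AntitoneOn g (Set.Iio k)) :
    (∑ i ∈ range k, w i) * g (k - 1) ≤ ∑ i ∈ range k, w i * g i := by
  induction k with
  | zero => simp
  | succ k ih =>
    have hlast : (∑ i ∈ range k, w i) * g k ≤ (∑ i ∈ range k, w i) * g (k - 1) := by
      rcases k.eq_zero_or_pos with rfl | hk
      · simp
      · exact mul_le_mul_of_nonneg_left (hg (by simp) (by simp) (by omega)) (hw k k.le_succ)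
    have := ih (fun j hj => hw j (hj.trans k.le_succ)) (hg.mono (Set.Iio_subset_Iio k.le_succ))
    rw [sum_range_succ, sum_range_succ, Nat.add_sub_cancel, add_mul]
    linarith

theorem sum_Ico_mul_le_of_monotoneOn {w g : ℕ → ℝ} {k n : ℕ} (hk : k ≤ n)
    (hw : ∀ j ∈ Set.Icc k n, 0 ≤ ∑ i ∈ Ico j n, w i) (hg : MonotoneOn g (Set.Ico k n)) :
    (∑ i ∈ Ico k n, w i) * g k ≤ ∑ i ∈ Ico k n, w i * g i := by
  induction hk using Nat.decreasingInduction with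
  | self => simp
  | of_succ k hkn ih =>
    have hfirst :
        (∑ i ∈ Ico (k + 1) n, w i) * g k ≤ (∑ i ∈ Ico (k + 1) n, w i) * g (k + 1) := by
      rcases (Nat.succ_le_of_lt hkn).eq_or_lt with hn | hn
      · simp [← hn]
      · exact mul_le_mul_of_nonneg_left (hg (by simp; omega) (by simp; omega) k.le_succ)
          (hw (k + 1) (by simp; omega))
    have := ih (fun j hj => hw j (Set.Icc_subset_Icc_left k.le_succ hj))
      (hg.mono (Set.Ico_subset_Ico_left k.le_succ))
    rw [sum_eq_sum_Ico_succ_bot hkn, sum_eq_sum_Ico_succ_bot hkn (fun i => w i * g i), add_mul]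
    linarith

theorem MonotoneOn.exists_split {x : ℕ → ℝ} {n : ℕ} (hx : MonotoneOn x (Set.Iio n)) (c : ℝ) :
    ∃ k ≤ n, (∀ i < k, x i ≤ c) ∧ ∀ i, k ≤ i → i < n → c ≤ x i := by
  classical
  have hP : ∃ k, k = n ∨ c ≤ x k := ⟨n, Or.inl rfl⟩
  refine ⟨Nat.find hP, Nat.find_min' hP (Or.inl rfl), fun i hi => ?_, fun i hki hin => ?_⟩
  · exact (not_le.1 (not_or.1 (Nat.find_min hP hi)).2).le
  · exact (Nat.find_spec hP).resolve_left (by omega) |>.trans (hx (hki.trans_lt hin) hin hki)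

def IsJensenSteffensen (w : ℕ → ℝ) (n : ℕ) : Prop :=
  ∀ j ≤ n, 0 ≤ ∑ i ∈ range j, w i ∧ ∑ i ∈ range j, w i ≤ ∑ i ∈ range n, w i

namespace IsJensenSteffensen

variable {w : ℕ → ℝ} {n : ℕ}

theorem sum_Ico_nonneg (hw : IsJensenSteffensen w n) {j : ℕ} (hj : j ≤ n) :
    0 ≤ ∑ i ∈ Ico j n, w i := by
  rw [sum_Ico_eq_sub _ hj, sub_nonneg]
  exact (hw j hj).2

theorem sum_mul_nonneg {h : ℕ → ℝ} {k : ℕ} (hw : IsJensenSteffensen w n) (hk : k ≤ n)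
    (hanti : AntitoneOn h (Set.Iio k)) (hmono : MonotoneOn h (Set.Ico k n))
    (hnonneg : ∀ i < n, 0 ≤ h i) : 0 ≤ ∑ i ∈ range n, w i * h i := by
  rw [range_eq_Ico, ← sum_Ico_consecutive _ k.zero_le hk, ← range_eq_Ico]
  have hleft : 0 ≤ ∑ i ∈ range k, w i * h i := by
    rcases k.eq_zero_or_pos with rfl | hk0
    · simp
    · exact (mul_nonneg (hw k hk).1 (hnonneg _ (by omega))).trans
        (sum_range_mul_le_of_antitoneOn (fun j hj => (hw j (hj.trans hk)).1) hanti)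
  have hright : 0 ≤ ∑ i ∈ Ico k n, w i * h i := by
    rcases hk.eq_or_lt with rfl | hkn
    · simp
    · exact (mul_nonneg (hw.sum_Ico_nonneg hk) (hnonneg k hkn)).trans
        (sum_Ico_mul_le_of_monotoneOn hk (fun j hj => hw.sum_Ico_nonneg hj.2) hmono)
  exact add_nonneg hleft hright

theorem inv_mul_sum_mul_mem_Icc {x : ℕ → ℝ} (hw : IsJensenSteffensen w n)
    (hpos : 0 < ∑ i ∈ range n, w i) (hx : MonotoneOn x (Set.Iio n)) (hn : 0 < n) :
    (∑ i ∈ range n, w i)⁻¹ * ∑ i ∈ range n, w i * x i ∈ Set.Icc (x 0) (x (n - 1)) := by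
  have hx0 : ∀ i < n, x 0 ≤ x i := fun i hi => hx (by simpa using hn) hi i.zero_le
  have hxn : ∀ i < n, x i ≤ x (n - 1) := fun i hi => hx hi (by simp; omega) (by omega)
  have hlower := hw.sum_mul_nonneg (h := fun i => x i - x 0) n.zero_le
    (fun i hi => absurd hi i.not_lt_zero)
    (fun i hi j hj hij => sub_le_sub_right (hx hi.2 hj.2 hij) _)
    fun i hi => sub_nonneg.2 (hx0 i hi)
  have hupper := hw.sum_mul_nonneg (h := fun i => x (n - 1) - x i) le_rfl
    (fun i hi j hj hij => sub_le_sub_left (hx hi hj hij) _)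
    (fun i hi => absurd hi.2 (not_lt.2 hi.1))
    fun i hi => sub_nonneg.2 (hxn i hi)
  simp only [mul_sub, sum_sub_distrib, ← sum_mul, sub_nonneg] at hlower hupper
  exact ⟨(le_inv_mul_iff₀ hpos).2 hlower, (inv_mul_le_iff₀ hpos).2 hupper⟩

theorem mul_le_sum_mul_comp {x : ℕ → ℝ} {G : ℝ → ℝ} {a b c : ℝ}
    (hw : IsJensenSteffensen w n) (hx : ∀ i < n, x i ∈ Set.Icc a b)
    (hxmono : MonotoneOn x (Set.Iio n)) (hanti : AntitoneOn G (Set.Icc a c))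
    (hmono : MonotoneOn G (Set.Icc c b)) (hc : c ∈ Set.Icc a b) :
    (∑ i ∈ range n, w i) * G c ≤ ∑ i ∈ range n, w i * G (x i) := by
  obtain ⟨k, hk, hleft, hright⟩ := hxmono.exists_split c
  have hmemL : ∀ i < k, x i ∈ Set.Icc a c := fun i hi => ⟨(hx i (by omega)).1, hleft i hi⟩
  have hmemR : ∀ i, k ≤ i → i < n → x i ∈ Set.Icc c b :=
    fun i hki hin => ⟨hright i hki hin, (hx i hin).2⟩
  have := hw.sum_mul_nonneg (h := fun i => G (x i) - G c) hk
    (fun i hi j hj hij => sub_le_sub_right (hanti (hmemL i hi) (hmemL j hj)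
      (hxmono (by simp at *; omega) (by simp at *; omega) hij)) _)
    (fun i hi j hj hij => sub_le_sub_right (hmono (hmemR i hi.1 hi.2) (hmemR j hj.1 hj.2)
      (hxmono (by simp at *; omega) (by simp at *; omega) hij)) _)
    fun i hi => sub_nonneg.2 <| by
      rcases lt_or_ge i k with hik | hki
      · exact hanti (hmemL i hik) ⟨hc.1, le_rfl⟩ (hleft i hik)
      · exact hmono ⟨le_rfl, hc.2⟩ (hmemR i hki hi) (hright i hki hi)
  simpa only [mul_sub, sum_sub_distrib, ← sum_mul, sub_nonneg] using this

end IsJensenSteffensen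

section SuperadditiveDerivative

variable {f f' Φ Φ' : ℝ → ℝ}

theorem monotoneOn_sub_mul_sub_comp_sub_const {b c : ℝ}
    (hf : ∀ x ∈ Set.Icc c b, HasDerivAt f (f' x) x)
    (hΦ : ∀ t ∈ Set.Icc 0 (b - c), HasDerivAt Φ (Φ' t) t)
    (hsup : ∀ y ∈ Set.Icc c b, Φ' (y - c) ≤ f' y - f' c) :
    MonotoneOn (fun u => f u - f' c * u - Φ (u - c)) (Set.Icc c b) := by
  have hG : ∀ u ∈ Set.Icc c b,
      HasDerivAt (fun u => f u - f' c * u - Φ (u - c)) (f' u - f' c - Φ' (u - c)) u := by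
    intro u hu
    have hΦu := (hΦ (u - c) ⟨by linarith [hu.1], by linarith [hu.2]⟩).comp_sub_const u c
    exact ((hf u hu).fun_sub (hasDerivAt_const_mul (f' c))).fun_sub hΦu
  refine monotoneOn_of_hasDerivWithinAt_nonneg (convex_Icc c b)
    (fun u hu => (hG u hu).continuousAt.continuousWithinAt)
    (fun u hu => (hG u (interior_subset hu)).hasDerivWithinAt) fun u hu => ?_
  linarith [hsup u (interior_subset hu)]

theorem antitoneOn_sub_mul_sub_comp_const_sub {a c : ℝ}
    (hf : ∀ x ∈ Set.Icc a c, HasDerivAt f (f' x) x)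
    (hΦ : ∀ t ∈ Set.Icc 0 (c - a), HasDerivAt Φ (Φ' t) t)
    (hsup : ∀ x ∈ Set.Icc a c, Φ' (c - x) ≤ f' c - f' x) :
    AntitoneOn (fun u => f u - f' c * u - Φ (c - u)) (Set.Icc a c) := by
  have hG : ∀ u ∈ Set.Icc a c,
      HasDerivAt (fun u => f u - f' c * u - Φ (c - u)) (f' u - f' c + Φ' (c - u)) u := by
    intro u hu
    have hΦu := (hΦ (c - u) ⟨by linarith [hu.2], by linarith [hu.1]⟩).comp_const_sub c u
    simpa only [sub_neg_eq_add] using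
      ((hf u hu).fun_sub (hasDerivAt_const_mul (f' c))).fun_sub hΦu
  refine antitoneOn_of_hasDerivWithinAt_nonpos (convex_Icc a c)
    (fun u hu => (hG u hu).continuousAt.continuousWithinAt)
    (fun u hu => (hG u (interior_subset hu)).hasDerivWithinAt) fun u hu => ?_
  linarith [hsup u (interior_subset hu)]

theorem antitoneOn_monotoneOn_sub_mul_sub_comp_abs {a b c : ℝ}
    (hf : ∀ x ∈ Set.Icc a b, HasDerivAt f (f' x) x)
    (hΦ : ∀ t ∈ Set.Icc 0 (b - a), HasDerivAt Φ (Φ' t) t)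
    (hsup : ∀ x y, a ≤ x → x ≤ y → y ≤ b → Φ' (y - x) ≤ f' y - f' x)
    (hc : c ∈ Set.Icc a b) :
    AntitoneOn (fun u => f u - f' c * u - Φ |u - c|) (Set.Icc a c) ∧
      MonotoneOn (fun u => f u - f' c * u - Φ |u - c|) (Set.Icc c b) := by
  constructor
  · refine (antitoneOn_sub_mul_sub_comp_const_sub (fun u hu => hf u ⟨hu.1, hu.2.trans hc.2⟩)
      (fun t ht => hΦ t ⟨ht.1, by linarith [ht.2, hc.2]⟩)
      (fun u hu => hsup u c hu.1 hu.2 hc.2)).congr fun u hu => ?_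
    simp only [abs_of_nonpos (sub_nonpos.2 hu.2), neg_sub]
  · refine (monotoneOn_sub_mul_sub_comp_sub_const (fun u hu => hf u ⟨hc.1.trans hu.1, hu.2⟩)
      (fun t ht => hΦ t ⟨ht.1, by linarith [ht.2, hc.1]⟩)
      (fun u hu => hsup c u hc.1 hu.1 hu.2)).congr fun u hu => ?_
    simp only [abs_of_nonneg (sub_nonneg.2 hu.1)]

end SuperadditiveDerivative

theorem stmt3_general (a b : ℝ) (f f' Φ Φ' : ℝ → ℝ)
    (hf : ∀ x ∈ Set.Icc a b, HasDerivAt f (f' x) x)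
    (hΦ : ∀ x ∈ Set.Icc 0 (b - a), HasDerivAt Φ (Φ' x) x)
    (hΦ0 : Φ 0 = 0)
    (hsup : ∀ x y, a ≤ x → x ≤ y → y ≤ b → Φ' (y - x) ≤ f' y - f' x)
    (n : ℕ) (w x : ℕ → ℝ) (A xbar : ℝ)
    (hA : A = ∑ i ∈ Finset.range n, w i) (hApos : 0 < A)
    (hJS : ∀ j ≤ n, 0 ≤ ∑ i ∈ Finset.range j, w i ∧ ∑ i ∈ Finset.range j, w i ≤ A)
    (hx : ∀ i < n, x i ∈ Set.Icc a b)
    (hmono : ∀ i j, i ≤ j → j < n → x i ≤ x j)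
    (hxbar : xbar = (1 / A) * ∑ i ∈ Finset.range n, w i * x i) :
    f xbar + (1 / A) * ∑ i ∈ Finset.range n, w i * Φ |x i - xbar| ≤
      (1 / A) * ∑ i ∈ Finset.range n, w i * f (x i) := by
  have hw : IsJensenSteffensen w n := by rwa [IsJensenSteffensen, ← hA]
  have hn : 0 < n := Nat.pos_of_ne_zero fun hn => by simp [hA, hn] at hApos
  have hxmono : MonotoneOn x (Set.Iio n) := fun i _ j hj hij => hmono i j hij hj
  have hxbar_mem : xbar ∈ Set.Icc a b := by
    have h := hw.inv_mul_sum_mul_mem_Icc (hA ▸ hApos) hxmono hn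
    rw [← hA, ← one_div, ← hxbar] at h
    exact ⟨(hx 0 hn).1.trans h.1, h.2.trans (hx _ (by omega)).2⟩
  obtain ⟨hanti, hmono'⟩ := antitoneOn_monotoneOn_sub_mul_sub_comp_abs hf hΦ hsup hxbar_mem
  have key := hw.mul_le_sum_mul_comp hx hxmono hanti hmono' hxbar_mem
  have hsum : ∑ i ∈ range n, w i * x i = A * xbar := by
    rw [hxbar]; field_simp
  simp only [sub_self, abs_zero, hΦ0, mul_sub, sum_sub_distrib, mul_left_comm _ (f' xbar),
    ← mul_sum, hsum, ← hA] at key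
  rw [one_div, ← div_eq_inv_mul, ← div_eq_inv_mul, le_div_iff₀ hApos, add_mul,
    div_mul_cancel₀ _ hApos.ne']
  linarith

/-- refined Jensen–Steffensen inequality for functions with
Φ'-superadditive derivative. -/
theorem stmt3 (a b : ℝ) (hab : a < b) (f f' Φ Φ' : ℝ → ℝ)
    (hf : ∀ x ∈ Set.Icc a b, HasDerivAt f (f' x) x)
    (hf'c : ContinuousOn f' (Set.Icc a b))
    (hΦ : ∀ x ∈ Set.Icc 0 (b - a), HasDerivAt Φ (Φ' x) x)
    (hΦ'c : ContinuousOn Φ' (Set.Icc 0 (b - a)))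
    (hΦnn : ∀ x ∈ Set.Icc 0 (b - a), 0 ≤ Φ x)
    (hΦ'nn : ∀ x ∈ Set.Icc 0 (b - a), 0 ≤ Φ' x)
    (hΦ0 : Φ 0 = 0)
    (hsup : ∀ x y, a ≤ x → x ≤ y → y ≤ b → Φ' (y - x) ≤ f' y - f' x)
    (n : ℕ) (hn : 0 < n) (w x : ℕ → ℝ) (A xbar : ℝ)
    (hA : A = ∑ i ∈ Finset.range n, w i) (hApos : 0 < A)
    (hJS : ∀ j ≤ n, 0 ≤ ∑ i ∈ Finset.range j, w i ∧ ∑ i ∈ Finset.range j, w i ≤ A)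
    (hx : ∀ i < n, x i ∈ Set.Icc a b)
    (hmono : ∀ i j, i ≤ j → j < n → x i ≤ x j)
    (hxbar : xbar = (1 / A) * ∑ i ∈ Finset.range n, w i * x i) :
    f xbar + (1 / A) * ∑ i ∈ Finset.range n, w i * Φ |x i - xbar| ≤
      (1 / A) * ∑ i ∈ Finset.range n, w i * f (x i) :=
  stmt3_general a b f f' Φ Φ' hf hΦ hΦ0 hsup n w x A xbar hA hApos hJS hx hmono hxbar
end

section
/- Let f : [a,b] → ℝ be continuously differentiable with f' Φ'-superadditive, where Φ : [0,b-a] → ℝ≥0 is continuously differentiable, convex, Φ' ≥ 0, Φ(0) = 0. Let a₁,...,aₙ satisfy the Jensen–Steffensen conditions, x₁ ≤ ... ≤ xₙ in [a,b], x̄ = (1/Aₙ)∑aᵢxᵢ. Then for every c ∈ [a,b]: (1/Aₙ)∑ aᵢ f(xᵢ) - f(c) - f'(c)(x̄ - c) ≥ (1/Aₙ)∑ aᵢ Φ(|xᵢ - c|) ≥ 0. -/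
/-!
The remainder `g t = f t - f c - f' c * (t - c) - Φ |t - c|` vanishes at `c`, and the
`Φ'`-superadditivity of `f'` makes its derivative nonpositive on `[a, c]` and nonnegative on
`[c, b]`; the same holds for `Φ |t - c|` because `Φ' ≥ 0`. For any function `h` of this valley
shape with `h c ≥ 0`, the Jensen–Steffensen conditions give `∑ wᵢ h(xᵢ) ≥ 0`: split the increasing
`xᵢ` where they pass `c` and sum by parts on each side, using `Sⱼ ≥ 0` on the left and
`A - Sⱼ ≥ 0` on the right. Applied to `g` this is the refined inequality, applied to
`Φ |· - c|` its nonnegativity.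
-/

open Finset

section Steffensen

variable (w u : ℕ → ℝ)

lemma sum_range_mul_last_le_of_antitone {m : ℕ} (hS : ∀ j ≤ m, 0 ≤ ∑ i ∈ range j, w i)
    (hu : ∀ i, i + 1 < m → u (i + 1) ≤ u i) :
    (∑ i ∈ range m, w i) * u (m - 1) ≤ ∑ i ∈ range m, w i * u i := by
  have hparts := sum_range_by_parts u w m
  simp only [smul_eq_mul] at hparts
  have hdiff : ∑ i ∈ range (m - 1), (u (i + 1) - u i) * ∑ j ∈ range (i + 1), w j ≤ 0 := by
    refine sum_nonpos fun i hi => mul_nonpos_of_nonpos_of_nonneg ?_ (hS _ ?_)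
    all_goals rw [mem_range] at hi
    · linarith [hu i (by omega)]
    · omega
  simp only [mul_comm (w _)]
  linarith

lemma tailSum_mul_first_le_sum_Ico_of_monotone {m n : ℕ} (hmn : m ≤ n)
    (hS : ∀ j, m ≤ j → j ≤ n → ∑ i ∈ range j, w i ≤ ∑ i ∈ range n, w i)
    (hu : ∀ i, m ≤ i → i + 1 < n → u i ≤ u (i + 1)) :
    (∑ i ∈ range n, w i - ∑ i ∈ range m, w i) * u m ≤ ∑ i ∈ Ico m n, w i * u i := by
  rcases hmn.eq_or_lt with rfl | hlt
  · simp
  have hparts := sum_Ico_by_parts u w hlt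
  simp only [smul_eq_mul] at hparts
  have hdiff : ∑ i ∈ Ico m (n - 1), (u (i + 1) - u i) * ∑ j ∈ range (i + 1), w j ≤
      ∑ i ∈ Ico m (n - 1), (u (i + 1) - u i) * ∑ j ∈ range n, w j := by
    refine sum_le_sum fun i hi => mul_le_mul_of_nonneg_left (hS _ ?_ ?_) ?_
    all_goals rw [mem_Ico] at hi
    · omega
    · omega
    · linarith [hu i hi.1 (by omega)]
  rw [← sum_mul, sum_Ico_sub u (by omega)] at hdiff
  simp only [mul_comm (w _)]
  linarith

theorem sum_mul_nonneg_of_antitone_monotone {m n : ℕ} (hmn : m ≤ n)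
    (hS : ∀ j ≤ n, 0 ≤ ∑ i ∈ range j, w i ∧ ∑ i ∈ range j, w i ≤ ∑ i ∈ range n, w i)
    (hanti : ∀ i, i + 1 < m → u (i + 1) ≤ u i)
    (hmono : ∀ i, m ≤ i → i + 1 < n → u i ≤ u (i + 1))
    (hu : ∀ i < n, 0 ≤ u i) : 0 ≤ ∑ i ∈ range n, w i * u i := by
  have hhead := sum_range_mul_last_le_of_antitone w u (fun j hj => (hS j (by omega)).1) hanti
  have htail := tailSum_mul_first_le_sum_Ico_of_monotone w u hmn (fun j _ hj => (hS j hj).2) hmono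
  have hhead_nonneg : 0 ≤ (∑ i ∈ range m, w i) * u (m - 1) := by
    rcases Nat.eq_zero_or_pos m with rfl | hm
    · simp
    · exact mul_nonneg (hS m hmn).1 (hu _ (by omega))
  have htail_nonneg : 0 ≤ (∑ i ∈ range n, w i - ∑ i ∈ range m, w i) * u m := by
    rcases hmn.eq_or_lt with rfl | hlt
    · simp
    · exact mul_nonneg (sub_nonneg.2 (hS m hmn).2) (hu m hlt)
  rw [← sum_range_add_sum_Ico _ hmn]
  linarith

theorem sum_mul_comp_nonneg_of_antitoneOn_monotoneOn {a b c : ℝ} {h : ℝ → ℝ}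
    (hc : c ∈ Set.Icc a b) (hanti : AntitoneOn h (Set.Icc a c))
    (hmono : MonotoneOn h (Set.Icc c b)) (hhc : 0 ≤ h c) {n : ℕ} {x : ℕ → ℝ}
    (hS : ∀ j ≤ n, 0 ≤ ∑ i ∈ range j, w i ∧ ∑ i ∈ range j, w i ≤ ∑ i ∈ range n, w i)
    (hx : ∀ i < n, x i ∈ Set.Icc a b) (hxmono : ∀ i j, i ≤ j → j < n → x i ≤ x j) :
    0 ≤ ∑ i ∈ range n, w i * h (x i) := by
  classical
  have hsplit : ∃ m, m = n ∨ (m < n ∧ c ≤ x m) := ⟨n, Or.inl rfl⟩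
  set m := Nat.find hsplit
  have hmn : m ≤ n := Nat.find_min' hsplit (Or.inl rfl)
  have hleft : ∀ i < m, x i ≤ c := fun i hi => by
    have := Nat.find_min hsplit hi
    push Not at this
    exact (this.2 (by omega)).le
  have hright : ∀ i, m ≤ i → i < n → c ≤ x i := fun i hmi hi => by
    rcases Nat.find_spec hsplit with h | h
    · omega
    · exact h.2.trans (hxmono m i hmi hi)
  refine sum_mul_nonneg_of_antitone_monotone w (h ∘ x) hmn hS (fun i hi => ?_)
    (fun i hmi hi => ?_) (fun i hi => ?_)
  · exact hanti ⟨(hx i (by omega)).1, hleft i (by omega)⟩ ⟨(hx (i + 1) (by omega)).1,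
      hleft (i + 1) hi⟩ (hxmono i (i + 1) (by omega) (by omega))
  · exact hmono ⟨hright i hmi (by omega), (hx i (by omega)).2⟩
      ⟨hright (i + 1) (by omega) hi, (hx (i + 1) hi).2⟩ (hxmono i (i + 1) (by omega) hi)
  · obtain ⟨hax, hxb⟩ := hx i hi
    rcases le_total (x i) c with hxc | hcx
    · exact hhc.trans (hanti ⟨hax, hxc⟩ ⟨hc.1, le_rfl⟩ hxc)
    · exact hhc.trans (hmono ⟨le_rfl, hc.2⟩ ⟨hcx, hxb⟩ hcx)

end Steffensen

lemma monotoneOn_Icc_of_hasDerivAt_nonneg_s4 {p q : ℝ} {F F' : ℝ → ℝ}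
    (hF : ∀ t ∈ Set.Icc p q, HasDerivAt F (F' t) t) (hF' : ∀ t ∈ Set.Ioo p q, 0 ≤ F' t) :
    MonotoneOn F (Set.Icc p q) :=
  monotoneOn_of_hasDerivWithinAt_nonneg (convex_Icc p q)
    (fun t ht => (hF t ht).continuousAt.continuousWithinAt)
    (fun t ht => by
      rw [interior_Icc] at ht ⊢
      exact (hF t (Set.Ioo_subset_Icc_self ht)).hasDerivWithinAt)
    (fun t ht => hF' t (by rwa [interior_Icc] at ht))

lemma antitoneOn_Icc_of_hasDerivAt_nonpos {p q : ℝ} {F F' : ℝ → ℝ}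
    (hF : ∀ t ∈ Set.Icc p q, HasDerivAt F (F' t) t) (hF' : ∀ t ∈ Set.Ioo p q, F' t ≤ 0) :
    AntitoneOn F (Set.Icc p q) :=
  antitoneOn_of_hasDerivWithinAt_nonpos (convex_Icc p q)
    (fun t ht => (hF t ht).continuousAt.continuousWithinAt)
    (fun t ht => by
      rw [interior_Icc] at ht ⊢
      exact (hF t (Set.Ioo_subset_Icc_self ht)).hasDerivWithinAt)
    (fun t ht => hF' t (by rwa [interior_Icc] at ht))

section Remainder

variable {a b c : ℝ} {f f' Φ Φ' : ℝ → ℝ}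

lemma monotoneOn_sub_tangent_sub_comp_abs (hf : ∀ x ∈ Set.Icc a b, HasDerivAt f (f' x) x)
    (hΦ : ∀ x ∈ Set.Icc 0 (b - a), HasDerivAt Φ (Φ' x) x)
    (hsup : ∀ x y, a ≤ x → x ≤ y → y ≤ b → Φ' (y - x) ≤ f' y - f' x) (hc : c ∈ Set.Icc a b) :
    MonotoneOn (fun t => f t - f c - f' c * (t - c) - Φ |t - c|) (Set.Icc c b) := by
  refine MonotoneOn.congr (f₁ := fun t => f t - f c - f' c * (t - c) - Φ (t - c))
    (monotoneOn_Icc_of_hasDerivAt_nonneg_s4 (F' := fun t => f' t - f' c * 1 - Φ' (t - c))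
      (fun t ht => ?_) (fun t ht => ?_)) (fun t ht => ?_)
  · have hΦt := hΦ (t - c) ⟨by linarith [ht.1], by linarith [ht.2, hc.1]⟩
    exact (((hf t ⟨hc.1.trans ht.1, ht.2⟩).sub_const _).sub
      (((hasDerivAt_id t).sub_const c).const_mul _)).sub (hΦt.comp_sub_const t c)
  · linarith [hsup c t hc.1 ht.1.le ht.2.le]
  · simp only [abs_of_nonneg (sub_nonneg.2 ht.1)]

lemma antitoneOn_sub_tangent_sub_comp_abs (hf : ∀ x ∈ Set.Icc a b, HasDerivAt f (f' x) x)
    (hΦ : ∀ x ∈ Set.Icc 0 (b - a), HasDerivAt Φ (Φ' x) x)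
    (hsup : ∀ x y, a ≤ x → x ≤ y → y ≤ b → Φ' (y - x) ≤ f' y - f' x) (hc : c ∈ Set.Icc a b) :
    AntitoneOn (fun t => f t - f c - f' c * (t - c) - Φ |t - c|) (Set.Icc a c) := by
  refine AntitoneOn.congr (f₁ := fun t => f t - f c - f' c * (t - c) - Φ (c - t))
    (antitoneOn_Icc_of_hasDerivAt_nonpos (F' := fun t => f' t - f' c * 1 - -Φ' (c - t))
      (fun t ht => ?_) (fun t ht => ?_)) (fun t ht => ?_)
  · have hΦt := hΦ (c - t) ⟨by linarith [ht.2], by linarith [ht.1, hc.2]⟩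
    exact (((hf t ⟨ht.1, ht.2.trans hc.2⟩).sub_const _).sub
      (((hasDerivAt_id t).sub_const c).const_mul _)).sub (hΦt.comp_const_sub c t)
  · linarith [hsup t c ht.1.le ht.2.le hc.2]
  · simp only [abs_sub_comm t c, abs_of_nonneg (sub_nonneg.2 ht.2)]

lemma monotoneOn_comp_abs_sub (hΦ : MonotoneOn Φ (Set.Icc 0 (b - a))) (hc : c ∈ Set.Icc a b) :
    MonotoneOn (fun t => Φ |t - c|) (Set.Icc c b) := by
  intro s hs t ht hst
  simp only [abs_of_nonneg (sub_nonneg.2 hs.1), abs_of_nonneg (sub_nonneg.2 ht.1)]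
  exact hΦ ⟨by linarith [hs.1], by linarith [hs.2, hc.1]⟩
    ⟨by linarith [ht.1], by linarith [ht.2, hc.1]⟩ (by linarith)

lemma antitoneOn_comp_abs_sub (hΦ : MonotoneOn Φ (Set.Icc 0 (b - a))) (hc : c ∈ Set.Icc a b) :
    AntitoneOn (fun t => Φ |t - c|) (Set.Icc a c) := by
  intro s hs t ht hst
  simp only [abs_sub_comm _ c, abs_of_nonneg (sub_nonneg.2 hs.2),
    abs_of_nonneg (sub_nonneg.2 ht.2)]
  exact hΦ ⟨by linarith [ht.2], by linarith [ht.1, hc.2]⟩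
    ⟨by linarith [hs.2], by linarith [hs.1, hc.2]⟩ (by linarith)

end Remainder

lemma one_div_mul_sum_sub_tangent {n : ℕ} {w x v : ℕ → ℝ} {A : ℝ}
    (hA : A = ∑ i ∈ range n, w i) (hA0 : A ≠ 0) (F : ℝ → ℝ) (c m : ℝ) :
    (1 / A) * ∑ i ∈ range n, w i * (F (x i) - F c - m * (x i - c) - v i) =
      (1 / A) * ∑ i ∈ range n, w i * F (x i) - F c
        - m * ((1 / A) * ∑ i ∈ range n, w i * x i - c) - (1 / A) * ∑ i ∈ range n, w i * v i := by
  have hsplit : ∑ i ∈ range n, w i * (F (x i) - F c - m * (x i - c) - v i) =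
      ∑ i ∈ range n, w i * F (x i) - A * F c - m * (∑ i ∈ range n, w i * x i - A * c)
        - ∑ i ∈ range n, w i * v i := by
    simp only [hA, sum_mul, mul_sum, ← sum_sub_distrib]
    exact sum_congr rfl fun i _ => by ring
  rw [hsplit]
  field_simp

theorem stmt4_general (a b : ℝ) (f f' Φ Φ' : ℝ → ℝ)
    (hf : ∀ x ∈ Set.Icc a b, HasDerivAt f (f' x) x)
    (hΦ : ∀ x ∈ Set.Icc 0 (b - a), HasDerivAt Φ (Φ' x) x)
    (hΦ'nn : ∀ x ∈ Set.Icc 0 (b - a), 0 ≤ Φ' x)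
    (hΦ0 : Φ 0 = 0)
    (hsup : ∀ x y, a ≤ x → x ≤ y → y ≤ b → Φ' (y - x) ≤ f' y - f' x)
    (n : ℕ) (w x : ℕ → ℝ) (A xbar : ℝ)
    (hA : A = ∑ i ∈ Finset.range n, w i) (hApos : 0 < A)
    (hJS : ∀ j ≤ n, 0 ≤ ∑ i ∈ Finset.range j, w i ∧ ∑ i ∈ Finset.range j, w i ≤ A)
    (hx : ∀ i < n, x i ∈ Set.Icc a b)
    (hmono : ∀ i j, i ≤ j → j < n → x i ≤ x j)
    (hxbar : xbar = (1 / A) * ∑ i ∈ Finset.range n, w i * x i) :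
    ∀ c ∈ Set.Icc a b,
      (1 / A) * ∑ i ∈ Finset.range n, w i * Φ |x i - c| ≤
          (1 / A) * ∑ i ∈ Finset.range n, w i * f (x i) - f c - f' c * (xbar - c) ∧
        0 ≤ (1 / A) * ∑ i ∈ Finset.range n, w i * Φ |x i - c| := by
  intro c hc
  subst hxbar
  rw [hA] at hJS
  have hΦmono : MonotoneOn Φ (Set.Icc 0 (b - a)) :=
    monotoneOn_Icc_of_hasDerivAt_nonneg_s4 hΦ fun t ht => hΦ'nn t (Set.Ioo_subset_Icc_self ht)
  have hremainder := sum_mul_comp_nonneg_of_antitoneOn_monotoneOn w hc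
    (antitoneOn_sub_tangent_sub_comp_abs hf hΦ hsup hc)
    (monotoneOn_sub_tangent_sub_comp_abs hf hΦ hsup hc) (by simp [hΦ0]) hJS hx hmono
  have hdistance := sum_mul_comp_nonneg_of_antitoneOn_monotoneOn w hc
    (antitoneOn_comp_abs_sub hΦmono hc) (monotoneOn_comp_abs_sub hΦmono hc) (by simp [hΦ0])
    hJS hx hmono
  have hmean := mul_nonneg (one_div_nonneg.2 hApos.le) hremainder
  rw [one_div_mul_sum_sub_tangent hA hApos.ne'] at hmean
  exact ⟨by linarith, mul_nonneg (one_div_nonneg.2 hApos.le) hdistance⟩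

/-- refined Jensen–Steffensen inequality with convex modulus Φ. -/
theorem stmt4 (a b : ℝ) (hab : a < b) (f f' Φ Φ' : ℝ → ℝ)
    (hf : ∀ x ∈ Set.Icc a b, HasDerivAt f (f' x) x)
    (hf'c : ContinuousOn f' (Set.Icc a b))
    (hΦ : ∀ x ∈ Set.Icc 0 (b - a), HasDerivAt Φ (Φ' x) x)
    (hΦ'c : ContinuousOn Φ' (Set.Icc 0 (b - a)))
    (hΦnn : ∀ x ∈ Set.Icc 0 (b - a), 0 ≤ Φ x)
    (hΦ'nn : ∀ x ∈ Set.Icc 0 (b - a), 0 ≤ Φ' x)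
    (hΦ0 : Φ 0 = 0)
    (hΦconv : ConvexOn ℝ (Set.Icc 0 (b - a)) Φ)
    (hsup : ∀ x y, a ≤ x → x ≤ y → y ≤ b → Φ' (y - x) ≤ f' y - f' x)
    (n : ℕ) (hn : 0 < n) (w x : ℕ → ℝ) (A xbar : ℝ)
    (hA : A = ∑ i ∈ Finset.range n, w i) (hApos : 0 < A)
    (hJS : ∀ j ≤ n, 0 ≤ ∑ i ∈ Finset.range j, w i ∧ ∑ i ∈ Finset.range j, w i ≤ A)
    (hx : ∀ i < n, x i ∈ Set.Icc a b)
    (hmono : ∀ i j, i ≤ j → j < n → x i ≤ x j)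
    (hxbar : xbar = (1 / A) * ∑ i ∈ Finset.range n, w i * x i) :
    ∀ c ∈ Set.Icc a b,
      (1 / A) * ∑ i ∈ Finset.range n, w i * Φ |x i - c| ≤
          (1 / A) * ∑ i ∈ Finset.range n, w i * f (x i) - f c - f' c * (xbar - c) ∧
        0 ≤ (1 / A) * ∑ i ∈ Finset.range n, w i * Φ |x i - c| :=
  stmt4_general a b f f' Φ Φ' hf hΦ hΦ'nn hΦ0 hsup n w x A xbar hA hApos hJS hx hmono hxbar
end

section
/- Let Φ : [0, b-a] → ℝ≥0 be nonnegative, convex with Φ(0) = 0, let a₁,...,aₙ satisfy the Jensen–Steffensen conditions, let x₁ ≤ ... ≤ xₙ in [a,b], and let c satisfy x_k ≤ c ≤ x_{k+1} for some 1 ≤ k ≤ n-1. Then ∑_{i=1}^n aᵢ Φ(|xᵢ - c|) ≥ 0. -/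
/-!
Split the sum at `k`. For `i ≤ k` the values `Φ |x i - c| = Φ (c - x i)` decrease in `i`, and
for `i > k` the values `Φ (x i - c)` increase, because a convex function on `[0, b - a]` that
is minimal at `0` is monotone there. Abel summation then shows that the left part is nonnegative
since the partial sums `A_j` are, and the right part since the tail sums `A - A_j` are.
-/

open Finset

theorem ConvexOn.monotoneOn_of_isMinOn_left {𝕜 β : Type*} [Field 𝕜] [LinearOrder 𝕜]
    [IsStrictOrderedRing 𝕜] [AddCommGroup β] [LinearOrder β] [IsOrderedAddMonoid β]
    [Module 𝕜 β] [PosSMulStrictMono 𝕜 β] {a b : 𝕜} {f : 𝕜 → β}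
    (hf : ConvexOn 𝕜 (Set.Icc a b) f) (hmin : IsMinOn f (Set.Icc a b) a) :
    MonotoneOn f (Set.Icc a b) := by
  intro s hs t ht hst
  obtain rfl | has := hs.1.eq_or_lt
  · exact hmin ht
  obtain rfl | hst := hst.eq_or_lt
  · rfl
  have hs_mem : s ∈ openSegment 𝕜 a t := by
    rw [openSegment_eq_Ioo (has.trans hst)]
    exact ⟨has, hst⟩
  exact hf.le_right_of_left_le (Set.left_mem_Icc.2 (hs.1.trans hs.2)) ht hs_mem (hmin hs)

section Abel

variable {R : Type*} [CommRing R] [PartialOrder R] [IsOrderedRing R]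

theorem sum_range_mul_nonneg_of_antitoneOn {w f : ℕ → R} {m : ℕ}
    (hw : ∀ j ≤ m, 0 ≤ ∑ i ∈ range j, w i) (hf : AntitoneOn f (Set.Iio m))
    (hf0 : ∀ i < m, 0 ≤ f i) :
    0 ≤ ∑ i ∈ range m, w i * f i := by
  induction m generalizing f with
  | zero => simp
  | succ m ih =>
    have hpeel : ∑ i ∈ range (m + 1), w i * f i
        = ∑ i ∈ range m, w i * (f i - f m) + f m * ∑ i ∈ range (m + 1), w i := by
      simp only [sum_range_succ, mul_sub, sum_sub_distrib, ← sum_mul]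
      ring
    rw [hpeel]
    refine add_nonneg (ih (fun j hj => hw j (by omega)) ?_ ?_)
      (mul_nonneg (hf0 m m.lt_succ_self) (hw _ le_rfl))
    · intro i hi j hj hij
      exact sub_le_sub_right (hf (Nat.lt_succ_of_lt hi) (Nat.lt_succ_of_lt hj) hij) _
    · intro i hi
      exact sub_nonneg.2 (hf (Nat.lt_succ_of_lt hi) m.lt_succ_self hi.le)

theorem sum_Ico_mul_nonneg_of_monotoneOn {w f : ℕ → R} {s n : ℕ}
    (hw : ∀ j ∈ Set.Icc s n, 0 ≤ ∑ i ∈ Ico j n, w i) (hf : MonotoneOn f (Set.Ico s n))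
    (hf0 : ∀ i ∈ Set.Ico s n, 0 ≤ f i) :
    0 ≤ ∑ i ∈ Ico s n, w i * f i := by
  induction hd : n - s generalizing s f with
  | zero => simp [Finset.Ico_eq_empty_of_le (Nat.sub_eq_zero_iff_le.1 hd)]
  | succ d ih =>
    have hsn : s < n := by omega
    have hpeel : ∑ i ∈ Ico s n, w i * f i
        = ∑ i ∈ Ico (s + 1) n, w i * (f i - f s) + f s * ∑ i ∈ Ico s n, w i := by
      simp only [sum_eq_sum_Ico_succ_bot hsn, mul_sub, sum_sub_distrib, ← sum_mul]
      ring
    rw [hpeel]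
    have hs : s ∈ Set.Ico s n := ⟨le_rfl, hsn⟩
    refine add_nonneg (ih (fun j hj => hw j ⟨Nat.le_of_succ_le hj.1, hj.2⟩) ?_ ?_ (by omega))
      (mul_nonneg (hf0 s hs) (hw s ⟨le_rfl, hsn.le⟩))
    · intro i hi j hj hij
      exact sub_le_sub_right
        (hf ⟨Nat.le_of_succ_le hi.1, hi.2⟩ ⟨Nat.le_of_succ_le hj.1, hj.2⟩ hij) _
    · intro i hi
      exact sub_nonneg.2 (hf hs ⟨Nat.le_of_succ_le hi.1, hi.2⟩ (Nat.le_of_succ_le hi.1))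

end Abel

theorem stmt5_general (a b : ℝ) (Φ : ℝ → ℝ)
    (hΦnn : ∀ x ∈ Set.Icc 0 (b - a), 0 ≤ Φ x)
    (hΦconv : ConvexOn ℝ (Set.Icc 0 (b - a)) Φ)
    (hΦ0 : Φ 0 = 0)
    (n : ℕ) (w x : ℕ → ℝ) (A : ℝ)
    (hA : A = ∑ i ∈ Finset.range n, w i)
    (hJS : ∀ j ≤ n, 0 ≤ ∑ i ∈ Finset.range j, w i ∧ ∑ i ∈ Finset.range j, w i ≤ A)
    (hx : ∀ i < n, x i ∈ Set.Icc a b)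
    (hmono : ∀ i j, i ≤ j → j < n → x i ≤ x j)
    (c : ℝ) (k : ℕ) (hk : k + 1 < n) (hc1 : x k ≤ c) (hc2 : c ≤ x (k + 1)) :
    0 ≤ ∑ i ∈ Finset.range n, w i * Φ |x i - c| := by
  have hΦmono : MonotoneOn Φ (Set.Icc 0 (b - a)) :=
    hΦconv.monotoneOn_of_isMinOn_left (isMinOn_iff.2 fun t ht => hΦ0.trans_le (hΦnn t ht))
  have hc : c ∈ Set.Icc a b := ⟨(hx k (by omega)).1.trans hc1, hc2.trans (hx (k + 1) hk).2⟩
  have hdist : ∀ i < n, |x i - c| ∈ Set.Icc 0 (b - a) := fun i hi =>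
    ⟨abs_nonneg _, abs_sub_le_of_le_of_le (hx i hi).1 (hx i hi).2 hc.1 hc.2⟩
  have hleft : AntitoneOn (fun i => Φ |x i - c|) (Set.Iio (k + 1)) := by
    intro i (hi : i < k + 1) j (hj : j < k + 1) hij
    have hxjc : x j ≤ c := (hmono j k (by omega) (by omega)).trans hc1
    exact hΦmono (hdist j (by omega)) (hdist i (by omega)) <| abs_le_abs_of_nonpos
      (sub_nonpos.2 hxjc) (sub_le_sub_right (hmono i j hij (by omega)) c)
  have hright : MonotoneOn (fun i => Φ |x i - c|) (Set.Ico (k + 1) n) := by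
    intro i hi j hj hij
    have hcxi : c ≤ x i := hc2.trans (hmono _ i hi.1 hi.2)
    exact hΦmono (hdist i hi.2) (hdist j hj.2) <| abs_le_abs_of_nonneg
      (sub_nonneg.2 hcxi) (sub_le_sub_right (hmono i j hij hj.2) c)
  have htail : ∀ j ∈ Set.Icc (k + 1) n, 0 ≤ ∑ i ∈ Ico j n, w i := fun j hj => by
    rw [sum_Ico_eq_sub w hj.2, ← hA]
    exact sub_nonneg.2 (hJS j hj.2).2
  rw [← sum_range_add_sum_Ico _ hk.le]
  exact add_nonneg
    (sum_range_mul_nonneg_of_antitoneOn (fun j hj => (hJS j (by omega)).1) hleft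
      fun i hi => hΦnn _ (hdist i (by omega)))
    (sum_Ico_mul_nonneg_of_monotoneOn htail hright fun i hi => hΦnn _ (hdist i hi.2))

/-- nonnegativity of the Jensen–Steffensen weighted sum of a
nonnegative convex Φ with Φ(0)=0. -/
theorem stmt5 (a b : ℝ) (hab : a < b) (Φ : ℝ → ℝ)
    (hΦnn : ∀ x ∈ Set.Icc 0 (b - a), 0 ≤ Φ x)
    (hΦconv : ConvexOn ℝ (Set.Icc 0 (b - a)) Φ)
    (hΦ0 : Φ 0 = 0)
    (n : ℕ) (hn : 0 < n) (w x : ℕ → ℝ) (A : ℝ)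
    (hA : A = ∑ i ∈ Finset.range n, w i) (hApos : 0 < A)
    (hJS : ∀ j ≤ n, 0 ≤ ∑ i ∈ Finset.range j, w i ∧ ∑ i ∈ Finset.range j, w i ≤ A)
    (hx : ∀ i < n, x i ∈ Set.Icc a b)
    (hmono : ∀ i j, i ≤ j → j < n → x i ≤ x j)
    (c : ℝ) (k : ℕ) (hk : k + 1 < n) (hc1 : x k ≤ c) (hc2 : c ≤ x (k + 1)) :
    0 ≤ ∑ i ∈ Finset.range n, w i * Φ |x i - c| :=
  stmt5_general a b Φ hΦnn hΦconv hΦ0 n w x A hA hJS hx hmono c k hk hc1 hc2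
end

section
/- Let f : (a,b) → ℝ be uniformly convex with modulus Φ ≥ 0, i.e., f(x) - f(y) - f'(y)(x-y) - Φ(|x-y|) ≥ 0 for all x,y, and differentiable. Let x₁,...,xₙ ∈ (a,b), a₁,...,aₙ ≥ 0 with Aₙ = ∑aᵢ > 0, x̄ = (1/Aₙ)∑aᵢxᵢ. Then 0 ≤ |(1/Aₙ)∑ aᵢ |f(xᵢ) - f(x̄) - Φ(|x̄ - xᵢ|)| - (1/Aₙ)∑ aᵢ |f'(x̄)||x̄ - xᵢ|| ≤ (1/Aₙ)∑ aᵢ f(xᵢ) - f(x̄) - (1/Aₙ)∑ aᵢ Φ(|x̄ - xᵢ|). -/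
/-!
Put `g i = f (x i) - f x̄ - Φ |x̄ - x i|` and `h i = f' x̄ * (x i - x̄)`. The gradient inequality
at `y = x̄` (which lies in the interval by convexity) gives `h i ≤ g i`, and `∑ w i * h i = 0`
because `x̄` is the weighted mean. Hence `||g i| - |h i|| ≤ g i - h i`, and summing with the
weights `w i` bounds the left side by `∑ w i * g i`, which is `A` times the right side.
-/

open Finset

variable {ι : Type*}

lemma Finset.sum_mul_sub_centerMass (s : Finset ι) {w : ι → ℝ} (x : ι → ℝ)
    (hw : ∑ i ∈ s, w i ≠ 0) : ∑ i ∈ s, w i * (x i - s.centerMass w x) = 0 := by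
  simp only [mul_sub, sum_sub_distrib, ← sum_mul, centerMass, smul_eq_mul]
  field_simp
  ring

lemma abs_sum_mul_abs_sub_sum_mul_abs_le (s : Finset ι) {w g h : ι → ℝ}
    (hw : ∀ i ∈ s, 0 ≤ w i) (hhg : ∀ i ∈ s, h i ≤ g i) :
    |(∑ i ∈ s, w i * abs (g i)) - ∑ i ∈ s, w i * abs (h i)| ≤
      ∑ i ∈ s, w i * g i - ∑ i ∈ s, w i * h i := by
  simp only [← sum_sub_distrib, ← mul_sub]
  refine (abs_sum_le_sum_abs _ _).trans (sum_le_sum fun i hi => ?_)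
  rw [abs_mul, abs_of_nonneg (hw i hi)]
  gcongr
  · exact hw i hi
  · exact (abs_abs_sub_abs_le_abs_sub _ _).trans (abs_of_nonneg (sub_nonneg.2 (hhg i hi))).le

theorem abs_sum_mul_abs_sub_le_of_uniform_convexity {S : Set ℝ} (hS : Convex ℝ S)
    {f f' Φ : ℝ → ℝ} (huc : ∀ x ∈ S, ∀ y ∈ S, f y + f' y * (x - y) + Φ |x - y| ≤ f x)
    (s : Finset ι) {w x : ι → ℝ} (hw : ∀ i ∈ s, 0 ≤ w i) (hW : 0 < ∑ i ∈ s, w i)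
    (hx : ∀ i ∈ s, x i ∈ S) {xbar : ℝ} (hxbar : s.centerMass w x = xbar) :
    |(∑ i ∈ s, w i * abs (f (x i) - f xbar - Φ |xbar - x i|)) -
        ∑ i ∈ s, w i * (|f' xbar| * |xbar - x i|)| ≤
      ∑ i ∈ s, w i * f (x i) - (∑ i ∈ s, w i) * f xbar - ∑ i ∈ s, w i * Φ |xbar - x i| := by
  have hxbar_mem : xbar ∈ S := hxbar ▸ hS.centerMass_mem hw hW hx
  have htangent : ∀ i ∈ s, f' xbar * (x i - xbar) ≤ f (x i) - f xbar - Φ |xbar - x i| :=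
    fun i hi => by
      have := huc (x i) (hx i hi) xbar hxbar_mem
      rw [abs_sub_comm] at this
      linarith
  have hmean : ∑ i ∈ s, w i * (f' xbar * (x i - xbar)) = 0 := by
    rw [← hxbar]
    simp only [mul_left_comm _ (f' _), ← mul_sum, s.sum_mul_sub_centerMass x hW.ne', mul_zero]
  have key := abs_sum_mul_abs_sub_sum_mul_abs_le s hw htangent
  simp only [hmean, abs_mul, abs_sub_comm (x _) xbar, sub_zero] at key
  convert key using 1
  simp only [mul_sub, sum_sub_distrib, sum_mul]

theorem stmt6_general (a b : ℝ) (f f' Φ : ℝ → ℝ)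
    (huc : ∀ x ∈ Set.Ioo a b, ∀ y ∈ Set.Ioo a b,
      f y + f' y * (x - y) + Φ |x - y| ≤ f x)
    (n : ℕ) (w x : ℕ → ℝ) (A xbar : ℝ)
    (hA : A = ∑ i ∈ Finset.range n, w i) (hApos : 0 < A)
    (hw : ∀ i < n, 0 ≤ w i)
    (hx : ∀ i < n, x i ∈ Set.Ioo a b)
    (hxbar : xbar = (1 / A) * ∑ i ∈ Finset.range n, w i * x i) :
    0 ≤ |(1 / A) * (∑ i ∈ Finset.range n, w i * abs (f (x i) - f xbar - Φ |xbar - x i|)) -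
          (1 / A) * ∑ i ∈ Finset.range n, w i * (|f' xbar| * |xbar - x i|)| ∧
      |(1 / A) * (∑ i ∈ Finset.range n, w i * abs (f (x i) - f xbar - Φ |xbar - x i|)) -
          (1 / A) * ∑ i ∈ Finset.range n, w i * (|f' xbar| * |xbar - x i|)| ≤
        (1 / A) * ∑ i ∈ Finset.range n, w i * f (x i) - f xbar -
          (1 / A) * ∑ i ∈ Finset.range n, w i * Φ |xbar - x i| := by
  have hcenter : (range n).centerMass w x = xbar := by
    simp only [hxbar, hA, centerMass, one_div, smul_eq_mul]
  have key := abs_sum_mul_abs_sub_le_of_uniform_convexity (convex_Ioo a b) huc (range n)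
    (fun i hi => hw i (mem_range.1 hi)) (hA ▸ hApos) (fun i hi => hx i (mem_range.1 hi)) hcenter
  rw [← hA] at key
  refine ⟨abs_nonneg _, ?_⟩
  calc _ = 1 / A * |(∑ i ∈ range n, w i * abs (f (x i) - f xbar - Φ |xbar - x i|)) -
          ∑ i ∈ range n, w i * (|f' xbar| * |xbar - x i|)| := by
        rw [← mul_sub, abs_mul, abs_of_pos (one_div_pos.2 hApos)]
    _ ≤ 1 / A * (∑ i ∈ range n, w i * f (x i) - A * f xbar -
          ∑ i ∈ range n, w i * Φ |xbar - x i|) := by gcongr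
    _ = _ := by field_simp

/-- bounds on the Jensen gap for uniformly convex functions. -/
theorem stmt6 (a b : ℝ) (hab : a < b) (f f' Φ : ℝ → ℝ)
    (hf : ∀ x ∈ Set.Ioo a b, HasDerivAt f (f' x) x)
    (hΦnn : ∀ t ∈ Set.Icc 0 (b - a), 0 ≤ Φ t)
    (huc : ∀ x ∈ Set.Ioo a b, ∀ y ∈ Set.Ioo a b,
      f y + f' y * (x - y) + Φ |x - y| ≤ f x)
    (n : ℕ) (hn : 0 < n) (w x : ℕ → ℝ) (A xbar : ℝ)
    (hA : A = ∑ i ∈ Finset.range n, w i) (hApos : 0 < A)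
    (hw : ∀ i < n, 0 ≤ w i)
    (hx : ∀ i < n, x i ∈ Set.Ioo a b)
    (hxbar : xbar = (1 / A) * ∑ i ∈ Finset.range n, w i * x i) :
    0 ≤ |(1 / A) * (∑ i ∈ Finset.range n, w i * abs (f (x i) - f xbar - Φ |xbar - x i|)) -
          (1 / A) * ∑ i ∈ Finset.range n, w i * (|f' xbar| * |xbar - x i|)| ∧
      |(1 / A) * (∑ i ∈ Finset.range n, w i * abs (f (x i) - f xbar - Φ |xbar - x i|)) -
          (1 / A) * ∑ i ∈ Finset.range n, w i * (|f' xbar| * |xbar - x i|)| ≤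
        (1 / A) * ∑ i ∈ Finset.range n, w i * f (x i) - f xbar -
          (1 / A) * ∑ i ∈ Finset.range n, w i * Φ |xbar - x i| :=
  stmt6_general a b f f' Φ huc n w x A xbar hA hApos hw hx hxbar
end

section
/- Let f : (a,b) → ℝ be differentiable and uniformly convex with modulus Φ : [0,b-a] → ℝ≥0. Let x₁,...,xₙ ∈ (a,b), a₁,...,aₙ ≥ 0 with Aₙ = ∑aᵢ > 0 and x̄ = (1/Aₙ)∑aᵢxᵢ. Then (1/Aₙ)∑ aᵢ f(xᵢ) - f(x̄) ≤ (1/Aₙ)∑ aᵢ f'(xᵢ)(xᵢ - x̄) - (1/Aₙ)∑ aᵢ Φ(|x̄ - xᵢ|). -/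
/-! The uniform convexity inequality, applied with `x := x̄` and `y := xᵢ` and summed with the
weights `wᵢ`, bounds `∑ wᵢ f(xᵢ) - ∑ wᵢ f'(xᵢ)(xᵢ - x̄) + ∑ wᵢ Φ(|x̄ - xᵢ|)` by `(∑ wᵢ) f(x̄)`;
dividing by `∑ wᵢ` gives the claim. The only other input is that `x̄`, a convex combination of
points of `(a, b)`, lies in `(a, b)`. -/

open Finset

theorem sum_mul_sub_sum_mul_deriv_add_sum_mul_modulus_le {ι : Type*} {s : Set ℝ}
    {f f' Φ : ℝ → ℝ}
    (huc : ∀ x ∈ s, ∀ y ∈ s, f y + f' y * (x - y) + Φ |x - y| ≤ f x)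
    {t : Finset ι} {w x : ι → ℝ} (hw : ∀ i ∈ t, 0 ≤ w i) (hx : ∀ i ∈ t, x i ∈ s)
    {c : ℝ} (hc : c ∈ s) :
    ∑ i ∈ t, w i * f (x i) - ∑ i ∈ t, w i * (f' (x i) * (x i - c)) +
      ∑ i ∈ t, w i * Φ |c - x i| ≤ (∑ i ∈ t, w i) * f c := by
  rw [sum_mul, ← sum_sub_distrib, ← sum_add_distrib]
  refine sum_le_sum fun i hi => ?_
  have h := mul_le_mul_of_nonneg_left (huc c hc (x i) (hx i hi)) (hw i hi)
  linarith

theorem stmt8_general (a b : ℝ) (f f' Φ : ℝ → ℝ)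
    (huc : ∀ x ∈ Set.Ioo a b, ∀ y ∈ Set.Ioo a b,
      f y + f' y * (x - y) + Φ |x - y| ≤ f x)
    (n : ℕ) (w x : ℕ → ℝ) (A xbar : ℝ)
    (hA : A = ∑ i ∈ Finset.range n, w i) (hApos : 0 < A)
    (hw : ∀ i < n, 0 ≤ w i)
    (hx : ∀ i < n, x i ∈ Set.Ioo a b)
    (hxbar : xbar = (1 / A) * ∑ i ∈ Finset.range n, w i * x i) :
    (1 / A) * ∑ i ∈ Finset.range n, w i * f (x i) - f xbar ≤
      (1 / A) * ∑ i ∈ Finset.range n, w i * (f' (x i) * (x i - xbar)) -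
        (1 / A) * ∑ i ∈ Finset.range n, w i * Φ |xbar - x i| := by
  have hw' : ∀ i ∈ range n, 0 ≤ w i := fun i hi => hw i (mem_range.mp hi)
  have hx' : ∀ i ∈ range n, x i ∈ Set.Ioo a b := fun i hi => hx i (mem_range.mp hi)
  have hxbar_mem : xbar ∈ Set.Ioo a b := by
    have h := (convex_Ioo a b).centerMass_mem hw' (hA ▸ hApos) hx'
    rw [hxbar, one_div]
    simpa only [centerMass, ← hA, smul_eq_mul] using h
  have key := mul_le_mul_of_nonneg_left
    (sum_mul_sub_sum_mul_deriv_add_sum_mul_modulus_le huc hw' hx' hxbar_mem)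
    (one_div_pos.mpr hApos).le
  rw [← hA, ← mul_assoc, one_div_mul_cancel hApos.ne', one_mul, mul_add, mul_sub] at key
  linarith

/-- converse Jensen inequality for uniformly convex functions. -/
theorem stmt8 (a b : ℝ) (hab : a < b) (f f' Φ : ℝ → ℝ)
    (hf : ∀ x ∈ Set.Ioo a b, HasDerivAt f (f' x) x)
    (hΦnn : ∀ t ∈ Set.Icc 0 (b - a), 0 ≤ Φ t)
    (huc : ∀ x ∈ Set.Ioo a b, ∀ y ∈ Set.Ioo a b,
      f y + f' y * (x - y) + Φ |x - y| ≤ f x)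
    (n : ℕ) (hn : 0 < n) (w x : ℕ → ℝ) (A xbar : ℝ)
    (hA : A = ∑ i ∈ Finset.range n, w i) (hApos : 0 < A)
    (hw : ∀ i < n, 0 ≤ w i)
    (hx : ∀ i < n, x i ∈ Set.Ioo a b)
    (hxbar : xbar = (1 / A) * ∑ i ∈ Finset.range n, w i * x i) :
    (1 / A) * ∑ i ∈ Finset.range n, w i * f (x i) - f xbar ≤
      (1 / A) * ∑ i ∈ Finset.range n, w i * (f' (x i) * (x i - xbar)) -
        (1 / A) * ∑ i ∈ Finset.range n, w i * Φ |xbar - x i| :=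
  stmt8_general a b f f' Φ huc n w x A xbar hA hApos hw hx hxbar
end

section
/- Let f : (a,b) → ℝ be differentiable and uniformly convex with modulus Φ : [0,b-a] → ℝ≥0. Let x₁,...,xₙ ∈ (a,b), a₁,...,aₙ ≥ 0 with Aₙ = ∑aᵢ > 0, x̄ = (1/Aₙ)∑aᵢxᵢ, and λᵢ ∈ [0,1]. Then (1/Aₙ)∑ aᵢ f(xᵢ) - (1/Aₙ)∑ aᵢ f((1-λᵢ)x̄ + λᵢxᵢ) ≤ (1/Aₙ)∑ aᵢ(1-λᵢ)f'(xᵢ)(xᵢ - x̄) - (1/Aₙ)∑ aᵢ Φ((1-λᵢ)|x̄ - xᵢ|). -/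
/-- converse Jensen-type inequality for uniformly convex functions, interpolated points. -/
theorem stmt9 (a b : ℝ) (hab : a < b) (f f' Φ : ℝ → ℝ)
    (hf : ∀ x ∈ Set.Ioo a b, HasDerivAt f (f' x) x)
    (hΦnn : ∀ t ∈ Set.Icc 0 (b - a), 0 ≤ Φ t)
    (huc : ∀ x ∈ Set.Ioo a b, ∀ y ∈ Set.Ioo a b,
      f y + f' y * (x - y) + Φ |x - y| ≤ f x)
    (n : ℕ) (hn : 0 < n) (w x : ℕ → ℝ) (A xbar : ℝ)
    (hA : A = ∑ i ∈ Finset.range n, w i) (hApos : 0 < A)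
    (hw : ∀ i < n, 0 ≤ w i)
    (hx : ∀ i < n, x i ∈ Set.Ioo a b)
    (hxbar : xbar = (1 / A) * ∑ i ∈ Finset.range n, w i * x i) :
    ∀ l : ℕ → ℝ, (∀ i < n, l i ∈ Set.Icc (0 : ℝ) 1) →
      (1 / A) * ∑ i ∈ Finset.range n, w i * f (x i) -
          (1 / A) * ∑ i ∈ Finset.range n, w i * f ((1 - l i) * xbar + l i * x i) ≤
        (1 / A) * ∑ i ∈ Finset.range n, w i * ((1 - l i) * f' (x i) * (x i - xbar)) -
          (1 / A) * ∑ i ∈ Finset.range n, w i * Φ ((1 - l i) * |xbar - x i|) := by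
  intro l hl
  -- xbar ∈ Ioo a b
  have hxbarmem : xbar ∈ Set.Ioo a b := by
    have hwi : ∃ j ∈ Finset.range n, 0 < w j := by
      by_contra h
      push_neg at h
      have : A ≤ 0 := by
        rw [hA]
        apply Finset.sum_nonpos
        intro i hi
        simp at h
        exact h i (Finset.mem_range.mp hi)
      linarith
    obtain ⟨j, hj, hjpos⟩ := hwi
    constructor
    · have h1 : A * a < ∑ i ∈ Finset.range n, w i * x i := by
        rw [hA, Finset.sum_mul]
        apply Finset.sum_lt_sum
        · intro i hi
          have := (hx i (Finset.mem_range.mp hi)).1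
          nlinarith [hw i (Finset.mem_range.mp hi)]
        · exact ⟨j, hj, by nlinarith [(hx j (Finset.mem_range.mp hj)).1]⟩
      rw [hxbar]
      calc a = (1 / A) * (A * a) := by field_simp
        _ < (1 / A) * ∑ i ∈ Finset.range n, w i * x i := by
            apply mul_lt_mul_of_pos_left h1 (by positivity)
    · have h1 : ∑ i ∈ Finset.range n, w i * x i < A * b := by
        rw [hA, Finset.sum_mul]
        apply Finset.sum_lt_sum
        · intro i hi
          have := (hx i (Finset.mem_range.mp hi)).2
          nlinarith [hw i (Finset.mem_range.mp hi)]
        · exact ⟨j, hj, by nlinarith [(hx j (Finset.mem_range.mp hj)).2]⟩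
      rw [hxbar]
      calc (1 / A) * ∑ i ∈ Finset.range n, w i * x i
          < (1 / A) * (A * b) := by apply mul_lt_mul_of_pos_left h1 (by positivity)
        _ = b := by field_simp
  -- key per-term inequality
  have key : ∀ i ∈ Finset.range n,
      w i * f (x i) - w i * f ((1 - l i) * xbar + l i * x i) ≤
      w i * ((1 - l i) * f' (x i) * (x i - xbar)) - w i * Φ ((1 - l i) * |xbar - x i|) := by
    intro i hi
    have hi' := Finset.mem_range.mp hi
    have hli := hl i hi'
    have hwi := hw i hi'
    have hxi := hx i hi'
    set y := (1 - l i) * xbar + l i * x i with hy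
    have hymem : y ∈ Set.Ioo a b := by
      rw [hy]
      rcases lt_or_ge (l i) 1 with h | h
      · constructor
        · nlinarith [mul_pos (by linarith : (0:ℝ) < 1 - l i) (by linarith [hxbarmem.1] : (0:ℝ) < xbar - a),
            mul_nonneg hli.1 (by linarith [hxi.1] : (0:ℝ) ≤ x i - a)]
        · nlinarith [mul_pos (by linarith : (0:ℝ) < 1 - l i) (by linarith [hxbarmem.2] : (0:ℝ) < b - xbar),
            mul_nonneg hli.1 (by linarith [hxi.2] : (0:ℝ) ≤ b - x i)]
      · have h1 : l i = 1 := le_antisymm hli.2 h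
        rw [h1]
        constructor
        · nlinarith [hxi.1]
        · nlinarith [hxi.2]
    have h1 := huc y hymem (x i) hxi
    have hdiff : y - x i = (1 - l i) * (xbar - x i) := by rw [hy]; ring
    have habs : |y - x i| = (1 - l i) * |xbar - x i| := by
      rw [hdiff, abs_mul, abs_of_nonneg (by linarith [hli.2])]
    rw [habs, hdiff] at h1
    nlinarith [h1, hwi]
  have hsum : (∑ i ∈ Finset.range n, w i * f (x i)) -
      (∑ i ∈ Finset.range n, w i * f ((1 - l i) * xbar + l i * x i)) ≤
      (∑ i ∈ Finset.range n, w i * ((1 - l i) * f' (x i) * (x i - xbar))) -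
      (∑ i ∈ Finset.range n, w i * Φ ((1 - l i) * |xbar - x i|)) := by
    rw [← Finset.sum_sub_distrib, ← Finset.sum_sub_distrib]
    exact Finset.sum_le_sum key
  have hApos' : (0:ℝ) < 1 / A := by positivity
  nlinarith [mul_le_mul_of_nonneg_left hsum (le_of_lt hApos')]
end

section
/- Let f : (a,b) → ℝ admit φ : (a,b) → ℝ such that f(u) + (x-u)φ(u) ≤ f(x) + Φ(|u-x|) for all x,u ∈ (a,b), with Φ : [0,b-a] → ℝ≥0 (Φ-convexity support inequality). Let x₁,...,xₙ ∈ (a,b), a₁,...,aₙ ≥ 0 with Aₙ = ∑aᵢ > 0, x̄ = (1/Aₙ)∑aᵢxᵢ. Then (1/Aₙ)∑ aᵢ f(xᵢ) - f(x̄) ≤ (1/Aₙ)∑ aᵢ φ(xᵢ)(xᵢ - x̄) + (1/Aₙ)∑ aᵢ Φ(|x̄ - xᵢ|). -/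
/-- converse Jensen-type inequality for Φ-convex functions. -/
theorem stmt11 (a b : ℝ) (hab : a < b) (f φ Φ : ℝ → ℝ)
    (hΦnn : ∀ t ∈ Set.Icc 0 (b - a), 0 ≤ Φ t)
    (hsupp : ∀ x ∈ Set.Ioo a b, ∀ u ∈ Set.Ioo a b,
      f u + (x - u) * φ u ≤ f x + Φ |u - x|)
    (n : ℕ) (hn : 0 < n) (w x : ℕ → ℝ) (A xbar : ℝ)
    (hA : A = ∑ i ∈ Finset.range n, w i) (hApos : 0 < A)
    (hw : ∀ i < n, 0 ≤ w i)
    (hx : ∀ i < n, x i ∈ Set.Ioo a b)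
    (hxbar : xbar = (1 / A) * ∑ i ∈ Finset.range n, w i * x i) :
    (1 / A) * ∑ i ∈ Finset.range n, w i * f (x i) - f xbar ≤
      (1 / A) * ∑ i ∈ Finset.range n, w i * (φ (x i) * (x i - xbar)) +
        (1 / A) * ∑ i ∈ Finset.range n, w i * Φ |xbar - x i| := by
  -- some weight is positive
  obtain ⟨j, hj, hwj⟩ : ∃ j ∈ Finset.range n, 0 < w j := by
    by_contra h
    push_neg at h
    have : A ≤ 0 := by
      rw [hA]
      apply Finset.sum_nonpos
      intro i hi
      exact h i hi
    linarith
  -- xbar ∈ Ioo a b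
  have hxbarmem : xbar ∈ Set.Ioo a b := by
    have hlt : ∑ i ∈ Finset.range n, w i * a < ∑ i ∈ Finset.range n, w i * x i := by
      apply Finset.sum_lt_sum
      · intro i hi
        have := (hx i (Finset.mem_range.mp hi)).1
        nlinarith [hw i (Finset.mem_range.mp hi)]
      · exact ⟨j, hj, by nlinarith [(hx j (Finset.mem_range.mp hj)).1]⟩
    have hlt2 : ∑ i ∈ Finset.range n, w i * x i < ∑ i ∈ Finset.range n, w i * b := by
      apply Finset.sum_lt_sum
      · intro i hi
        have := (hx i (Finset.mem_range.mp hi)).2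
        nlinarith [hw i (Finset.mem_range.mp hi)]
      · exact ⟨j, hj, by nlinarith [(hx j (Finset.mem_range.mp hj)).2]⟩
    have hsa : ∑ i ∈ Finset.range n, w i * a = A * a := by
      rw [hA, Finset.sum_mul]
    have hsb : ∑ i ∈ Finset.range n, w i * b = A * b := by
      rw [hA, Finset.sum_mul]
    constructor
    · rw [hxbar, one_div, mul_comm, ← div_eq_mul_inv, lt_div_iff₀ hApos]
      rw [hsa] at hlt; linarith
    · rw [hxbar, one_div, mul_comm, ← div_eq_mul_inv, div_lt_iff₀ hApos]
      rw [hsb] at hlt2; linarith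
  -- pointwise inequality, weighted
  have key : ∀ i ∈ Finset.range n,
      w i * f (x i) ≤ w i * f xbar + w i * (φ (x i) * (x i - xbar)) + w i * Φ |xbar - x i| := by
    intro i hi
    have hin := Finset.mem_range.mp hi
    have h := hsupp xbar hxbarmem (x i) (hx i hin)
    rw [abs_sub_comm] at h
    have hwi := hw i hin
    nlinarith [h]
  have hsum : ∑ i ∈ Finset.range n, w i * f (x i) ≤
      ∑ i ∈ Finset.range n, (w i * f xbar + w i * (φ (x i) * (x i - xbar)) + w i * Φ |xbar - x i|) :=
    Finset.sum_le_sum key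
  rw [Finset.sum_add_distrib, Finset.sum_add_distrib, ← Finset.sum_mul] at hsum
  have hAf : (∑ i ∈ Finset.range n, w i) * f xbar = A * f xbar := by rw [hA]
  rw [hAf] at hsum
  have h1A : 0 < 1 / A := by positivity
  have := mul_le_mul_of_nonneg_left hsum (le_of_lt h1A)
  have hAA : (1 / A) * (A * f xbar) = f xbar := by field_simp
  rw [mul_add, mul_add, hAA] at this
  linarith
end

section
/- Let f be superquadratic on [0,∞) with subgradient function C. Let x₁,...,xₙ ≥ 0, a₁,...,aₙ ≥ 0 with Aₙ = ∑aᵢ > 0, x̄ = (1/Aₙ)∑aᵢxᵢ. Then (1/Aₙ)∑ aᵢ f(xᵢ) - f(x̄) ≤ (1/Aₙ)∑ aᵢ C(xᵢ)(xᵢ - x̄) - (1/Aₙ)∑ aᵢ f(|x̄ - xᵢ|). -/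
open Finset

theorem sum_mul_le_of_superquadratic {ι : Type*} (s : Finset ι) (f C : ℝ → ℝ)
    (hsq : ∀ x, 0 ≤ x → ∀ y, 0 ≤ y → f x + C x * (y - x) + f |y - x| ≤ f y)
    (w x : ι → ℝ) (hw : ∀ i ∈ s, 0 ≤ w i) (hx : ∀ i ∈ s, 0 ≤ x i) {y : ℝ} (hy : 0 ≤ y) :
    ∑ i ∈ s, w i * f (x i) - (∑ i ∈ s, w i) * f y ≤
      ∑ i ∈ s, w i * (C (x i) * (x i - y)) - ∑ i ∈ s, w i * f |y - x i| := by
  have hsum : ∑ i ∈ s, w i * (f (x i) + C (x i) * (y - x i) + f |y - x i|) ≤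
      ∑ i ∈ s, w i * f y :=
    sum_le_sum fun i hi => mul_le_mul_of_nonneg_left (hsq _ (hx i hi) y hy) (hw i hi)
  have hexpand : ∑ i ∈ s, w i * (f (x i) + C (x i) * (y - x i) + f |y - x i|) =
      ∑ i ∈ s, w i * f (x i) - ∑ i ∈ s, w i * (C (x i) * (x i - y)) +
        ∑ i ∈ s, w i * f |y - x i| := by
    rw [← sum_sub_distrib, ← sum_add_distrib]
    exact sum_congr rfl fun i _ => by ring
  rw [hexpand, ← sum_mul] at hsum
  linarith

theorem stmt13_general (f C : ℝ → ℝ)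
    (hsq : ∀ x, 0 ≤ x → ∀ y, 0 ≤ y → f x + C x * (y - x) + f |y - x| ≤ f y)
    (n : ℕ) (w x : ℕ → ℝ) (A xbar : ℝ)
    (hA : A = ∑ i ∈ Finset.range n, w i) (hApos : 0 < A)
    (hw : ∀ i < n, 0 ≤ w i)
    (hx : ∀ i < n, 0 ≤ x i)
    (hxbar : xbar = (1 / A) * ∑ i ∈ Finset.range n, w i * x i) :
    (1 / A) * ∑ i ∈ Finset.range n, w i * f (x i) - f xbar ≤
      (1 / A) * ∑ i ∈ Finset.range n, w i * (C (x i) * (x i - xbar)) -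
        (1 / A) * ∑ i ∈ Finset.range n, w i * f |xbar - x i| := by
  have hw' : ∀ i ∈ range n, 0 ≤ w i := fun i hi => hw i (mem_range.mp hi)
  have hx' : ∀ i ∈ range n, 0 ≤ x i := fun i hi => hx i (mem_range.mp hi)
  have hxbar_nonneg : 0 ≤ xbar := by
    rw [hxbar]
    exact mul_nonneg (by positivity) (sum_nonneg fun i hi => mul_nonneg (hw' i hi) (hx' i hi))
  have key := mul_le_mul_of_nonneg_left
    (sum_mul_le_of_superquadratic _ f C hsq w x hw' hx' hxbar_nonneg) (one_div_nonneg.mpr hApos.le)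
  rw [← hA, mul_sub, mul_sub, ← mul_assoc, one_div_mul_cancel hApos.ne', one_mul] at key
  exact key

/-- converse Jensen-type inequality for superquadratic functions. -/
theorem stmt13 (f C : ℝ → ℝ)
    (hsq : ∀ x, 0 ≤ x → ∀ y, 0 ≤ y → f x + C x * (y - x) + f |y - x| ≤ f y)
    (n : ℕ) (hn : 0 < n) (w x : ℕ → ℝ) (A xbar : ℝ)
    (hA : A = ∑ i ∈ Finset.range n, w i) (hApos : 0 < A)
    (hw : ∀ i < n, 0 ≤ w i)
    (hx : ∀ i < n, 0 ≤ x i)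
    (hxbar : xbar = (1 / A) * ∑ i ∈ Finset.range n, w i * x i) :
    (1 / A) * ∑ i ∈ Finset.range n, w i * f (x i) - f xbar ≤
      (1 / A) * ∑ i ∈ Finset.range n, w i * (C (x i) * (x i - xbar)) -
        (1 / A) * ∑ i ∈ Finset.range n, w i * f |xbar - x i| :=
  stmt13_general f C hsq n w x A xbar hA hApos hw hx hxbar
end

section
/- Let f be superquadratic on [0,∞) with subgradient C. Let x₁,...,xₙ ≥ 0, a₁,...,aₙ ≥ 0 with Aₙ = ∑aᵢ > 0, x̄ = (1/Aₙ)∑aᵢxᵢ, λᵢ ∈ [0,1], x̂ᵢ = (1-λᵢ)x̄ + λᵢxᵢ. Then (1/Aₙ)∑ aᵢ f(xᵢ) - (1/Aₙ)∑ aᵢ f(x̂ᵢ) ≤ (1/Aₙ)∑ aᵢ(1-λᵢ)C(xᵢ)(xᵢ - x̄) - (1/Aₙ)∑ aᵢ f((1-λᵢ)|x̄ - xᵢ|). -/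
/-! The superquadratic inequality at the base point `xᵢ`, evaluated at `x̂ᵢ ≥ 0`, bounds each term
`f xᵢ - f x̂ᵢ`, because `x̂ᵢ - xᵢ = (1 - λᵢ)(x̄ - xᵢ)`; averaging with the weights `aᵢ` gives the
theorem. -/

def SuperquadraticWith (f C : ℝ → ℝ) : Prop :=
  ∀ x, 0 ≤ x → ∀ y, 0 ≤ y → f x + C x * (y - x) + f |y - x| ≤ f y

theorem SuperquadraticWith.sub_le_of_interpolation {f C : ℝ → ℝ} (hf : SuperquadraticWith f C)
    {m x t : ℝ} (hm : 0 ≤ m) (hx : 0 ≤ x) (ht : t ∈ Set.Icc (0 : ℝ) 1) :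
    f x - f ((1 - t) * m + t * x) ≤ (1 - t) * C x * (x - m) - f ((1 - t) * |m - x|) := by
  obtain ⟨ht0, ht1⟩ := ht
  have hy : 0 ≤ (1 - t) * m + t * x := by
    have := mul_nonneg (sub_nonneg.mpr ht1) hm
    nlinarith [mul_nonneg ht0 hx]
  have hdiff : (1 - t) * m + t * x - x = (1 - t) * (m - x) := by ring
  have key := hf x hx _ hy
  rw [hdiff, abs_mul, abs_of_nonneg (sub_nonneg.mpr ht1)] at key
  nlinarith [key]

theorem stmt14_general (f C : ℝ → ℝ)
    (hsq : ∀ x, 0 ≤ x → ∀ y, 0 ≤ y → f x + C x * (y - x) + f |y - x| ≤ f y)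
    (n : ℕ) (w x : ℕ → ℝ) (A xbar : ℝ)
    (hApos : 0 < A)
    (hw : ∀ i < n, 0 ≤ w i)
    (hx : ∀ i < n, 0 ≤ x i)
    (hxbar : xbar = (1 / A) * ∑ i ∈ Finset.range n, w i * x i)
    (l xh : ℕ → ℝ) (hl : ∀ i < n, l i ∈ Set.Icc (0 : ℝ) 1)
    (hxh : ∀ i, xh i = (1 - l i) * xbar + l i * x i) :
    (1 / A) * ∑ i ∈ Finset.range n, w i * f (x i) -
        (1 / A) * ∑ i ∈ Finset.range n, w i * f (xh i) ≤
      (1 / A) * ∑ i ∈ Finset.range n, w i * ((1 - l i) * C (x i) * (x i - xbar)) -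
        (1 / A) * ∑ i ∈ Finset.range n, w i * f ((1 - l i) * |xbar - x i|) := by
  have hxbar0 : 0 ≤ xbar := by
    rw [hxbar]
    refine mul_nonneg (by positivity) (Finset.sum_nonneg fun i hi => ?_)
    rw [Finset.mem_range] at hi
    exact mul_nonneg (hw i hi) (hx i hi)
  simp only [← mul_sub, ← Finset.sum_sub_distrib]
  refine mul_le_mul_of_nonneg_left (Finset.sum_le_sum fun i hi => ?_) (by positivity)
  rw [Finset.mem_range] at hi
  rw [hxh i]
  exact mul_le_mul_of_nonneg_left
    (SuperquadraticWith.sub_le_of_interpolation hsq hxbar0 (hx i hi) (hl i hi)) (hw i hi)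

/-- converse Jensen-type inequality for superquadratic functions, interpolated points. -/
theorem stmt14 (f C : ℝ → ℝ)
    (hsq : ∀ x, 0 ≤ x → ∀ y, 0 ≤ y → f x + C x * (y - x) + f |y - x| ≤ f y)
    (n : ℕ) (hn : 0 < n) (w x : ℕ → ℝ) (A xbar : ℝ)
    (hA : A = ∑ i ∈ Finset.range n, w i) (hApos : 0 < A)
    (hw : ∀ i < n, 0 ≤ w i)
    (hx : ∀ i < n, 0 ≤ x i)
    (hxbar : xbar = (1 / A) * ∑ i ∈ Finset.range n, w i * x i)
    (l xh : ℕ → ℝ) (hl : ∀ i < n, l i ∈ Set.Icc (0 : ℝ) 1)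
    (hxh : ∀ i, xh i = (1 - l i) * xbar + l i * x i) :
    (1 / A) * ∑ i ∈ Finset.range n, w i * f (x i) -
        (1 / A) * ∑ i ∈ Finset.range n, w i * f (xh i) ≤
      (1 / A) * ∑ i ∈ Finset.range n, w i * ((1 - l i) * C (x i) * (x i - xbar)) -
        (1 / A) * ∑ i ∈ Finset.range n, w i * f ((1 - l i) * |xbar - x i|) :=
  stmt14_general f C hsq n w x A xbar hApos hw hx hxbar l xh hl hxh
end

section
/- (Jensen–Steffensen refinement for superquadratic functions with superadditive derivative) Let f be continuously differentiable on [0,b), f(0) ≤ 0, and f' superadditive (f'(x+y) ≥ f'(x) + f'(y)). Let a₁,...,aₙ satisfy the Jensen–Steffensen conditions and 0 ≤ x₁ ≤ ... ≤ xₙ < b, x̄ = (1/Aₙ)∑aᵢxᵢ. Then (1/Aₙ)∑ aᵢ f(xᵢ) ≥ f(x̄) + (1/Aₙ)∑ aᵢ f(|xᵢ - x̄|). -/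
/-!
Fix z = x̄ and put H(t) = f t - f |t - z| - f'(z) t. Superadditivity of f' makes H' ≤ 0 on
[0, z] (there H' = f' t + f' (z - t) - f' z) and H' ≥ 0 on [z, b) (there
H' = f' t - f' (t - z) - f' z), so H is V-shaped with vertex z. For Jensen–Steffensen weights and
increasing xᵢ, splitting H(xᵢ) - H(z) into the contributions of min(xᵢ, z) and max(xᵢ, z) and
summing each by parts (against the partial sums Wⱼ ≥ 0, resp. the tails Aₙ - Wⱼ ≥ 0) gives
∑ aᵢ H(xᵢ) ≥ Aₙ H(z). Since ∑ aᵢ xᵢ = Aₙ z the linear terms cancel, and f(0) ≤ 0 finishes.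
The same summation by parts puts x̄ in [x₁, xₙ] ⊆ [0, b).
-/

open Finset

theorem sum_mul_nonneg_of_antitoneOn {w a : ℕ → ℝ} {n : ℕ}
    (hw : ∀ j ≤ n, 0 ≤ ∑ i ∈ range j, w i) (ha : AntitoneOn a (Set.Iio n))
    (hlast : 0 ≤ a (n - 1)) :
    0 ≤ ∑ i ∈ range n, w i * a i := by
  have hparts := sum_range_by_parts a w n
  simp only [smul_eq_mul] at hparts
  have hterm : ∀ i ∈ range (n - 1), (a (i + 1) - a i) * ∑ k ∈ range (i + 1), w k ≤ 0 := by
    intro i hi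
    have hi : i + 1 < n := by rw [mem_range] at hi; omega
    exact mul_nonpos_of_nonpos_of_nonneg
      (sub_nonpos.2 (ha (Set.mem_Iio.2 (by omega)) (Set.mem_Iio.2 hi) (by omega))) (hw _ hi.le)
  rw [sum_congr rfl fun i _ => mul_comm (w i) (a i), hparts]
  linarith [sum_nonpos hterm, mul_nonneg hlast (hw n le_rfl)]

theorem sum_mul_nonneg_of_monotoneOn {w a : ℕ → ℝ} {n : ℕ}
    (hw : ∀ j ≤ n, ∑ i ∈ range j, w i ≤ ∑ i ∈ range n, w i) (ha : MonotoneOn a (Set.Iio n))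
    (hfirst : 0 ≤ a 0) :
    0 ≤ ∑ i ∈ range n, w i * a i := by
  have hparts := sum_range_by_parts a w n
  simp only [smul_eq_mul] at hparts
  have hterm : ∀ i ∈ range (n - 1), (a (i + 1) - a i) * ∑ k ∈ range (i + 1), w k ≤
      (a (i + 1) - a i) * ∑ k ∈ range n, w k := by
    intro i hi
    have hi : i + 1 < n := by rw [mem_range] at hi; omega
    exact mul_le_mul_of_nonneg_left (hw _ hi.le)
      (sub_nonneg.2 (ha (Set.mem_Iio.2 (by omega)) (Set.mem_Iio.2 hi) (by omega)))
  have htel : ∑ i ∈ range (n - 1), (a (i + 1) - a i) * ∑ k ∈ range n, w k =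
      (a (n - 1) - a 0) * ∑ k ∈ range n, w k := by
    rw [← sum_mul, sum_range_sub]
  rw [sum_congr rfl fun i _ => mul_comm (w i) (a i), hparts]
  have hW : 0 ≤ ∑ k ∈ range n, w k := by simpa using hw 0 n.zero_le
  linarith [sum_le_sum hterm, mul_nonneg hfirst hW]

theorem sum_mul_le_sum_mul_of_antitoneOn_of_monotoneOn {w x : ℕ → ℝ} {n : ℕ} {φ : ℝ → ℝ}
    {s : Set ℝ} {z : ℝ}
    (hw : ∀ j ≤ n, 0 ≤ ∑ i ∈ range j, w i ∧ ∑ i ∈ range j, w i ≤ ∑ i ∈ range n, w i)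
    (hx : MonotoneOn x (Set.Iio n)) (hxs : ∀ i < n, x i ∈ s) (hz : z ∈ s)
    (hl : AntitoneOn φ (s ∩ Set.Iic z)) (hr : MonotoneOn φ (s ∩ Set.Ici z)) :
    (∑ i ∈ range n, w i) * φ z ≤ ∑ i ∈ range n, w i * φ (x i) := by
  rcases Nat.eq_zero_or_pos n with rfl | hn
  · simp
  have hmin : ∀ i < n, min (x i) z ∈ s ∩ Set.Iic z := fun i hi =>
    ⟨min_rec' (· ∈ s) (hxs i hi) hz, Set.mem_Iic.2 (min_le_right _ _)⟩
  have hmax : ∀ i < n, max (x i) z ∈ s ∩ Set.Ici z := fun i hi =>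
    ⟨max_rec' (· ∈ s) (hxs i hi) hz, Set.mem_Ici.2 (le_max_right _ _)⟩
  have hz_left : z ∈ s ∩ Set.Iic z := ⟨hz, Set.self_mem_Iic⟩
  have hz_right : z ∈ s ∩ Set.Ici z := ⟨hz, Set.self_mem_Ici⟩
  have hlow : 0 ≤ ∑ i ∈ range n, w i * (φ (min (x i) z) - φ z) := by
    refine sum_mul_nonneg_of_antitoneOn (fun j hj => (hw j hj).1) ?_ ?_
    · intro i hi j hj hij
      exact sub_le_sub_right (hl (hmin i hi) (hmin j hj) (min_le_min_right z (hx hi hj hij))) _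
    · exact sub_nonneg.2 (hl (hmin _ (by omega)) hz_left (min_le_right _ _))
  have hhigh : 0 ≤ ∑ i ∈ range n, w i * (φ (max (x i) z) - φ z) := by
    refine sum_mul_nonneg_of_monotoneOn (fun j hj => (hw j hj).2) ?_ ?_
    · intro i hi j hj hij
      exact sub_le_sub_right (hr (hmax i hi) (hmax j hj) (max_le_max_right z (hx hi hj hij))) _
    · exact sub_nonneg.2 (hr hz_right (hmax 0 hn) (le_max_right _ _))
  have hsplit : ∀ i ∈ range n, w i * (φ (min (x i) z) - φ z) + w i * (φ (max (x i) z) - φ z) =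
      w i * φ (x i) - w i * φ z := by
    intro i _
    rcases le_total (x i) z with h | h <;> simp [h] <;> ring
  have htotal := add_nonneg hlow hhigh
  rw [← sum_add_distrib, sum_congr rfl hsplit, sum_sub_distrib, ← sum_mul] at htotal
  linarith

theorem sum_mul_mem_Icc_of_monotoneOn {w x : ℕ → ℝ} {n : ℕ}
    (hw : ∀ j ≤ n, 0 ≤ ∑ i ∈ range j, w i ∧ ∑ i ∈ range j, w i ≤ ∑ i ∈ range n, w i)
    (hx : MonotoneOn x (Set.Iio n)) :
    ∑ i ∈ range n, w i * x i ∈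
      Set.Icc ((∑ i ∈ range n, w i) * x 0) ((∑ i ∈ range n, w i) * x (n - 1)) := by
  constructor
  · have := sum_mul_nonneg_of_monotoneOn (a := fun i => x i - x 0) (fun j hj => (hw j hj).2)
      (fun i hi j hj hij => sub_le_sub_right (hx hi hj hij) _) (sub_self _).ge
    simpa [mul_sub, sum_sub_distrib, ← sum_mul] using this
  · have := sum_mul_nonneg_of_antitoneOn (a := fun i => x (n - 1) - x i) (fun j hj => (hw j hj).1)
      (fun i hi j hj hij => sub_le_sub_left (hx hi hj hij) _) (sub_self _).ge
    simpa [mul_sub, sum_sub_distrib, ← sum_mul] using this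

section SuperadditiveDeriv

variable {f f' : ℝ → ℝ} {b z : ℝ}

theorem antitoneOn_Icc_of_superadditive_deriv (hf : ∀ x ∈ Set.Ico 0 b, HasDerivAt f (f' x) x)
    (hsup : ∀ u v, 0 ≤ u → 0 ≤ v → u + v < b → f' u + f' v ≤ f' (u + v)) (hzb : z < b) :
    AntitoneOn (fun t => f t - f |t - z| - f' z * t) (Set.Icc 0 z) := by
  have hderiv : ∀ t ∈ Set.Icc 0 z,
      HasDerivAt (fun t => f t - f (z - t) - f' z * t) (f' t + f' (z - t) - f' z) t := by
    intro t ht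
    have h1 := hf t ⟨ht.1, by linarith [ht.2]⟩
    have h2 := (hf (z - t) ⟨by linarith [ht.2], by linarith [ht.1]⟩).comp_const_sub z t
    simpa using (h1.fun_sub h2).fun_sub ((hasDerivAt_id' t).const_mul (f' z))
  refine (antitoneOn_of_hasDerivWithinAt_nonpos (convex_Icc 0 z)
    (fun t ht => (hderiv t ht).continuousAt.continuousWithinAt)
    (fun t ht => (hderiv t (interior_subset ht)).hasDerivWithinAt) ?_).congr ?_
  · rw [interior_Icc]
    intro t ht
    have := hsup t (z - t) ht.1.le (by linarith [ht.2]) (by linarith)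
    rw [add_sub_cancel] at this
    linarith
  · intro t ht
    simp [abs_of_nonpos (sub_nonpos.2 ht.2)]

theorem monotoneOn_Ico_of_superadditive_deriv (hf : ∀ x ∈ Set.Ico 0 b, HasDerivAt f (f' x) x)
    (hsup : ∀ u v, 0 ≤ u → 0 ≤ v → u + v < b → f' u + f' v ≤ f' (u + v)) (hz0 : 0 ≤ z) :
    MonotoneOn (fun t => f t - f |t - z| - f' z * t) (Set.Ico z b) := by
  have hderiv : ∀ t ∈ Set.Ico z b,
      HasDerivAt (fun t => f t - f (t - z) - f' z * t) (f' t - f' (t - z) - f' z) t := by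
    intro t ht
    have h1 := hf t ⟨hz0.trans ht.1, ht.2⟩
    have h2 := (hf (t - z) ⟨by linarith [ht.1], by linarith [ht.2]⟩).comp_sub_const t z
    simpa using (h1.fun_sub h2).fun_sub ((hasDerivAt_id' t).const_mul (f' z))
  refine (monotoneOn_of_hasDerivWithinAt_nonneg (convex_Ico z b)
    (fun t ht => (hderiv t ht).continuousAt.continuousWithinAt)
    (fun t ht => (hderiv t (interior_subset ht)).hasDerivWithinAt) ?_).congr ?_
  · rw [interior_Ico]
    intro t ht
    have := hsup (t - z) z (by linarith [ht.1]) hz0 (by linarith [ht.2])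
    rw [sub_add_cancel] at this
    linarith
  · intro t ht
    simp [abs_of_nonneg (sub_nonneg.2 ht.1)]

end SuperadditiveDeriv

theorem stmt15_general (b : ℝ) (f f' : ℝ → ℝ)
    (hf : ∀ x ∈ Set.Ico (0 : ℝ) b, HasDerivAt f (f' x) x)
    (hsup : ∀ u v, 0 ≤ u → 0 ≤ v → u + v < b → f' u + f' v ≤ f' (u + v))
    (n : ℕ) (w x : ℕ → ℝ) (A xbar : ℝ)
    (hA : A = ∑ i ∈ Finset.range n, w i) (hApos : 0 < A)
    (hJS : ∀ j ≤ n, 0 ≤ ∑ i ∈ Finset.range j, w i ∧ ∑ i ∈ Finset.range j, w i ≤ A)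
    (hx : ∀ i < n, x i ∈ Set.Ico (0 : ℝ) b)
    (hmono : ∀ i j, i ≤ j → j < n → x i ≤ x j)
    (hxbar : xbar = (1 / A) * ∑ i ∈ Finset.range n, w i * x i)
    (hf0 : f 0 ≤ 0) :
    f xbar + (1 / A) * ∑ i ∈ Finset.range n, w i * f |x i - xbar| ≤
      (1 / A) * ∑ i ∈ Finset.range n, w i * f (x i) := by
  have hw : ∀ j ≤ n, 0 ≤ ∑ i ∈ range j, w i ∧ ∑ i ∈ range j, w i ≤ ∑ i ∈ range n, w i :=
    hA ▸ hJS
  have hn : 0 < n := Nat.pos_of_ne_zero fun h => by simp [hA, h] at hApos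
  have hxm : MonotoneOn x (Set.Iio n) := fun i hi j hj hij => hmono i j hij hj
  have hmean : ∑ i ∈ range n, w i * x i = A * xbar := by
    rw [hxbar]; field_simp
  obtain ⟨hlo, hhi⟩ := sum_mul_mem_Icc_of_monotoneOn hw hxm
  rw [← hA, hmean] at hlo hhi
  have hxbar_mem : xbar ∈ Set.Ico 0 b :=
    ⟨(hx 0 hn).1.trans (le_of_mul_le_mul_left hlo hApos),
      (le_of_mul_le_mul_left hhi hApos).trans_lt (hx (n - 1) (Nat.sub_one_lt_of_lt hn)).2⟩
  have key := sum_mul_le_sum_mul_of_antitoneOn_of_monotoneOn hw hxm hx hxbar_mem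
    ((antitoneOn_Icc_of_superadditive_deriv hf hsup hxbar_mem.2).mono fun t ht => ⟨ht.1.1, ht.2⟩)
    ((monotoneOn_Ico_of_superadditive_deriv hf hsup hxbar_mem.1).mono fun t ht => ⟨ht.2, ht.1.2⟩)
  simp only [← hA, mul_sub, sum_sub_distrib, mul_left_comm _ (f' xbar), ← mul_sum, hmean,
    sub_self, abs_zero] at key
  have hmul : A * f xbar + ∑ i ∈ range n, w i * f |x i - xbar| ≤
      ∑ i ∈ range n, w i * f (x i) := by
    linarith [mul_nonpos_of_nonneg_of_nonpos hApos.le hf0]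
  calc f xbar + 1 / A * ∑ i ∈ range n, w i * f |x i - xbar|
      = 1 / A * (A * f xbar + ∑ i ∈ range n, w i * f |x i - xbar|) := by field_simp
    _ ≤ 1 / A * ∑ i ∈ range n, w i * f (x i) := by gcongr

/-- refined Jensen–Steffensen inequality for superquadratic functions with superadditive derivative. -/
theorem stmt15 (b : ℝ) (hb : 0 < b) (f f' : ℝ → ℝ)
    (hf : ∀ x ∈ Set.Ico (0 : ℝ) b, HasDerivAt f (f' x) x)
    (hf'c : ContinuousOn f' (Set.Ico (0 : ℝ) b))
    (hsup : ∀ u v, 0 ≤ u → 0 ≤ v → u + v < b → f' u + f' v ≤ f' (u + v))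
    (n : ℕ) (hn : 0 < n) (w x : ℕ → ℝ) (A xbar : ℝ)
    (hA : A = ∑ i ∈ Finset.range n, w i) (hApos : 0 < A)
    (hJS : ∀ j ≤ n, 0 ≤ ∑ i ∈ Finset.range j, w i ∧ ∑ i ∈ Finset.range j, w i ≤ A)
    (hx : ∀ i < n, x i ∈ Set.Ico (0 : ℝ) b)
    (hmono : ∀ i j, i ≤ j → j < n → x i ≤ x j)
    (hxbar : xbar = (1 / A) * ∑ i ∈ Finset.range n, w i * x i)
    (hf0 : f 0 ≤ 0) :
    f xbar + (1 / A) * ∑ i ∈ Finset.range n, w i * f |x i - xbar| ≤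
      (1 / A) * ∑ i ∈ Finset.range n, w i * f (x i) :=
  stmt15_general b f f' hf hsup n w x A xbar hA hApos hJS hx hmono hxbar hf0
end

section
/- Let f be continuously differentiable on [0,b) with f' superadditive, and let a₁,...,aₙ satisfy the Jensen–Steffensen conditions, 0 ≤ x₁ ≤ ... ≤ xₙ < b, x̄ = (1/Aₙ)∑aᵢxᵢ. Then for every c ∈ [0,b): f(c) - f(0) + f'(c)(x̄ - c) + (1/Aₙ)∑ aᵢ f(|xᵢ - c|) ≤ (1/Aₙ)∑ aᵢ f(xᵢ). -/
/-- Left part: Abel-type positivity with nonnegative forward partial sums and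
antitone values ending nonnegative. -/
lemma stmt16_lemL (w φ : ℕ → ℝ) (k : ℕ)
    (hS : ∀ j ≤ k, 0 ≤ ∑ i ∈ Finset.range j, w i)
    (hφ : ∀ i, i + 1 < k → φ (i + 1) ≤ φ i)
    (hlast : k = 0 ∨ 0 ≤ φ (k - 1)) :
    0 ≤ ∑ i ∈ Finset.range k, w i * φ i := by
  rcases Nat.eq_zero_or_pos k with hk | hk
  · simp [hk]
  have key : ∀ m, 1 ≤ m → m ≤ k →
      (∑ i ∈ Finset.range m, w i) * φ (m - 1) ≤ ∑ i ∈ Finset.range m, w i * φ i := by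
    intro m
    induction m with
    | zero => omega
    | succ m ih =>
      intro _ hmk
      rcases Nat.eq_zero_or_pos m with rfl | hm
      · simp
      have h1 := ih hm (by omega)
      have hSm := hS m (by omega)
      have hφm : φ m ≤ φ (m - 1) := by
        have := hφ (m - 1) (by omega)
        have hm1 : m - 1 + 1 = m := by omega
        rwa [hm1] at this
      rw [Finset.sum_range_succ, Finset.sum_range_succ]
      have hm1 : m + 1 - 1 = m := by omega
      rw [hm1]
      nlinarith [h1, hSm, hφm]
  have h1 := key k hk le_rfl
  have h2 := hS k le_rfl
  have h3 : 0 ≤ φ (k - 1) := hlast.resolve_left (by omega)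
  nlinarith [h1, h2, h3]

/-- Right part: Abel-type positivity with nonnegative backward partial sums and
monotone values starting nonnegative. -/
lemma stmt16_lemR (w φ : ℕ → ℝ) (k n : ℕ) (hkn : k ≤ n)
    (hT : ∀ j, k ≤ j → j ≤ n → 0 ≤ ∑ i ∈ Finset.Ico j n, w i)
    (hφ : ∀ i, k ≤ i → i + 1 < n → φ i ≤ φ (i + 1))
    (hfirst : k = n ∨ 0 ≤ φ k) :
    0 ≤ ∑ i ∈ Finset.Ico k n, w i * φ i := by
  rcases eq_or_lt_of_le hkn with hk | hk
  · simp [hk]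
  have key : ∀ d m, k ≤ m → m < n → n = m + d + 1 →
      (∑ i ∈ Finset.Ico m n, w i) * φ m ≤ ∑ i ∈ Finset.Ico m n, w i * φ i := by
    intro d
    induction d with
    | zero =>
      intro m _ _ hnm
      subst hnm
      rw [Finset.sum_Ico_eq_sum_range, Finset.sum_Ico_eq_sum_range]
      simp
    | succ d ih =>
      intro m hkm hmn hnm
      have hm1 : m + 1 < n := by omega
      have h1 := ih (m + 1) (by omega) hm1 (by omega)
      rw [Finset.sum_eq_sum_Ico_succ_bot hmn, Finset.sum_eq_sum_Ico_succ_bot hmn]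
      have hT1 := hT (m + 1) (by omega) (by omega)
      have hφ1 := hφ m hkm hm1
      nlinarith [h1, hT1, hφ1]
  have h1 := key (n - k - 1) k le_rfl hk (by omega)
  have h2 := hT k le_rfl hkn
  have h3 : 0 ≤ φ k := hfirst.resolve_left (by omega)
  nlinarith [h1, h2, h3]

/-- Jensen–Steffensen type inequality for functions with superadditive derivative. -/
theorem stmt16 (b : ℝ) (hb : 0 < b) (f f' : ℝ → ℝ)
    (hf : ∀ x ∈ Set.Ico (0 : ℝ) b, HasDerivAt f (f' x) x)
    (hf'c : ContinuousOn f' (Set.Ico (0 : ℝ) b))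
    (hsup : ∀ u v, 0 ≤ u → 0 ≤ v → u + v < b → f' u + f' v ≤ f' (u + v))
    (n : ℕ) (hn : 0 < n) (w x : ℕ → ℝ) (A xbar : ℝ)
    (hA : A = ∑ i ∈ Finset.range n, w i) (hApos : 0 < A)
    (hJS : ∀ j ≤ n, 0 ≤ ∑ i ∈ Finset.range j, w i ∧ ∑ i ∈ Finset.range j, w i ≤ A)
    (hx : ∀ i < n, x i ∈ Set.Ico (0 : ℝ) b)
    (hmono : ∀ i j, i ≤ j → j < n → x i ≤ x j)
    (hxbar : xbar = (1 / A) * ∑ i ∈ Finset.range n, w i * x i) :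
    ∀ c ∈ Set.Ico (0 : ℝ) b,
      f c - f 0 + f' c * (xbar - c) + (1 / A) * ∑ i ∈ Finset.range n, w i * f |x i - c| ≤
        (1 / A) * ∑ i ∈ Finset.range n, w i * f (x i) := by
  intro c hc
  obtain ⟨hc0, hcb⟩ := hc
  set h : ℝ → ℝ := fun t => f t - f |t - c| - f' c * t with hh
  have hcontf : ContinuousOn f (Set.Ico 0 b) :=
    fun t ht => (hf t ht).continuousAt.continuousWithinAt
  -- antitone on [0, c]
  have hmono1 : ∀ s t, 0 ≤ s → s ≤ t → t ≤ c → h t ≤ h s := by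
    intro s t hs hst htc
    set h₁ : ℝ → ℝ := fun r => f r - f (c - r) - f' c * r with hh₁
    have hsub : Set.Icc (0 : ℝ) c ⊆ Set.Ico 0 b := by
      intro r hr; exact ⟨hr.1, lt_of_le_of_lt hr.2 hcb⟩
    have hmap : ∀ r ∈ Set.Icc (0 : ℝ) c, c - r ∈ Set.Icc (0 : ℝ) c := by
      intro r hr; constructor <;> [linarith [hr.2]; linarith [hr.1]]
    have hcont1 : ContinuousOn h₁ (Set.Icc 0 c) := by
      apply ContinuousOn.sub
      apply ContinuousOn.sub
      · exact hcontf.mono hsub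
      · exact (hcontf.mono hsub).comp (continuousOn_const.sub continuousOn_id)
          hmap
      · exact continuousOn_const.mul continuousOn_id
    have hderiv : ∀ r ∈ interior (Set.Icc (0 : ℝ) c),
        HasDerivAt h₁ (f' r + f' (c - r) - f' c) r := by
      intro r hr
      rw [interior_Icc] at hr
      obtain ⟨hr0, hrc⟩ := hr
      have hrmem : r ∈ Set.Ico (0 : ℝ) b := ⟨le_of_lt hr0, lt_trans hrc hcb⟩
      have hcrmem : c - r ∈ Set.Ico (0 : ℝ) b := ⟨by linarith, by linarith⟩
      have h1 : HasDerivAt (fun y => f (c - y)) (f' (c - r) * (-1)) r :=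
        (hf (c - r) hcrmem).comp r ((hasDerivAt_id r).const_sub c)
      have h2 : HasDerivAt (fun y => f' c * y) (f' c) r := by
        simpa using (hasDerivAt_id r).const_mul (f' c)
      have := ((hf r hrmem).sub h1).sub h2
      exact this.congr_deriv (by ring)
    have hanti : AntitoneOn h₁ (Set.Icc 0 c) := by
      apply antitoneOn_of_deriv_nonpos (convex_Icc 0 c) hcont1
      · intro r hr
        exact ((hderiv r hr).differentiableAt).differentiableWithinAt
      · intro r hr
        rw [(hderiv r hr).deriv]
        rw [interior_Icc] at hr
        have := hsup r (c - r) (le_of_lt hr.1) (by linarith [hr.2]) (by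
          have : r + (c - r) = c := by ring
          rw [this]; exact hcb)
        have hrc : r + (c - r) = c := by ring
        rw [hrc] at this
        linarith
    have hs' : s ∈ Set.Icc (0 : ℝ) c := ⟨hs, le_trans hst htc⟩
    have ht' : t ∈ Set.Icc (0 : ℝ) c := ⟨le_trans hs hst, htc⟩
    have heq : ∀ r ∈ Set.Icc (0 : ℝ) c, h r = h₁ r := by
      intro r hr
      have : |r - c| = c - r := by
        rw [abs_sub_comm]; exact abs_of_nonneg (by linarith [hr.2])
      simp only [hh, hh₁, this]
    rw [heq s hs', heq t ht']
    exact hanti hs' ht' hst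
  -- monotone on [c, b)
  have hmono2 : ∀ s t, c ≤ s → s ≤ t → t < b → h s ≤ h t := by
    intro s t hcs hst htb
    set h₂ : ℝ → ℝ := fun r => f r - f (r - c) - f' c * r with hh₂
    have hsub : Set.Icc c t ⊆ Set.Ico 0 b := by
      intro r hr; exact ⟨le_trans hc0 hr.1, lt_of_le_of_lt hr.2 htb⟩
    have hcont2 : ContinuousOn h₂ (Set.Icc c t) := by
      apply ContinuousOn.sub
      apply ContinuousOn.sub
      · exact hcontf.mono hsub
      · exact hcontf.comp (continuousOn_id.sub continuousOn_const)
          (fun r hr => ⟨by simp only [id, Set.mem_Icc] at hr ⊢; linarith [hr.1],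
            by simp only [id, Set.mem_Icc] at hr ⊢; linarith [hr.2, hc0]⟩)
      · exact continuousOn_const.mul continuousOn_id
    have hderiv : ∀ r ∈ interior (Set.Icc c t),
        HasDerivAt h₂ (f' r - f' (r - c) - f' c) r := by
      intro r hr
      rw [interior_Icc] at hr
      obtain ⟨hcr, hrt⟩ := hr
      have hrmem : r ∈ Set.Ico (0 : ℝ) b := ⟨by linarith, by linarith⟩
      have hrcmem : r - c ∈ Set.Ico (0 : ℝ) b := ⟨by linarith, by linarith⟩
      have h1 : HasDerivAt (fun y => f (y - c)) (f' (r - c) * 1) r :=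
        (hf (r - c) hrcmem).comp r ((hasDerivAt_id r).sub_const c)
      have h2 : HasDerivAt (fun y => f' c * y) (f' c) r := by
        simpa using (hasDerivAt_id r).const_mul (f' c)
      have := ((hf r hrmem).sub h1).sub h2
      exact this.congr_deriv (by ring)
    have hmon : MonotoneOn h₂ (Set.Icc c t) := by
      apply monotoneOn_of_deriv_nonneg (convex_Icc c t) hcont2
      · intro r hr
        exact ((hderiv r hr).differentiableAt).differentiableWithinAt
      · intro r hr
        rw [(hderiv r hr).deriv]
        rw [interior_Icc] at hr
        have := hsup (r - c) c (by linarith [hr.1]) hc0 (by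
          have : r - c + c = r := by ring
          rw [this]; linarith [hr.2])
        have hrc : r - c + c = r := by ring
        rw [hrc] at this
        linarith
    have hs' : s ∈ Set.Icc c t := ⟨hcs, hst⟩
    have ht' : t ∈ Set.Icc c t := ⟨le_trans hcs hst, le_rfl⟩
    have heq : ∀ r ∈ Set.Icc c t, h r = h₂ r := by
      intro r hr
      have : |r - c| = r - c := abs_of_nonneg (by linarith [hr.1])
      simp only [hh, hh₂, this]
    rw [heq s hs', heq t ht']
    exact hmon hs' ht' hst
  -- split index
  set k : ℕ := ((Finset.range n).filter (fun i => x i < c)).card with hkdef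
  have hk_le : k ≤ n := by
    calc k ≤ (Finset.range n).card := Finset.card_filter_le _ _
    _ = n := Finset.card_range n
  have hk1 : ∀ i, i < k → x i < c := by
    intro i hik
    by_contra hcon
    push_neg at hcon
    have hsubf : (Finset.range n).filter (fun i => x i < c) ⊆ Finset.range i := by
      intro j hj
      simp only [Finset.mem_filter, Finset.mem_range] at hj
      simp only [Finset.mem_range]
      by_contra hji
      push_neg at hji
      have := hmono i j hji hj.1
      linarith [hj.2]
    have := Finset.card_le_card hsubf
    simp only [Finset.card_range] at this
    omega
  have hk2 : ∀ i, k ≤ i → i < n → c ≤ x i := by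
    intro i hki hin
    by_contra hcon
    push_neg at hcon
    have hsubf : Finset.range (i + 1) ⊆ (Finset.range n).filter (fun i => x i < c) := by
      intro j hj
      simp only [Finset.mem_range] at hj
      simp only [Finset.mem_filter, Finset.mem_range]
      constructor
      · omega
      · exact lt_of_le_of_lt (hmono j i (by omega) hin) hcon
    have := Finset.card_le_card hsubf
    simp only [Finset.card_range] at this
    omega
  -- the key positivity
  set φ : ℕ → ℝ := fun i => h (x i) - h c with hφdef
  have keyL : 0 ≤ ∑ i ∈ Finset.range k, w i * φ i := by
    apply stmt16_lemL
    · intro j hj; exact (hJS j (le_trans hj hk_le)).1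
    · intro i hik
      have h1 := hk1 (i + 1) hik
      have h2 := hmono i (i + 1) (by omega) (by omega)
      have h3 := (hx i (by omega)).1
      simp only [hφdef]
      have := hmono1 (x i) (x (i + 1)) h3 h2 (le_of_lt h1)
      linarith
    · rcases Nat.eq_zero_or_pos k with hk | hk
      · left; exact hk
      · right
        have h1 := hk1 (k - 1) (by omega)
        have h3 := (hx (k - 1) (by omega)).1
        simp only [hφdef]
        have := hmono1 (x (k - 1)) c h3 (le_of_lt h1) le_rfl
        linarith
  have keyR : 0 ≤ ∑ i ∈ Finset.Ico k n, w i * φ i := by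
    apply stmt16_lemR w φ k n hk_le
    · intro j hkj hjn
      have hsplit : ∑ i ∈ Finset.range j, w i + ∑ i ∈ Finset.Ico j n, w i
          = ∑ i ∈ Finset.range n, w i := by
        simp only [Finset.range_eq_Ico]
        exact Finset.sum_Ico_consecutive _ (Nat.zero_le j) hjn
      have := (hJS j hjn).2
      rw [hA] at this
      linarith [hsplit]
    · intro i hki hin
      have h1 := hk2 i hki (by omega)
      have h2 := hmono i (i + 1) (by omega) (by omega)
      have h3 := (hx (i + 1) (by omega)).2
      simp only [hφdef]
      have := hmono2 (x i) (x (i + 1)) h1 h2 h3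
      linarith
    · rcases eq_or_lt_of_le hk_le with hk | hk
      · left; exact hk
      · right
        have h1 := hk2 k le_rfl hk
        have h3 := (hx k hk).2
        simp only [hφdef]
        have := hmono2 c (x k) le_rfl h1 h3
        linarith
  have key : 0 ≤ ∑ i ∈ Finset.range n, w i * φ i := by
    have hsplit : ∑ i ∈ Finset.range k, w i * φ i + ∑ i ∈ Finset.Ico k n, w i * φ i
        = ∑ i ∈ Finset.range n, w i * φ i := by
      simp only [Finset.range_eq_Ico]
      exact Finset.sum_Ico_consecutive _ (Nat.zero_le k) hk_le
    linarith
  -- expand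
  have hhc : h c = f c - f 0 - f' c * c := by
    simp [hh]
  have hterm : ∀ i, w i * φ i
      = w i * f (x i) - w i * f |x i - c| - f' c * (w i * x i) - (f c - f 0 - f' c * c) * w i := by
    intro i
    simp only [hφdef, hh, sub_self, abs_zero]
    ring
  have hexp : ∑ i ∈ Finset.range n, w i * φ i
      = (∑ i ∈ Finset.range n, w i * f (x i)) - (∑ i ∈ Finset.range n, w i * f |x i - c|)
        - f' c * (∑ i ∈ Finset.range n, w i * x i) - (f c - f 0 - f' c * c) * A := by
    rw [Finset.sum_congr rfl (fun i _ => hterm i)]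
    rw [hA]
    rw [Finset.sum_sub_distrib, Finset.sum_sub_distrib, Finset.sum_sub_distrib,
      ← Finset.mul_sum, ← Finset.mul_sum]
  set Sf := ∑ i ∈ Finset.range n, w i * f (x i) with hSf
  set Sa := ∑ i ∈ Finset.range n, w i * f |x i - c| with hSa
  set Sx := ∑ i ∈ Finset.range n, w i * x i with hSx
  have key2 : (f c - f 0 - f' c * c) * A + f' c * Sx + Sa ≤ Sf := by
    rw [hexp] at key; linarith
  have hAne : A ≠ 0 := ne_of_gt hApos
  have hxbar' : Sx = A * xbar := by
    rw [hxbar]; field_simp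
  rw [hxbar'] at key2
  have hfinal := mul_le_mul_of_nonneg_left key2 (le_of_lt (one_div_pos.mpr hApos))
  have hid : (1 / A) * ((f c - f 0 - f' c * c) * A + f' c * (A * xbar) + Sa)
      = (f c - f 0 - f' c * c) + f' c * xbar + (1 / A) * Sa := by
    field_simp
  rw [hid] at hfinal
  linarith
end

section
/- (Comparison of Jensen functionals with Steffensen-type bounds, superquadratic case, lower bound) Let f be superquadratic on I = [0,∞) with f' continuously differentiable and superadditive, and x₁ ≤ x₂ ≤ ... ≤ xₙ in I. Let p, q be n-tuples with ∑pᵢ = ∑qᵢ = 1, 0 ≤ ∑_{j=1}^i pⱼ ≤ 1 for all i, 0 < ∑_{j=1}^i qⱼ < 1 for i < n, p ≠ q. Define mᵢ = (∑_{j=1}^i pⱼ)/(∑_{j=1}^i qⱼ), m̄ᵢ = (∑_{j=i}^n pⱼ)/(∑_{j=i}^n qⱼ), and m* = min_i{mᵢ, m̄ᵢ}. Then with Jₙ(f,x,p) = ∑pᵢf(xᵢ) - f(∑pᵢxᵢ): Jₙ(f,x,p) - m* Jₙ(f,x,q) ≥ m* f(|∑(qᵢ - pᵢ)xᵢ|)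 + ∑(pᵢ - m* qᵢ) f(|xᵢ - ∑pⱼxⱼ|). -/
open intervalIntegral

private lemma ftc17 (f f' : ℝ → ℝ)
    (hf : ∀ x ∈ Set.Ici (0 : ℝ), HasDerivAt f (f' x) x)
    (hf'c : ContinuousOn f' (Set.Ici (0 : ℝ)))
    {a b : ℝ} (ha : 0 ≤ a) (hab : a ≤ b) :
    ∫ t in a..b, f' t = f b - f a := by
  apply intervalIntegral.integral_eq_sub_of_hasDerivAt
  · intro t ht
    rw [Set.uIcc_of_le hab] at ht
    exact hf t (le_trans ha ht.1)
  · apply ContinuousOn.intervalIntegrable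
    apply hf'c.mono
    rw [Set.uIcc_of_le hab]
    intro t ht; exact le_trans ha ht.1

private lemma intble (f' : ℝ → ℝ) (hf'c : ContinuousOn f' (Set.Ici (0 : ℝ)))
    {a b : ℝ} (ha : 0 ≤ a) (hab : a ≤ b) :
    IntervalIntegrable f' MeasureTheory.volume a b := by
  apply ContinuousOn.intervalIntegrable
  apply hf'c.mono
  rw [Set.uIcc_of_le hab]
  intro t ht; exact le_trans ha ht.1

-- f 0 ≤ 0 is taken as hypothesis hf0 below (from hsq at 0,0).

/-- superquadratic gradient inequality with C = f' -/
private lemma grad17 (f f' : ℝ → ℝ)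
    (hf : ∀ x ∈ Set.Ici (0 : ℝ), HasDerivAt f (f' x) x)
    (hf'c : ContinuousOn f' (Set.Ici (0 : ℝ)))
    (hsupadd : ∀ u v : ℝ, 0 ≤ u → 0 ≤ v → f' u + f' v ≤ f' (u + v))
    (hf0 : f 0 ≤ 0)
    {a y : ℝ} (ha : 0 ≤ a) (hy : 0 ≤ y) :
    f a + f' a * (y - a) + f |y - a| ≤ f y := by
  rcases le_total a y with hay | hya
  · -- y ≥ a
    rw [abs_of_nonneg (by linarith)]
    have h1 : ∫ t in (0:ℝ)..(y - a), f' (a + t) = f y - f a := by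
      rw [intervalIntegral.integral_comp_add_left f' a]
      simpa using ftc17 f f' hf hf'c ha hay
    have h2 : ∫ t in (0:ℝ)..(y - a), f' t = f (y - a) - f 0 :=
      ftc17 f f' hf hf'c le_rfl (by linarith)
    have h3 : ∫ t in (0:ℝ)..(y - a), (f' a + f' t) ≤ ∫ t in (0:ℝ)..(y - a), f' (a + t) := by
      apply intervalIntegral.integral_mono_on (by linarith)
      · apply IntervalIntegrable.add intervalIntegrable_const
        exact intble f' hf'c le_rfl (by linarith)
      · have h : IntervalIntegrable f' MeasureTheory.volume (a + 0) (a + (y - a)) :=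
          intble f' hf'c (by linarith) (by linarith)
        have := IntervalIntegrable.comp_add_left h a
        simpa using this
      · intro t ht; exact hsupadd a t ha ht.1
    rw [intervalIntegral.integral_add intervalIntegrable_const
        (intble f' hf'c le_rfl (by linarith)), h2] at h3
    simp only [intervalIntegral.integral_const, smul_eq_mul, sub_zero] at h3
    rw [h1] at h3
    linarith
  · -- y ≤ a
    rw [abs_of_nonpos (by linarith), neg_sub]
    have h1 : ∫ t in y..a, f' t = f a - f y := ftc17 f f' hf hf'c hy hya
    have h2 : ∫ t in y..a, f' (a - t) = f (a - y) - f 0 := by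
      rw [intervalIntegral.integral_comp_sub_left f' a]
      have := ftc17 f f' hf hf'c (by linarith : (0:ℝ) ≤ a - a) (by linarith : a - a ≤ a - y)
      simpa using this
    have h3 : ∫ t in y..a, (f' t + f' (a - t)) ≤ ∫ t in y..a, (fun _ => f' a) t := by
      apply intervalIntegral.integral_mono_on hya
      · apply IntervalIntegrable.add (intble f' hf'c hy hya)
        have h : IntervalIntegrable f' MeasureTheory.volume (a - a) (a - y) :=
          intble f' hf'c (by linarith) (by linarith)
        have := h.comp_sub_left a
        exact IntervalIntegrable.symm (by simpa using this)
      · exact intervalIntegrable_const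
      · intro t ht
        have := hsupadd t (a - t) (le_trans hy ht.1) (by linarith [ht.2])
        simpa using this
    rw [intervalIntegral.integral_add (intble f' hf'c hy hya)
        (by have h : IntervalIntegrable f' MeasureTheory.volume (a - a) (a - y) :=
              intble f' hf'c (by linarith) (by linarith)
            have := h.comp_sub_left a
            exact (IntervalIntegrable.symm (by simpa using this))), h1, h2] at h3
    simp only [intervalIntegral.integral_const, smul_eq_mul] at h3
    nlinarith [h3]

private lemma hright17 (f f' : ℝ → ℝ)
    (hf : ∀ x ∈ Set.Ici (0 : ℝ), HasDerivAt f (f' x) x)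
    (hf'c : ContinuousOn f' (Set.Ici (0 : ℝ)))
    (hsupadd : ∀ u v : ℝ, 0 ≤ u → 0 ≤ v → f' u + f' v ≤ f' (u + v))
    {A u v : ℝ} (hA : 0 ≤ A) (hAu : A ≤ u) (huv : u ≤ v) :
    f u - f A - f' A * (u - A) - f (u - A) ≤ f v - f A - f' A * (v - A) - f (v - A) := by
  have h1 : ∫ t in u..v, f' t = f v - f u := ftc17 f f' hf hf'c (le_trans hA hAu) huv
  have h2 : ∫ t in u..v, f' (t - A) = f (v - A) - f (u - A) := by
    rw [intervalIntegral.integral_comp_sub_right f' A]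
    exact ftc17 f f' hf hf'c (by linarith) (by linarith)
  have hint : IntervalIntegrable (fun t => f' (t - A)) MeasureTheory.volume u v := by
    have h : IntervalIntegrable f' MeasureTheory.volume (u - A) (v - A) :=
      intble f' hf'c (by linarith) (by linarith)
    have := h.comp_sub_right A
    simpa using this
  have h3 : ∫ t in u..v, (f' (t - A) + f' A) ≤ ∫ t in u..v, f' t := by
    apply intervalIntegral.integral_mono_on huv
    · exact hint.add intervalIntegrable_const
    · exact intble f' hf'c (le_trans hA hAu) huv
    · intro t ht
      have := hsupadd (t - A) A (by linarith [ht.1]) hA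
      simpa using this
  rw [intervalIntegral.integral_add hint intervalIntegrable_const, h1, h2] at h3
  simp only [intervalIntegral.integral_const, smul_eq_mul] at h3
  nlinarith [h3]

private lemma hleft17 (f f' : ℝ → ℝ)
    (hf : ∀ x ∈ Set.Ici (0 : ℝ), HasDerivAt f (f' x) x)
    (hf'c : ContinuousOn f' (Set.Ici (0 : ℝ)))
    (hsupadd : ∀ u v : ℝ, 0 ≤ u → 0 ≤ v → f' u + f' v ≤ f' (u + v))
    {A u v : ℝ} (hu : 0 ≤ u) (huv : u ≤ v) (hvA : v ≤ A) :
    f v - f A - f' A * (v - A) - f (A - v) ≤ f u - f A - f' A * (u - A) - f (A - u) := by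
  have h1 : ∫ t in u..v, f' t = f v - f u := ftc17 f f' hf hf'c hu huv
  have h2 : ∫ t in u..v, f' (A - t) = f (A - u) - f (A - v) := by
    rw [intervalIntegral.integral_comp_sub_left f' A]
    exact ftc17 f f' hf hf'c (by linarith) (by linarith)
  have hint : IntervalIntegrable (fun t => f' (A - t)) MeasureTheory.volume u v := by
    have h : IntervalIntegrable f' MeasureTheory.volume (A - v) (A - u) :=
      intble f' hf'c (by linarith) (by linarith)
    have := h.comp_sub_left A
    exact IntervalIntegrable.symm (by simpa using this)
  have h3 : ∫ t in u..v, (f' t + f' (A - t)) ≤ ∫ t in u..v, (fun _ => f' A) t := by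
    apply intervalIntegral.integral_mono_on huv
    · exact (intble f' hf'c hu huv).add hint
    · exact intervalIntegrable_const
    · intro t ht
      have := hsupadd t (A - t) (le_trans hu ht.1) (by linarith [ht.2])
      simpa using this
  rw [intervalIntegral.integral_add (intble f' hf'c hu huv) hint, h1, h2] at h3
  simp only [intervalIntegral.integral_const, smul_eq_mul] at h3
  nlinarith [h3]


private lemma steff17 (N : ℕ) (y w : ℕ → ℝ) (h : ℝ → ℝ) (A : ℝ)
    (hymono : ∀ i j, i ≤ j → j < N → y i ≤ y j)
    (hy0 : ∀ i < N, 0 ≤ y i)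
    (hW0 : ∀ j ≤ N, 0 ≤ ∑ i ∈ Finset.range j, w i)
    (hW1 : ∀ j ≤ N, ∑ i ∈ Finset.range j, w i ≤ ∑ i ∈ Finset.range N, w i)
    (hh0 : ∀ t, 0 ≤ t → 0 ≤ h t)
    (hdec : ∀ u v, 0 ≤ u → u ≤ v → v ≤ A → h v ≤ h u)
    (hinc : ∀ u v, A ≤ u → u ≤ v → h u ≤ h v) :
    0 ≤ ∑ i ∈ Finset.range N, w i * h (y i) := by
  classical
  set m := ((Finset.range N).filter (fun i => y i ≤ A)).card with hmdef
  have hmN : m ≤ N := le_trans (Finset.card_filter_le _ _) (by simp)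
  have claim1 : ∀ i < m, y i ≤ A := by
    intro i him
    by_contra hc
    push_neg at hc
    have hsub : (Finset.range N).filter (fun i => y i ≤ A) ⊆ Finset.range i := by
      intro j hj
      simp only [Finset.mem_filter, Finset.mem_range] at hj ⊢
      by_contra hji
      push_neg at hji
      exact absurd hj.2 (not_le.mpr (lt_of_lt_of_le hc (hymono i j hji hj.1)))
    have hcard := Finset.card_le_card hsub
    rw [Finset.card_range] at hcard
    omega
  have claim2 : ∀ i, m ≤ i → i < N → A < y i := by
    intro i hmi hiN
    by_contra hc
    push_neg at hc
    have hsub : Finset.range (i + 1) ⊆ (Finset.range N).filter (fun i => y i ≤ A) := by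
      intro j hj
      simp only [Finset.mem_filter, Finset.mem_range] at hj ⊢
      refine ⟨by omega, le_trans (hymono j i (by omega) hiN) hc⟩
    have hcard := Finset.card_le_card hsub
    rw [Finset.card_range] at hcard
    omega
  have part1 : 0 ≤ ∑ i ∈ Finset.range m, w i * h (y i) := by
    rcases Nat.eq_zero_or_pos m with h0 | hpos
    · simp [h0]
    have e : ∑ i ∈ Finset.range m, w i * h (y i)
        = ∑ i ∈ Finset.range m, h (y i) * w i :=
      Finset.sum_congr rfl (fun i _ => mul_comm _ _)
    have bp := Finset.sum_range_by_parts (fun i => h (y i)) w m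
    simp only [smul_eq_mul] at bp
    rw [e, bp]
    have t1 : 0 ≤ h (y (m - 1)) * ∑ i ∈ Finset.range m, w i :=
      mul_nonneg (hh0 _ (hy0 _ (by omega))) (hW0 m hmN)
    have t2 : ∑ i ∈ Finset.range (m - 1),
        (h (y (i + 1)) - h (y i)) * ∑ j ∈ Finset.range (i + 1), w j ≤ 0 := by
      apply Finset.sum_nonpos
      intro i hi
      simp only [Finset.mem_range] at hi
      apply mul_nonpos_iff.mpr
      right
      refine ⟨?_, hW0 (i + 1) (by omega)⟩
      rw [sub_nonpos]
      exact hdec (y i) (y (i + 1)) (hy0 i (by omega))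
        (hymono i (i + 1) (by omega) (by omega)) (claim1 (i + 1) (by omega))
    linarith
  have part2 : 0 ≤ ∑ i ∈ Finset.Ico m N, w i * h (y i) := by
    rcases Nat.eq_or_lt_of_le hmN with hEq | hlt
    · have : Finset.Ico m N = ∅ := by rw [hEq]; exact Finset.Ico_self N
      simp [this]
    set K := N - m with hKdef
    have hK1 : 1 ≤ K := by omega
    have tailsum : ∀ t, t ≤ N →
        ∑ l ∈ Finset.range t, w (N - 1 - l) = ∑ i ∈ Finset.Ico (N - t) N, w i := by
      intro t
      induction t with
      | zero => intro _; simp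
      | succ t ih =>
        intro ht
        rw [Finset.sum_range_succ, ih (by omega),
          Finset.sum_eq_sum_Ico_succ_bot (by omega : N - (t + 1) < N)]
        have e1 : N - (t + 1) + 1 = N - t := by omega
        have e2 : N - 1 - t = N - (t + 1) := by omega
        rw [e1, e2]
        ring
    have rev : ∀ g : ℕ → ℝ,
        ∑ i ∈ Finset.Ico m N, g i = ∑ j ∈ Finset.range K, g (N - 1 - j) := by
      intro g
      rw [Finset.sum_Ico_eq_sum_range]
      rw [← Finset.sum_range_reflect (fun j => g (m + j)) (N - m)]
      apply Finset.sum_congr rfl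
      intro j hj
      simp only [Finset.mem_range] at hj
      congr 1
      omega
    rw [rev]
    have e : ∑ j ∈ Finset.range K, w (N - 1 - j) * h (y (N - 1 - j))
        = ∑ j ∈ Finset.range K, h (y (N - 1 - j)) * w (N - 1 - j) :=
      Finset.sum_congr rfl (fun j _ => mul_comm _ _)
    have bp := Finset.sum_range_by_parts (fun j => h (y (N - 1 - j)))
      (fun j => w (N - 1 - j)) K
    simp only [smul_eq_mul] at bp
    rw [e, bp]
    have hm' : N - 1 - (K - 1) = m := by omega
    have t1 : 0 ≤ h (y (N - 1 - (K - 1))) * ∑ j ∈ Finset.range K, w (N - 1 - j) := by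
      rw [hm', tailsum K (by omega)]
      have eK : N - K = m := by omega
      rw [eK, Finset.sum_Ico_eq_sub _ hmN]
      exact mul_nonneg (hh0 _ (hy0 m hlt)) (by linarith [hW1 m hmN])
    have t2 : ∑ j ∈ Finset.range (K - 1),
        (h (y (N - 1 - (j + 1))) - h (y (N - 1 - j)))
          * ∑ l ∈ Finset.range (j + 1), w (N - 1 - l) ≤ 0 := by
      apply Finset.sum_nonpos
      intro j hj
      simp only [Finset.mem_range] at hj
      apply mul_nonpos_iff.mpr
      right
      constructor
      · rw [sub_nonpos]
        apply hinc
        · exact le_of_lt (claim2 (N - 1 - (j + 1)) (by omega) (by omega))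
        · exact hymono _ _ (by omega) (by omega)
      · rw [tailsum (j + 1) (by omega),
          Finset.sum_Ico_eq_sub _ (by omega : N - (j + 1) ≤ N)]
        linarith [hW1 (N - (j + 1)) (by omega)]
    linarith
  calc (0:ℝ) ≤ ∑ i ∈ Finset.range m, w i * h (y i)
      + ∑ i ∈ Finset.Ico m N, w i * h (y i) := by linarith
    _ = ∑ i ∈ Finset.range N, w i * h (y i) := by
        rw [Finset.range_eq_Ico, Finset.range_eq_Ico]
        exact Finset.sum_Ico_consecutive _ (Nat.zero_le m) hmN

private lemma mean_nonneg17 (n : ℕ) (hn : 0 < n) (x r : ℕ → ℝ)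
    (hx00 : 0 ≤ x 0)
    (hmono : ∀ i j, i ≤ j → j < n → x i ≤ x j)
    (hr1 : ∑ i ∈ Finset.range n, r i = 1)
    (hrle : ∀ j ≤ n, ∑ i ∈ Finset.range j, r i ≤ 1) :
    0 ≤ ∑ i ∈ Finset.range n, r i * x i := by
  have e : ∑ i ∈ Finset.range n, r i * x i = ∑ i ∈ Finset.range n, x i * r i :=
    Finset.sum_congr rfl (fun i _ => mul_comm _ _)
  have bp := Finset.sum_range_by_parts x r n
  simp only [smul_eq_mul] at bp
  rw [e, bp, hr1]
  have key : ∑ i ∈ Finset.range (n - 1), (x (i + 1) - x i) * ∑ j ∈ Finset.range (i + 1), r j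
      ≤ ∑ i ∈ Finset.range (n - 1), (x (i + 1) - x i) := by
    apply Finset.sum_le_sum
    intro i hi
    simp only [Finset.mem_range] at hi
    have hd : 0 ≤ x (i + 1) - x i :=
      sub_nonneg.mpr (hmono i (i + 1) (by omega) (by omega))
    exact mul_le_of_le_one_right hd (hrle (i + 1) (by omega))
  rw [Finset.sum_range_sub x (n - 1)] at key
  have hx0n : x 0 ≤ x (n - 1) := hmono 0 (n - 1) (by omega) (by omega)
  linarith

private lemma split17 (k n : ℕ) (hk : k ≤ n) (u : ℕ → ℝ) :
    ∑ i ∈ Finset.range (n + 1), u i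
      = (∑ i ∈ Finset.range k, u i) + u k + ∑ i ∈ Finset.Ico k n, u (i + 1) := by
  have h1 : ∑ i ∈ Finset.Ico k n, u (i + 1) = ∑ i ∈ Finset.Ico (k + 1) (n + 1), u i := by
    rw [Finset.sum_Ico_eq_sum_range, Finset.sum_Ico_eq_sum_range]
    have : n + 1 - (k + 1) = n - k := by omega
    rw [this]
    apply Finset.sum_congr rfl
    intro j _
    congr 1
    omega
  rw [h1, Finset.range_eq_Ico, Finset.range_eq_Ico,
    ← Finset.sum_Ico_consecutive u (Nat.zero_le k) (by omega : k ≤ n + 1),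
    Finset.sum_eq_sum_Ico_succ_bot (by omega : k < n + 1)]
  ring

/-- lower bound comparison of Jensen functionals for
superquadratic functions with superadditive derivative. -/
theorem stmt17 (f f' C : ℝ → ℝ)
    (hf : ∀ x ∈ Set.Ici (0 : ℝ), HasDerivAt f (f' x) x)
    (hf'c : ContinuousOn f' (Set.Ici (0 : ℝ)))
    (hsupadd : ∀ u v : ℝ, 0 ≤ u → 0 ≤ v → f' u + f' v ≤ f' (u + v))
    (hsq : ∀ x, 0 ≤ x → ∀ y, 0 ≤ y → f x + C x * (y - x) + f |y - x| ≤ f y)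
    (n : ℕ) (hn : 0 < n) (p q x : ℕ → ℝ)
    (hx0 : ∀ i < n, 0 ≤ x i)
    (hmono : ∀ i j, i ≤ j → j < n → x i ≤ x j)
    (hp1 : ∑ i ∈ Finset.range n, p i = 1)
    (hq1 : ∑ i ∈ Finset.range n, q i = 1)
    (hpJS : ∀ j ≤ n, 0 ≤ ∑ i ∈ Finset.range j, p i ∧ ∑ i ∈ Finset.range j, p i ≤ 1)
    (hqJS : ∀ j, 1 ≤ j → j < n →
      0 < ∑ i ∈ Finset.range j, q i ∧ ∑ i ∈ Finset.range j, q i < 1)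
    (hpq : ∃ i < n, p i ≠ q i)
    (mstar : ℝ)
    (hm : IsLeast {r : ℝ | ∃ i, 1 ≤ i ∧ i ≤ n ∧
      (r = (∑ j ∈ Finset.range i, p j) / (∑ j ∈ Finset.range i, q j) ∨
        r = (∑ j ∈ Finset.Ico (i - 1) n, p j) / (∑ j ∈ Finset.Ico (i - 1) n, q j))} mstar) :
    mstar * f |∑ i ∈ Finset.range n, (q i - p i) * x i| +
        ∑ i ∈ Finset.range n, (p i - mstar * q i) *
          f |x i - ∑ j ∈ Finset.range n, p j * x j| ≤
      ((∑ i ∈ Finset.range n, p i * f (x i)) - f (∑ i ∈ Finset.range n, p i * x i)) -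
        mstar * ((∑ i ∈ Finset.range n, q i * f (x i)) -
          f (∑ i ∈ Finset.range n, q i * x i)) := by
  classical
  have hf0 : f 0 ≤ 0 := by
    have h := hsq 0 le_rfl 0 le_rfl
    simp at h
    linarith
  set A := ∑ i ∈ Finset.range n, p i * x i with hAdef
  set B := ∑ i ∈ Finset.range n, q i * x i with hBdef
  -- partial sum facts
  have hQ0 : ∀ j ≤ n, 0 ≤ ∑ i ∈ Finset.range j, q i := by
    intro j hj
    rcases Nat.eq_zero_or_pos j with h0 | hpos
    · simp [h0]
    rcases Nat.eq_or_lt_of_le hj with hEq | hlt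
    · rw [hEq, hq1]; norm_num
    · exact le_of_lt (hqJS j hpos hlt).1
  have hQ1 : ∀ j ≤ n, ∑ i ∈ Finset.range j, q i ≤ 1 := by
    intro j hj
    rcases Nat.eq_zero_or_pos j with h0 | hpos
    · simp [h0]
    rcases Nat.eq_or_lt_of_le hj with hEq | hlt
    · rw [hEq, hq1]
    · exact le_of_lt (hqJS j hpos hlt).2
  have hQpos : ∀ j, 1 ≤ j → j ≤ n → 0 < ∑ i ∈ Finset.range j, q i := by
    intro j h1 hj
    rcases Nat.eq_or_lt_of_le hj with hEq | hlt
    · rw [hEq, hq1]; norm_num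
    · exact (hqJS j h1 hlt).1
  have htailQ : ∀ j < n, 0 < 1 - ∑ i ∈ Finset.range j, q i := by
    intro j hj
    rcases Nat.eq_zero_or_pos j with h0 | hpos
    · simp [h0]
    · linarith [(hqJS j hpos hj).2]
  have m0 : 0 ≤ mstar := by
    obtain ⟨i, hi1, hin, hcase⟩ := hm.1
    rcases hcase with hc | hc
    · rw [hc]
      exact div_nonneg (hpJS i hin).1 (le_of_lt (hQpos i hi1 hin))
    · rw [hc, Finset.sum_Ico_eq_sub p (by omega : i - 1 ≤ n),
        Finset.sum_Ico_eq_sub q (by omega : i - 1 ≤ n), hp1, hq1]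
      exact div_nonneg (by linarith [(hpJS (i - 1) (by omega)).2])
        (le_of_lt (htailQ (i - 1) (by omega)))
  have m1 : mstar ≤ 1 := by
    apply hm.2
    refine ⟨n, hn, le_rfl, Or.inl ?_⟩
    rw [hp1, hq1]
    norm_num
  have key1 : ∀ j ≤ n, mstar * ∑ i ∈ Finset.range j, q i ≤ ∑ i ∈ Finset.range j, p i := by
    intro j hj
    rcases Nat.eq_zero_or_pos j with h0 | hpos
    · simp [h0]
    have hle : mstar ≤ (∑ i ∈ Finset.range j, p i) / (∑ i ∈ Finset.range j, q i) :=
      hm.2 ⟨j, hpos, hj, Or.inl rfl⟩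
    exact (le_div_iff₀ (hQpos j hpos hj)).mp hle
  have key2 : ∀ j ≤ n, mstar * (1 - ∑ i ∈ Finset.range j, q i)
      ≤ 1 - ∑ i ∈ Finset.range j, p i := by
    intro j hj
    rcases Nat.eq_or_lt_of_le hj with hEq | hlt
    · rw [hEq, hp1, hq1]; simp
    have hle : mstar ≤ (∑ i ∈ Finset.Ico (j + 1 - 1) n, p i)
        / (∑ i ∈ Finset.Ico (j + 1 - 1) n, q i) :=
      hm.2 ⟨j + 1, by omega, by omega, Or.inr rfl⟩
    have hj' : j + 1 - 1 = j := by omega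
    rw [hj', Finset.sum_Ico_eq_sub p (by omega : j ≤ n),
      Finset.sum_Ico_eq_sub q (by omega : j ≤ n), hp1, hq1] at hle
    exact (le_div_iff₀ (htailQ j hlt)).mp hle
  have A0 : 0 ≤ A :=
    mean_nonneg17 n hn x p (hx0 0 hn) hmono hp1 (fun j hj => (hpJS j hj).2)
  have B0 : 0 ≤ B :=
    mean_nonneg17 n hn x q (hx0 0 hn) hmono hq1 hQ1
  -- position of B among the x's
  set k := ((Finset.range n).filter (fun i => x i ≤ B)).card with hkdef
  have hkn : k ≤ n := le_trans (Finset.card_filter_le _ _) (by simp)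
  have hk1 : ∀ i < k, x i ≤ B := by
    intro i hik
    by_contra hc
    push_neg at hc
    have hsub : (Finset.range n).filter (fun i => x i ≤ B) ⊆ Finset.range i := by
      intro j hj
      simp only [Finset.mem_filter, Finset.mem_range] at hj ⊢
      by_contra hji
      push_neg at hji
      exact absurd hj.2 (not_le.mpr (lt_of_lt_of_le hc (hmono i j hji hj.1)))
    have hcard := Finset.card_le_card hsub
    rw [Finset.card_range] at hcard
    omega
  have hk2 : ∀ i, k ≤ i → i < n → B < x i := by
    intro i hki hin
    by_contra hc
    push_neg at hc
    have hsub : Finset.range (i + 1) ⊆ (Finset.range n).filter (fun i => x i ≤ B) := by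
      intro j hj
      simp only [Finset.mem_filter, Finset.mem_range] at hj ⊢
      exact ⟨by omega, le_trans (hmono j i (by omega) hin) hc⟩
    have hcard := Finset.card_le_card hsub
    rw [Finset.card_range] at hcard
    omega
  -- merged sequences
  set y : ℕ → ℝ := fun i => if i < k then x i else if i = k then B else x (i - 1) with hydef
  set w : ℕ → ℝ := fun i => if i < k then p i - mstar * q i
    else if i = k then mstar else p (i - 1) - mstar * q (i - 1) with hwdef
  have csum : ∀ j, ∑ i ∈ Finset.range j, (p i - mstar * q i)
      = (∑ i ∈ Finset.range j, p i) - mstar * ∑ i ∈ Finset.range j, q i := by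
    intro j
    rw [Finset.sum_sub_distrib, ← Finset.mul_sum]
  have WsumA : ∀ j ≤ k, ∑ i ∈ Finset.range j, w i
      = (∑ i ∈ Finset.range j, p i) - mstar * ∑ i ∈ Finset.range j, q i := by
    intro j hj
    rw [← csum j]
    apply Finset.sum_congr rfl
    intro i hi
    simp only [Finset.mem_range] at hi
    rw [hwdef]
    simp only [if_pos (by omega : i < k)]
  have WsumB : ∀ j, k < j → j ≤ n + 1 → ∑ i ∈ Finset.range j, w i
      = (∑ i ∈ Finset.range (j - 1), p i) - mstar * (∑ i ∈ Finset.range (j - 1), q i)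
        + mstar := by
    intro j hkj hj
    have hj1 : j - 1 + 1 = j := by omega
    have hsp := split17 k (j - 1) (by omega) w
    rw [hj1] at hsp
    rw [hsp]
    have e1 : ∑ i ∈ Finset.range k, w i
        = (∑ i ∈ Finset.range k, p i) - mstar * ∑ i ∈ Finset.range k, q i :=
      WsumA k le_rfl
    have e2 : w k = mstar := by
      rw [hwdef]; simp
    have e3 : ∑ i ∈ Finset.Ico k (j - 1), w (i + 1)
        = ∑ i ∈ Finset.Ico k (j - 1), (p i - mstar * q i) := by
      apply Finset.sum_congr rfl
      intro i hi
      simp only [Finset.mem_Ico] at hi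
      rw [hwdef]
      simp only [if_neg (by omega : ¬ (i + 1 < k)), if_neg (by omega : ¬ (i + 1 = k)),
        Nat.add_sub_cancel]
    rw [e1, e2, e3, Finset.sum_Ico_eq_sub _ (by omega : k ≤ j - 1), csum (j - 1), csum k]
    ring
  have hW0 : ∀ j ≤ n + 1, 0 ≤ ∑ i ∈ Finset.range j, w i := by
    intro j hj
    by_cases hjk : j ≤ k
    · rw [WsumA j hjk]
      linarith [key1 j (by omega)]
    · push_neg at hjk
      rw [WsumB j hjk hj]
      have h1 := (hpJS (j - 1) (by omega)).1
      have h2 := hQ1 (j - 1) (by omega)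
      nlinarith [m0]
  have hWtot : ∑ i ∈ Finset.range (n + 1), w i = 1 := by
    rw [WsumB (n + 1) (by omega) le_rfl]
    simp only [Nat.add_sub_cancel]
    rw [hp1, hq1]
    ring
  have hW1 : ∀ j ≤ n + 1, ∑ i ∈ Finset.range j, w i ≤ ∑ i ∈ Finset.range (n + 1), w i := by
    intro j hj
    rw [hWtot]
    by_cases hjk : j ≤ k
    · rw [WsumA j hjk]
      have h2 := key2 j (by omega)
      linarith [m0]
    · push_neg at hjk
      rw [WsumB j hjk hj]
      have h2 := key2 (j - 1) (by omega)
      linarith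
  have hymono : ∀ i j, i ≤ j → j < n + 1 → y i ≤ y j := by
    intro i j hij hj
    rw [hydef]
    simp only
    split_ifs <;>
      first
        | rfl
        | omega
        | exact le_refl _
        | exact hmono _ _ (by omega) (by omega)
        | exact hk1 _ (by omega)
        | exact le_of_lt (hk2 _ (by omega) (by omega))
        | exact le_trans (hk1 _ (by omega)) (le_of_lt (hk2 _ (by omega) (by omega)))
  have hy0 : ∀ i < n + 1, 0 ≤ y i := by
    intro i hi
    rw [hydef]
    simp only
    split_ifs
    · exact hx0 i (by omega)
    · exact B0
    · exact hx0 (i - 1) (by omega)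
  -- superquadratic gradient facts
  have hh0 : ∀ t, 0 ≤ t → 0 ≤ f t - f A - f' A * (t - A) - f |t - A| := by
    intro t ht
    have := grad17 f f' hf hf'c hsupadd hf0 A0 ht
    linarith
  have hhdec : ∀ u v, 0 ≤ u → u ≤ v → v ≤ A →
      f v - f A - f' A * (v - A) - f |v - A| ≤ f u - f A - f' A * (u - A) - f |u - A| := by
    intro u v hu huv hvA
    rw [abs_of_nonpos (by linarith : v - A ≤ 0), neg_sub,
      abs_of_nonpos (by linarith : u - A ≤ 0), neg_sub]
    exact hleft17 f f' hf hf'c hsupadd hu huv hvA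
  have hhinc : ∀ u v, A ≤ u → u ≤ v →
      f u - f A - f' A * (u - A) - f |u - A| ≤ f v - f A - f' A * (v - A) - f |v - A| := by
    intro u v hAu huv
    rw [abs_of_nonneg (by linarith : (0:ℝ) ≤ u - A),
      abs_of_nonneg (by linarith : (0:ℝ) ≤ v - A)]
    exact hright17 f f' hf hf'c hsupadd A0 hAu huv
  -- apply the Steffensen-type lemma
  have key := steff17 (n + 1) y w
    (fun t => f t - f A - f' A * (t - A) - f |t - A|) A
    hymono hy0 hW0 hW1 hh0 hhdec hhinc
  -- rewrite the sum
  have hsplit := split17 k n hkn (fun i => w i * (f (y i) - f A - f' A * (y i - A) - f |y i - A|))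
  rw [hsplit] at key
  have ey1 : ∑ i ∈ Finset.range k,
      w i * (f (y i) - f A - f' A * (y i - A) - f |y i - A|)
      = ∑ i ∈ Finset.range k,
        (p i - mstar * q i) * (f (x i) - f A - f' A * (x i - A) - f |x i - A|) := by
    apply Finset.sum_congr rfl
    intro i hi
    simp only [Finset.mem_range] at hi
    rw [hydef, hwdef]
    simp only [if_pos hi]
  have ey2 : w k * (f (y k) - f A - f' A * (y k - A) - f |y k - A|)
      = mstar * (f B - f A - f' A * (B - A) - f |B - A|) := by
    rw [hydef, hwdef]
    simp
  have ey3 : ∑ i ∈ Finset.Ico k n,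
      w (i + 1) * (f (y (i + 1)) - f A - f' A * (y (i + 1) - A) - f |y (i + 1) - A|)
      = ∑ i ∈ Finset.Ico k n,
        (p i - mstar * q i) * (f (x i) - f A - f' A * (x i - A) - f |x i - A|) := by
    apply Finset.sum_congr rfl
    intro i hi
    simp only [Finset.mem_Ico] at hi
    rw [hydef, hwdef]
    simp only [if_neg (by omega : ¬ (i + 1 < k)), if_neg (by omega : ¬ (i + 1 = k)),
      Nat.add_sub_cancel]
  rw [ey1, ey2, ey3] at key
  rw [show (∑ i ∈ Finset.range k,
      (p i - mstar * q i) * (f (x i) - f A - f' A * (x i - A) - f |x i - A|))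
      + mstar * (f B - f A - f' A * (B - A) - f |B - A|)
      + ∑ i ∈ Finset.Ico k n,
        (p i - mstar * q i) * (f (x i) - f A - f' A * (x i - A) - f |x i - A|)
    = (∑ i ∈ Finset.range n,
        (p i - mstar * q i) * (f (x i) - f A - f' A * (x i - A) - f |x i - A|))
      + mstar * (f B - f A - f' A * (B - A) - f |B - A|) from by
      rw [Finset.range_eq_Ico, Finset.range_eq_Ico,
        ← Finset.sum_Ico_consecutive
          (fun i => (p i - mstar * q i) * (f (x i) - f A - f' A * (x i - A) - f |x i - A|))
          (Nat.zero_le k) hkn]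
      ring] at key
  -- expand and finish
  have hc1 : ∑ i ∈ Finset.range n, (p i - mstar * q i) = 1 - mstar := by
    rw [csum n, hp1, hq1]
    ring
  have hc2 : ∑ i ∈ Finset.range n, (p i - mstar * q i) * x i = A - mstar * B := by
    have e : ∀ i ∈ Finset.range n, (p i - mstar * q i) * x i
        = p i * x i - mstar * (q i * x i) := fun i _ => by ring
    rw [Finset.sum_congr rfl e, Finset.sum_sub_distrib, ← Finset.mul_sum]
  have e1 : ∀ i ∈ Finset.range n,
      (p i - mstar * q i) * (f (x i) - f A - f' A * (x i - A) - f |x i - A|)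
      = (p i - mstar * q i) * f (x i) - f A * (p i - mstar * q i)
        - f' A * ((p i - mstar * q i) * x i)
        + f' A * A * (p i - mstar * q i)
        - (p i - mstar * q i) * f |x i - A| := fun i _ => by ring
  rw [Finset.sum_congr rfl e1, Finset.sum_sub_distrib, Finset.sum_add_distrib,
    Finset.sum_sub_distrib, Finset.sum_sub_distrib,
    ← Finset.mul_sum, ← Finset.mul_sum, ← Finset.mul_sum, hc1, hc2] at key
  have s1 : ∑ i ∈ Finset.range n, (p i - mstar * q i) * f (x i)
      = (∑ i ∈ Finset.range n, p i * f (x i))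
        - mstar * ∑ i ∈ Finset.range n, q i * f (x i) := by
    have e : ∀ i ∈ Finset.range n, (p i - mstar * q i) * f (x i)
        = p i * f (x i) - mstar * (q i * f (x i)) := fun i _ => by ring
    rw [Finset.sum_congr rfl e, Finset.sum_sub_distrib, ← Finset.mul_sum]
  have habs : ∑ i ∈ Finset.range n, (q i - p i) * x i = B - A := by
    have e : ∀ i ∈ Finset.range n, (q i - p i) * x i
        = q i * x i - p i * x i := fun i _ => by ring
    rw [Finset.sum_congr rfl e, Finset.sum_sub_distrib]
  rw [habs]
  nlinarith [key, s1]
end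

section
/- (Comparison of Jensen functionals, superquadratic case, upper bound) Under the same hypotheses as the lower-bound theorem (f superquadratic on [0,∞) with superadditive continuously differentiable derivative, x increasing, p, q as before), with M* = max_i{mᵢ, m̄ᵢ} where mᵢ = (∑_{j≤i}pⱼ)/(∑_{j≤i}qⱼ), m̄ᵢ = (∑_{j≥i}pⱼ)/(∑_{j≥i}qⱼ): Jₙ(f,x,p) - M* Jₙ(f,x,q) ≤ -∑(M* qᵢ - pᵢ) f(|xᵢ - ∑qⱼxⱼ|) - f(|∑(pᵢ - qᵢ)xᵢ|). -/
/-!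
Put `c = ∑ wᵢ yᵢ`. Superadditivity of `f'` makes `ψ t = f t - f |t - c| - f' c * t` antitone
on `[0, c]` and monotone on `[c, ∞)`. Writing `ψ (yᵢ) = ψ (max yᵢ c) + ψ (min yᵢ c) - ψ c` and
applying Steffensen's inequality (summation by parts) to the two monotone halves gives
`ψ c ≤ ∑ wᵢ ψ (yᵢ)` for increasing `yᵢ` and weights whose partial sums lie in `[0, 1]`; since
`f 0 ≤ 0` this is the Jensen–Steffensen inequality `f c + ∑ wᵢ f |yᵢ - c| ≤ ∑ wᵢ f (yᵢ)`.

The comparison is this inequality for the points `xᵢ` together with `∑ pⱼ xⱼ`, inserted at its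
place in the increasing order, with weights `qᵢ - pᵢ / M` and `1 / M`. Their weighted mean is
`∑ qⱼ xⱼ`, and the bounds `∑_{j<i} pⱼ ≤ M ∑_{j<i} qⱼ`, `∑_{j≥i} pⱼ ≤ M ∑_{j≥i} qⱼ` provided by
`M = M*` are exactly what keeps their partial sums in `[0, 1]`. Multiplying by `M` gives the claim.
-/

open Finset

section Steffensen

variable {w g : ℕ → ℝ} {m : ℕ}

theorem sum_mul_eq_sub_sum_partialSum_mul (hw : ∑ i ∈ range m, w i = 1) :
    ∑ i ∈ range m, w i * g i
      = g (m - 1) - ∑ j ∈ range (m - 1), (∑ i ∈ range (j + 1), w i) * (g (j + 1) - g j) := by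
  simpa [hw, mul_comm] using sum_range_by_parts g w m

theorem sum_mul_le_of_partialSum_nonneg (hw : ∑ i ∈ range m, w i = 1)
    (hW : ∀ j ≤ m, 0 ≤ ∑ i ∈ range j, w i) (hg : ∀ j, j + 1 < m → g j ≤ g (j + 1)) :
    ∑ i ∈ range m, w i * g i ≤ g (m - 1) := by
  rw [sum_mul_eq_sub_sum_partialSum_mul hw, sub_le_self_iff]
  refine sum_nonneg fun j hj => mul_nonneg (hW _ ?_) (sub_nonneg.2 (hg j ?_)) <;>
    · rw [mem_range] at hj; omega

theorem le_sum_mul_of_partialSum_le_one (hw : ∑ i ∈ range m, w i = 1)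
    (hW : ∀ j ≤ m, ∑ i ∈ range j, w i ≤ 1) (hg : ∀ j, j + 1 < m → g j ≤ g (j + 1)) :
    g 0 ≤ ∑ i ∈ range m, w i * g i := by
  have htel : g (m - 1) - g 0 = ∑ j ∈ range (m - 1), (g (j + 1) - g j) :=
    (sum_range_sub g _).symm
  rw [sum_mul_eq_sub_sum_partialSum_mul hw, ← sub_nonneg, sub_right_comm, htel,
    ← sum_sub_distrib]
  refine sum_nonneg fun j hj => ?_
  rw [← one_sub_mul]
  refine mul_nonneg (sub_nonneg.2 (hW _ ?_)) (sub_nonneg.2 (hg j ?_)) <;>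
    · rw [mem_range] at hj; omega

end Steffensen

theorem le_sum_mul_of_antitoneOn_of_monotoneOn {ψ : ℝ → ℝ} {c : ℝ} {w y : ℕ → ℝ} {m : ℕ}
    (hanti : AntitoneOn ψ (Set.Icc 0 c)) (hmono : MonotoneOn ψ (Set.Ici c))
    (hw : ∑ i ∈ range m, w i = 1)
    (hW : ∀ j ≤ m, 0 ≤ ∑ i ∈ range j, w i ∧ ∑ i ∈ range j, w i ≤ 1)
    (hy0 : ∀ i < m, 0 ≤ y i) (hy : ∀ j, j + 1 < m → y j ≤ y (j + 1))
    (hyc : y 0 ≤ c) (hcy : c ≤ y (m - 1)) :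
    ψ c ≤ ∑ i ∈ range m, w i * ψ (y i) := by
  have hm : m ≠ 0 := by rintro rfl; simp at hw
  have hc : 0 ≤ c := (hy0 0 (by omega)).trans hyc
  have hsplit : ∀ i, ψ (y i) = ψ (max (y i) c) + ψ (min (y i) c) - ψ c := by
    intro i
    rcases le_total (y i) c with h | h <;> simp [h]
  have hright : ψ c ≤ ∑ i ∈ range m, w i * ψ (max (y i) c) := by
    simpa [max_eq_right hyc] using le_sum_mul_of_partialSum_le_one hw (fun j hj => (hW j hj).2)
      (g := fun i => ψ (max (y i) c)) fun j hj =>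
        hmono (Set.mem_Ici.2 (le_max_right _ _)) (Set.mem_Ici.2 (le_max_right _ _))
          (max_le_max_right c (hy j hj))
  have hleft : ψ c ≤ ∑ i ∈ range m, w i * ψ (min (y i) c) := by
    have hmem : ∀ j < m, min (y j) c ∈ Set.Icc 0 c := fun j hj =>
      ⟨le_min (hy0 j hj) hc, min_le_right _ _⟩
    simpa [min_eq_right hcy, sum_neg_distrib] using
      sum_mul_le_of_partialSum_nonneg hw (fun j hj => (hW j hj).1)
        (g := fun i => -ψ (min (y i) c)) fun j hj =>
          neg_le_neg (hanti (hmem j (by omega)) (hmem (j + 1) hj) (min_le_min_right c (hy j hj)))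
  calc ψ c
      ≤ ∑ i ∈ range m, (w i * ψ (max (y i) c) + w i * ψ (min (y i) c) - w i * ψ c) := by
        rw [sum_sub_distrib, sum_add_distrib, ← sum_mul, hw]; linarith
    _ = ∑ i ∈ range m, w i * ψ (y i) := sum_congr rfl fun i _ => by rw [hsplit]; ring

section TangentGap

variable {f f' : ℝ → ℝ}

theorem monotoneOn_sub_map_abs_sub (hf : ∀ x ∈ Set.Ici (0 : ℝ), HasDerivAt f (f' x) x)
    (hsupadd : ∀ u v : ℝ, 0 ≤ u → 0 ≤ v → f' u + f' v ≤ f' (u + v)) {c : ℝ} (hc : 0 ≤ c) :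
    MonotoneOn (fun t => f t - f |t - c| - f' c * t) (Set.Ici c) := by
  have hderiv : ∀ t ∈ Set.Ici c, HasDerivAt (fun t => f t - f (t - c) - f' c * t)
      (f' t - f' (t - c) - f' c) t := by
    intro t ht
    have h₁ := hf t (hc.trans ht)
    have h₂ := (hf (t - c) (Set.mem_Ici.2 (sub_nonneg.2 ht))).comp_sub_const t c
    exact ((h₁.sub h₂).sub ((hasDerivAt_id t).const_mul (f' c))).congr_deriv (by ring)
  refine (monotoneOn_of_hasDerivWithinAt_nonneg (f' := fun t => f' t - f' (t - c) - f' c)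
    (convex_Ici c) (fun t ht => (hderiv t ht).continuousAt.continuousWithinAt) (fun t ht => ?_)
    (fun t ht => ?_)).congr fun t ht => ?_
  · rw [interior_Ici] at ht ⊢
    exact (hderiv t (Set.Ioi_subset_Ici_self ht)).hasDerivWithinAt
  · rw [interior_Ici] at ht
    have := hsupadd (t - c) c (by linarith [Set.mem_Ioi.1 ht]) hc
    rw [sub_add_cancel] at this; linarith
  · simp [abs_of_nonneg (sub_nonneg.2 (Set.mem_Ici.1 ht))]

theorem antitoneOn_sub_map_abs_sub (hf : ∀ x ∈ Set.Ici (0 : ℝ), HasDerivAt f (f' x) x)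
    (hsupadd : ∀ u v : ℝ, 0 ≤ u → 0 ≤ v → f' u + f' v ≤ f' (u + v)) (c : ℝ) :
    AntitoneOn (fun t => f t - f |t - c| - f' c * t) (Set.Icc 0 c) := by
  have hderiv : ∀ t ∈ Set.Icc 0 c, HasDerivAt (fun t => f t - f (c - t) - f' c * t)
      (f' t + f' (c - t) - f' c) t := by
    intro t ht
    have h₁ := hf t ht.1
    have h₂ := (hf (c - t) (Set.mem_Ici.2 (sub_nonneg.2 ht.2))).comp_const_sub c t
    exact ((h₁.sub h₂).sub ((hasDerivAt_id t).const_mul (f' c))).congr_deriv (by ring)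
  refine (antitoneOn_of_hasDerivWithinAt_nonpos (f' := fun t => f' t + f' (c - t) - f' c)
    (convex_Icc 0 c) (fun t ht => (hderiv t ht).continuousAt.continuousWithinAt) (fun t ht => ?_)
    (fun t ht => ?_)).congr fun t ht => ?_
  · rw [interior_Icc] at ht ⊢
    exact (hderiv t (Set.Ioo_subset_Icc_self ht)).hasDerivWithinAt
  · rw [interior_Icc] at ht
    have := hsupadd t (c - t) ht.1.le (by linarith [ht.2])
    rw [add_sub_cancel] at this; linarith
  · simp [abs_of_nonpos (sub_nonpos.2 ht.2)]

theorem map_sum_mul_add_sum_mul_map_abs_le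
    (hf : ∀ x ∈ Set.Ici (0 : ℝ), HasDerivAt f (f' x) x)
    (hsupadd : ∀ u v : ℝ, 0 ≤ u → 0 ≤ v → f' u + f' v ≤ f' (u + v)) (hf0 : f 0 ≤ 0)
    {w y : ℕ → ℝ} {m : ℕ} (hw : ∑ i ∈ range m, w i = 1)
    (hW : ∀ j ≤ m, 0 ≤ ∑ i ∈ range j, w i ∧ ∑ i ∈ range j, w i ≤ 1)
    (hy0 : ∀ i < m, 0 ≤ y i) (hy : ∀ j, j + 1 < m → y j ≤ y (j + 1)) :
    f (∑ i ∈ range m, w i * y i) + ∑ i ∈ range m, w i * f |y i - ∑ j ∈ range m, w j * y j|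
      ≤ ∑ i ∈ range m, w i * f (y i) := by
  set c := ∑ i ∈ range m, w i * y i
  have hm : m ≠ 0 := by rintro rfl; simp at hw
  have hyc : y 0 ≤ c := le_sum_mul_of_partialSum_le_one hw (fun j hj => (hW j hj).2) hy
  have hcy : c ≤ y (m - 1) := sum_mul_le_of_partialSum_nonneg hw (fun j hj => (hW j hj).1) hy
  have hc : 0 ≤ c := (hy0 0 (by omega)).trans hyc
  have key := le_sum_mul_of_antitoneOn_of_monotoneOn (antitoneOn_sub_map_abs_sub hf hsupadd c)
    (monotoneOn_sub_map_abs_sub hf hsupadd hc) hw hW hy0 hy hyc hcy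
  have hexpand : ∑ i ∈ range m, w i * (f (y i) - f |y i - c| - f' c * y i)
      = ∑ i ∈ range m, w i * f (y i) - ∑ i ∈ range m, w i * f |y i - c| - f' c * c := by
    simp only [mul_sub, sum_sub_distrib, mul_left_comm _ (f' c), ← mul_sum, c]
  rw [hexpand, sub_self, abs_zero] at key
  linarith

end TangentGap

section Insertion

variable {α : Type*}

def insertAt (s : ℕ → α) (k : ℕ) (a : α) (i : ℕ) : α :=
  if i < k then s i else if i = k then a else s (i - 1)

theorem sum_range_insertAt_of_le [AddCommMonoid α] (s : ℕ → α) {k j : ℕ} (a : α)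
    (hj : j ≤ k) :
    ∑ i ∈ range j, insertAt s k a i = ∑ i ∈ range j, s i :=
  sum_congr rfl fun _ hi => if_pos ((mem_range.1 hi).trans_le hj)

theorem sum_range_succ_insertAt [AddCommMonoid α] (s : ℕ → α) {k n : ℕ} (a : α)
    (hk : k ≤ n) :
    ∑ i ∈ range (n + 1), insertAt s k a i = ∑ i ∈ range n, s i + a := by
  induction n, hk using Nat.le_induction with
  | base => rw [sum_range_succ, sum_range_insertAt_of_le s a le_rfl]; simp [insertAt]
  | succ n hkn ih =>
    rw [sum_range_succ, ih, sum_range_succ, add_right_comm]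
    simp [insertAt, show ¬n + 1 < k by omega, show n + 1 ≠ k by omega]

theorem sum_range_succ_insertAt_mul {β R : Type*} [NonUnitalNonAssocSemiring R] (g : β → R)
    (s : ℕ → R) (t : ℕ → β) {k n : ℕ} (a : R) (b : β) (hk : k ≤ n) :
    ∑ i ∈ range (n + 1), insertAt s k a i * g (insertAt t k b i)
      = ∑ i ∈ range n, s i * g (t i) + a * g b := by
  rw [← sum_range_succ_insertAt _ _ hk]
  refine sum_congr rfl fun i _ => ?_
  unfold insertAt
  split_ifs <;> rfl

theorem insertAt_of_forall {P : α → Prop} {s : ℕ → α} {k n : ℕ} {a : α} (hk : k ≤ n)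
    (hs : ∀ i < n, P (s i)) (ha : P a) : ∀ i < n + 1, P (insertAt s k a i) := by
  intro i hi
  unfold insertAt
  split_ifs
  · exact hs i (by omega)
  · exact ha
  · exact hs (i - 1) (by omega)

theorem insertAt_le_insertAt_succ [Preorder α] {s : ℕ → α} {k n : ℕ} {a : α} (hk : k ≤ n)
    (hs : ∀ j, j + 1 < n → s j ≤ s (j + 1)) (hlo : ∀ i < k, s i ≤ a)
    (hhi : ∀ i, k ≤ i → i < n → a ≤ s i) :
    ∀ j, j + 1 < n + 1 → insertAt s k a j ≤ insertAt s k a (j + 1) := by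
  intro j hj
  unfold insertAt
  split_ifs <;> first
    | omega
    | exact hs j (by omega)
    | exact hlo j (by omega)
    | exact hhi _ (by omega) (by omega)
    | convert hs (j - 1) (by omega) using 2; omega

theorem exists_insertion_index [LinearOrder α] {s : ℕ → α} {n : ℕ}
    (hs : ∀ i j, i ≤ j → j < n → s i ≤ s j) (a : α) :
    ∃ k ≤ n, (∀ i < k, s i ≤ a) ∧ ∀ i, k ≤ i → i < n → a ≤ s i := by
  classical
  have hex : ∃ k, ∀ i, k ≤ i → i < n → a ≤ s i := ⟨n, fun i h h' => absurd h' (by omega)⟩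
  refine ⟨Nat.find hex, Nat.find_min' hex fun i h h' => absurd h' (by omega), fun i hi => ?_,
    Nat.find_spec hex⟩
  obtain ⟨i', hii', hi'n, hlt⟩ : ∃ i', i ≤ i' ∧ i' < n ∧ s i' < a := by
    simpa using Nat.find_min hex hi
  exact (hs i i' hii' hi'n).trans hlt.le

end Insertion

theorem sub_inv_mul_mem_Icc {M P Q : ℝ} (hM : 0 < M) (hP : 0 ≤ P ∧ P ≤ 1) (hfront : P ≤ M * Q)
    (hback : 1 - P ≤ M * (1 - Q)) :
    Q - M⁻¹ * P ∈ Set.Icc 0 1 ∧ Q - M⁻¹ * P + M⁻¹ ∈ Set.Icc 0 1 := by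
  have h₁ : M⁻¹ * P ≤ Q := (inv_mul_le_iff₀ hM).2 hfront
  have h₂ : M⁻¹ * (1 - P) ≤ 1 - Q := (inv_mul_le_iff₀ hM).2 hback
  have h₃ : 0 ≤ M⁻¹ * P := mul_nonneg (inv_nonneg.2 hM.le) hP.1
  have h₄ : 0 ≤ M⁻¹ * (1 - P) := mul_nonneg (inv_nonneg.2 hM.le) (sub_nonneg.2 hP.2)
  refine ⟨⟨?_, ?_⟩, ?_, ?_⟩ <;> nlinarith

section Comparison

variable {n k : ℕ} {p q : ℕ → ℝ} {M : ℝ}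

theorem sum_range_sub_inv_mul (m : ℕ) (g : ℕ → ℝ) :
    ∑ i ∈ range m, (q i - M⁻¹ * p i) * g i
      = ∑ i ∈ range m, q i * g i - M⁻¹ * ∑ i ∈ range m, p i * g i := by
  simp only [sub_mul, sum_sub_distrib, mul_assoc, ← mul_sum]

theorem partialSum_insertAt_mem_Icc (hM : 0 < M) (hkn : k ≤ n)
    (hpJS : ∀ j ≤ n, 0 ≤ ∑ i ∈ range j, p i ∧ ∑ i ∈ range j, p i ≤ 1)
    (hfront : ∀ j ≤ n, ∑ i ∈ range j, p i ≤ M * ∑ i ∈ range j, q i)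
    (hback : ∀ j ≤ n, 1 - ∑ i ∈ range j, p i ≤ M * (1 - ∑ i ∈ range j, q i)) :
    ∀ j ≤ n + 1, 0 ≤ ∑ i ∈ range j, insertAt (fun i => q i - M⁻¹ * p i) k M⁻¹ i ∧
      ∑ i ∈ range j, insertAt (fun i => q i - M⁻¹ * p i) k M⁻¹ i ≤ 1 := by
  have hV : ∀ j, ∑ i ∈ range j, (q i - M⁻¹ * p i)
      = ∑ i ∈ range j, q i - M⁻¹ * ∑ i ∈ range j, p i := by
    simp only [sum_sub_distrib, ← mul_sum, implies_true]
  intro j hj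
  rcases le_or_gt j k with hjk | hkj
  · rw [sum_range_insertAt_of_le _ M⁻¹ hjk, hV]
    have hjn := hjk.trans hkn
    exact (sub_inv_mul_mem_Icc hM (hpJS j hjn) (hfront j hjn) (hback j hjn)).1
  · obtain ⟨j, rfl⟩ : ∃ j', j = j' + 1 := ⟨j - 1, by omega⟩
    rw [sum_range_succ_insertAt _ M⁻¹ (by omega), hV]
    have hjn : j ≤ n := by omega
    exact (sub_inv_mul_mem_Icc hM (hpJS j hjn) (hfront j hjn) (hback j hjn)).2

theorem map_sum_add_le_of_insertAt {f f' : ℝ → ℝ}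
    (hf : ∀ x ∈ Set.Ici (0 : ℝ), HasDerivAt f (f' x) x)
    (hsupadd : ∀ u v : ℝ, 0 ≤ u → 0 ≤ v → f' u + f' v ≤ f' (u + v)) (hf0 : f 0 ≤ 0)
    {x : ℕ → ℝ} (hM : 0 < M) (hx0 : ∀ i < n, 0 ≤ x i)
    (hmono : ∀ i j, i ≤ j → j < n → x i ≤ x j)
    (hp1 : ∑ i ∈ range n, p i = 1) (hq1 : ∑ i ∈ range n, q i = 1)
    (hpJS : ∀ j ≤ n, 0 ≤ ∑ i ∈ range j, p i ∧ ∑ i ∈ range j, p i ≤ 1)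
    (hfront : ∀ j ≤ n, ∑ i ∈ range j, p i ≤ M * ∑ i ∈ range j, q i)
    (hback : ∀ j ≤ n, 1 - ∑ i ∈ range j, p i ≤ M * (1 - ∑ i ∈ range j, q i)) :
    f (∑ i ∈ range n, q i * x i)
        + ∑ i ∈ range n, (q i - M⁻¹ * p i) * f |x i - ∑ j ∈ range n, q j * x j|
        + M⁻¹ * f |∑ i ∈ range n, p i * x i - ∑ i ∈ range n, q i * x i|
      ≤ ∑ i ∈ range n, (q i - M⁻¹ * p i) * f (x i) + M⁻¹ * f (∑ i ∈ range n, p i * x i) := by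
  set xp := ∑ i ∈ range n, p i * x i
  set xq := ∑ i ∈ range n, q i * x i
  set v : ℕ → ℝ := fun i => q i - M⁻¹ * p i
  obtain ⟨k, hkn, hlo, hhi⟩ := exists_insertion_index hmono xp
  have hsum : ∀ g : ℝ → ℝ, ∑ i ∈ range (n + 1), insertAt v k M⁻¹ i * g (insertAt x k xp i)
      = ∑ i ∈ range n, v i * g (x i) + M⁻¹ * g xp := fun g =>
    sum_range_succ_insertAt_mul g v x M⁻¹ xp hkn
  have hw : ∑ i ∈ range (n + 1), insertAt v k M⁻¹ i = 1 := by
    rw [sum_range_succ_insertAt v M⁻¹ hkn]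
    simp only [v, sum_sub_distrib, ← mul_sum, hp1, hq1]
    ring
  have hxstep : ∀ j, j + 1 < n → x j ≤ x (j + 1) := fun j hj => hmono j (j + 1) (by omega) hj
  have hxp : 0 ≤ xp := by
    have hn : n ≠ 0 := by rintro rfl; simp at hp1
    exact (hx0 0 (by omega)).trans
      (le_sum_mul_of_partialSum_le_one hp1 (fun j hj => (hpJS j hj).2) hxstep)
  have key := map_sum_mul_add_sum_mul_map_abs_le hf hsupadd hf0 hw
    (partialSum_insertAt_mem_Icc hM hkn hpJS hfront hback)
    (insertAt_of_forall (P := (0 ≤ ·)) hkn hx0 hxp)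
    (insertAt_le_insertAt_succ hkn hxstep hlo hhi)
  have hmean : ∑ i ∈ range (n + 1), insertAt v k M⁻¹ i * insertAt x k xp i = xq := by
    have h := hsum id
    simp only [id, v, sum_range_sub_inv_mul] at h
    rw [h]
    change xq - M⁻¹ * xp + M⁻¹ * xp = xq
    ring
  rw [hmean, hsum f, hsum fun t => f |t - xq|] at key
  linarith

theorem jensen_sub_mul_jensen_le {f f' : ℝ → ℝ}
    (hf : ∀ x ∈ Set.Ici (0 : ℝ), HasDerivAt f (f' x) x)
    (hsupadd : ∀ u v : ℝ, 0 ≤ u → 0 ≤ v → f' u + f' v ≤ f' (u + v)) (hf0 : f 0 ≤ 0)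
    {x : ℕ → ℝ} (hx0 : ∀ i < n, 0 ≤ x i) (hmono : ∀ i j, i ≤ j → j < n → x i ≤ x j)
    (hp1 : ∑ i ∈ range n, p i = 1) (hq1 : ∑ i ∈ range n, q i = 1)
    (hpJS : ∀ j ≤ n, 0 ≤ ∑ i ∈ range j, p i ∧ ∑ i ∈ range j, p i ≤ 1)
    (hfront : ∀ j ≤ n, ∑ i ∈ range j, p i ≤ M * ∑ i ∈ range j, q i)
    (hback : ∀ j ≤ n, 1 - ∑ i ∈ range j, p i ≤ M * (1 - ∑ i ∈ range j, q i)) :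
    ((∑ i ∈ range n, p i * f (x i)) - f (∑ i ∈ range n, p i * x i)) -
        M * ((∑ i ∈ range n, q i * f (x i)) - f (∑ i ∈ range n, q i * x i)) ≤
      -(∑ i ∈ range n, (M * q i - p i) * f |x i - ∑ j ∈ range n, q j * x j|) -
        f |∑ i ∈ range n, (p i - q i) * x i| := by
  have hM : 0 < M := by have := hfront n le_rfl; rw [hp1, hq1] at this; linarith
  have key := map_sum_add_le_of_insertAt hf hsupadd hf0 hM hx0 hmono hp1 hq1 hpJS hfront hback
  simp only [sum_range_sub_inv_mul] at key
  simp only [sub_mul, sum_sub_distrib, mul_assoc, ← mul_sum]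
  have hMinv : M * M⁻¹ = 1 := mul_inv_cancel₀ hM.ne'
  linear_combination M * key - (∑ i ∈ range n, p i * f (x i) - f (∑ i ∈ range n, p i * x i) -
    ∑ i ∈ range n, p i * f |x i - ∑ j ∈ range n, q j * x j| +
    f |∑ i ∈ range n, p i * x i - ∑ i ∈ range n, q i * x i|) * hMinv

theorem partialSum_bounds_of_mem_upperBounds
    (hp1 : ∑ i ∈ range n, p i = 1) (hq1 : ∑ i ∈ range n, q i = 1)
    (hqJS : ∀ j, 1 ≤ j → j < n → 0 < ∑ i ∈ range j, q i ∧ ∑ i ∈ range j, q i < 1)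
    (hM : M ∈ upperBounds {r : ℝ | ∃ i, 1 ≤ i ∧ i ≤ n ∧
      (r = (∑ j ∈ range i, p j) / (∑ j ∈ range i, q j) ∨
        r = (∑ j ∈ Ico (i - 1) n, p j) / (∑ j ∈ Ico (i - 1) n, q j))}) :
    (∀ j ≤ n, ∑ i ∈ range j, p i ≤ M * ∑ i ∈ range j, q i) ∧
      ∀ j ≤ n, 1 - ∑ i ∈ range j, p i ≤ M * (1 - ∑ i ∈ range j, q i) := by
  have hIco : ∀ r : ℕ → ℝ, ∑ i ∈ range n, r i = 1 → ∀ j ≤ n,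
      ∑ i ∈ Ico j n, r i = 1 - ∑ i ∈ range j, r i := fun r hr j hj => by
    rw [← hr, ← sum_range_add_sum_Ico r hj]
    ring
  refine ⟨fun j hj => ?_, fun j hj => ?_⟩
  · rcases Nat.eq_zero_or_pos j with rfl | hj0
    · simp
    have hQ : 0 < ∑ i ∈ range j, q i := by
      rcases hj.lt_or_eq with hjn | rfl
      · exact (hqJS j hj0 hjn).1
      · rw [hq1]; exact one_pos
    rw [← div_le_iff₀ hQ]
    exact hM ⟨j, hj0, hj, Or.inl rfl⟩
  · rcases hj.lt_or_eq with hjn | rfl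
    swap
    · simp [hp1, hq1]
    have hQ : 0 < 1 - ∑ i ∈ range j, q i := by
      rcases Nat.eq_zero_or_pos j with rfl | hj0
      · simp
      · linarith [(hqJS j hj0 hjn).2]
    have hratio := hM ⟨j + 1, by omega, hjn, Or.inr rfl⟩
    rw [Nat.add_sub_cancel, hIco p hp1 j hj, hIco q hq1 j hj] at hratio
    rwa [← div_le_iff₀ hQ]

end Comparison

theorem stmt18_general (f f' C : ℝ → ℝ)
    (hf : ∀ x ∈ Set.Ici (0 : ℝ), HasDerivAt f (f' x) x)
    (hsupadd : ∀ u v : ℝ, 0 ≤ u → 0 ≤ v → f' u + f' v ≤ f' (u + v))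
    (hsq : ∀ x, 0 ≤ x → ∀ y, 0 ≤ y → f x + C x * (y - x) + f |y - x| ≤ f y)
    (n : ℕ) (p q x : ℕ → ℝ)
    (hx0 : ∀ i < n, 0 ≤ x i)
    (hmono : ∀ i j, i ≤ j → j < n → x i ≤ x j)
    (hp1 : ∑ i ∈ Finset.range n, p i = 1)
    (hq1 : ∑ i ∈ Finset.range n, q i = 1)
    (hpJS : ∀ j ≤ n, 0 ≤ ∑ i ∈ Finset.range j, p i ∧ ∑ i ∈ Finset.range j, p i ≤ 1)
    (hqJS : ∀ j, 1 ≤ j → j < n →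
      0 < ∑ i ∈ Finset.range j, q i ∧ ∑ i ∈ Finset.range j, q i < 1)
    (Mstar : ℝ)
    (hM : IsGreatest {r : ℝ | ∃ i, 1 ≤ i ∧ i ≤ n ∧
      (r = (∑ j ∈ Finset.range i, p j) / (∑ j ∈ Finset.range i, q j) ∨
        r = (∑ j ∈ Finset.Ico (i - 1) n, p j) / (∑ j ∈ Finset.Ico (i - 1) n, q j))} Mstar) :
    ((∑ i ∈ Finset.range n, p i * f (x i)) - f (∑ i ∈ Finset.range n, p i * x i)) -
        Mstar * ((∑ i ∈ Finset.range n, q i * f (x i)) -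
          f (∑ i ∈ Finset.range n, q i * x i)) ≤
      -(∑ i ∈ Finset.range n, (Mstar * q i - p i) *
          f |x i - ∑ j ∈ Finset.range n, q j * x j|) -
        f |∑ i ∈ Finset.range n, (p i - q i) * x i| := by
  have hf0 : f 0 ≤ 0 := by simpa using hsq 0 le_rfl 0 le_rfl
  obtain ⟨hfront, hback⟩ := partialSum_bounds_of_mem_upperBounds hp1 hq1 hqJS hM.2
  exact jensen_sub_mul_jensen_le hf hsupadd hf0 hx0 hmono hp1 hq1 hpJS hfront hback

/-- upper bound comparison of Jensen functionals for
superquadratic functions with superadditive derivative. -/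
theorem stmt18 (f f' C : ℝ → ℝ)
    (hf : ∀ x ∈ Set.Ici (0 : ℝ), HasDerivAt f (f' x) x)
    (hf'c : ContinuousOn f' (Set.Ici (0 : ℝ)))
    (hsupadd : ∀ u v : ℝ, 0 ≤ u → 0 ≤ v → f' u + f' v ≤ f' (u + v))
    (hsq : ∀ x, 0 ≤ x → ∀ y, 0 ≤ y → f x + C x * (y - x) + f |y - x| ≤ f y)
    (n : ℕ) (hn : 0 < n) (p q x : ℕ → ℝ)
    (hx0 : ∀ i < n, 0 ≤ x i)
    (hmono : ∀ i j, i ≤ j → j < n → x i ≤ x j)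
    (hp1 : ∑ i ∈ Finset.range n, p i = 1)
    (hq1 : ∑ i ∈ Finset.range n, q i = 1)
    (hpJS : ∀ j ≤ n, 0 ≤ ∑ i ∈ Finset.range j, p i ∧ ∑ i ∈ Finset.range j, p i ≤ 1)
    (hqJS : ∀ j, 1 ≤ j → j < n →
      0 < ∑ i ∈ Finset.range j, q i ∧ ∑ i ∈ Finset.range j, q i < 1)
    (hpq : ∃ i < n, p i ≠ q i)
    (Mstar : ℝ)
    (hM : IsGreatest {r : ℝ | ∃ i, 1 ≤ i ∧ i ≤ n ∧
      (r = (∑ j ∈ Finset.range i, p j) / (∑ j ∈ Finset.range i, q j) ∨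
        r = (∑ j ∈ Finset.Ico (i - 1) n, p j) / (∑ j ∈ Finset.Ico (i - 1) n, q j))} Mstar) :
    ((∑ i ∈ Finset.range n, p i * f (x i)) - f (∑ i ∈ Finset.range n, p i * x i)) -
        Mstar * ((∑ i ∈ Finset.range n, q i * f (x i)) -
          f (∑ i ∈ Finset.range n, q i * x i)) ≤
      -(∑ i ∈ Finset.range n, (Mstar * q i - p i) *
          f |x i - ∑ j ∈ Finset.range n, q j * x j|) -
        f |∑ i ∈ Finset.range n, (p i - q i) * x i| :=
  stmt18_general f f' C hf hsupadd hsq n p q x hx0 hmono hp1 hq1 hpJS hqJS Mstar hM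
end
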